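/- arXiv:2508.05981 — 6 statements merged into one kernel-verified Lean document; each statement's English description precedes it below -/
import Mathlib

section
/- Every finite 2-group of order at least 16 that has a cyclic subgroup of index 2 is isomorphic to one of: the cyclic group Z_{2^ℓ}, the direct product Z_{2^ℓ} × Z_2, the dihedral group D_{2^{ℓ+1}}, the semidihedral group SD_{2^{ℓ+1}}, the modular group Z_{2^ℓ} ⋊ Z_2 with action a ↦ a^{2^{ℓ-1}+1}, or the generalized quaternion group Q_{2^{ℓ+1}}. -/
set_option linter.unusedSectionVars false

namespace Stmt0Aux

variable {G : Type*} [Group G]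

/-- Exponentiation of `a` by elements of `ZMod n`. -/
def fp (a : G) (n : ℕ) (i : ZMod n) : G := a ^ i.val

variable {a : G} {n : ℕ} [NeZero n] (ha : orderOf a = n)
include ha

lemma fp_natCast (m : ℕ) : fp a n (m : ZMod n) = a ^ m := by
  subst ha
  unfold fp
  rw [ZMod.val_natCast, pow_mod_orderOf]

lemma fp_add (i j : ZMod n) : fp a n (i + j) = fp a n i * fp a n j := by
  subst ha
  unfold fp
  rw [ZMod.val_add, pow_mod_orderOf, pow_add]

lemma fp_zero : fp a n 0 = 1 := by
  simpa using fp_natCast (a := a) ha 0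

lemma fp_one : fp a n 1 = a := by
  simpa using fp_natCast (a := a) ha 1

lemma fp_neg (i : ZMod n) : fp a n (-i) = (fp a n i)⁻¹ := by
  have h := fp_add ha (-i) i
  rw [neg_add_cancel, fp_zero ha] at h
  exact eq_inv_of_mul_eq_one_left h.symm

lemma fp_inj {i j : ZMod n} (h : fp a n i = fp a n j) : i = j := by
  unfold fp at h
  rw [pow_eq_pow_iff_modEq, ha] at h
  have := (Nat.ModEq.eq_of_lt_of_lt h (ZMod.val_lt i) (ZMod.val_lt j))
  exact ZMod.val_injective n this

lemma fp_pow (i : ZMod n) (m : ℕ) : (fp a n i) ^ m = fp a n (i * m) := by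
  have : fp a n i = a ^ i.val := rfl
  rw [this, ← pow_mul, ← fp_natCast (a := a) ha (i.val * m)]
  congr 1
  push_cast [ZMod.natCast_val, ZMod.cast_id]
  ring

lemma fp_comm (i j : ZMod n) : fp a n i * fp a n j = fp a n j * fp a n i := by
  rw [← fp_add ha, ← fp_add ha, add_comm]

lemma fp_comm' (i : ZMod n) : Commute (fp a n i) a := by
  have h := fp_comm ha i 1
  rwa [fp_one ha] at h

end Stmt0Aux

namespace Stmt0Aux

variable {G : Type*} [Group G]

lemma fp_intCast {a : G} {n : ℕ} [NeZero n] (ha : orderOf a = n) (z : ℤ) :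
    fp a n ((z : ZMod n)) = a ^ z := by
  have h1 : (((z : ZMod n).val : ℤ) : ZMod n) = (z : ZMod n) := by
    push_cast [ZMod.natCast_val, ZMod.cast_id]
    rfl
  rw [ZMod.intCast_eq_intCast_iff'] at h1
  have : a ^ (((z : ZMod n).val : ℤ)) = a ^ z := by
    rw [zpow_eq_zpow_iff_modEq, ha]
    exact h1
  rw [← this, zpow_natCast]
  rfl

lemma conj_fp {a b : G} {n : ℕ} [NeZero n] (ha : orderOf a = n) {k : ZMod n}
    (hb : b * a * b⁻¹ = fp a n k) (i : ZMod n) :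
    b * fp a n i * b⁻¹ = fp a n (k * i) := by
  have h1 : b * fp a n i * b⁻¹ = (b * a * b⁻¹) ^ i.val := by
    rw [conj_pow]
    rfl
  rw [h1, hb, fp_pow ha]
  congr 1
  rw [ZMod.natCast_val, ZMod.cast_id]

/-- The dihedral case. -/
lemma dihedral_case {n : ℕ} (hn : 1 < n) [Finite G] (hcard : Nat.card G = 2 * n)
    {a b : G} (ha : orderOf a = n) (hb : b * a * b⁻¹ = a⁻¹) (hb2 : b * b = 1)
    (hgen : Subgroup.closure {a, b} = ⊤) : Nonempty (G ≃* DihedralGroup n) := by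
  have : NeZero n := ⟨by omega⟩
  have hconj : ∀ i : ZMod n, b * fp a n i * b⁻¹ = fp a n (-i) := by
    intro i
    have hb' : b * a * b⁻¹ = fp a n (-1) := by rw [fp_neg ha, fp_one ha, hb]
    simpa using conj_fp ha hb' i
  have hswap : ∀ i : ZMod n, fp a n i * b = b * fp a n (-i) := by
    intro i
    have := hconj (-i)
    rw [neg_neg] at this
    rw [← this]
    group
  let φ : DihedralGroup n →* G := MonoidHom.mk'
    (fun x => match x with
      | DihedralGroup.r i => fp a n i
      | DihedralGroup.sr i => b * fp a n i)
    (by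
      rintro (i | i) (j | j)
      · show fp a n (i + j) = fp a n i * fp a n j
        exact fp_add ha i j
      · show b * fp a n (j - i) = fp a n i * (b * fp a n j)
        rw [← mul_assoc, hswap, mul_assoc, ← fp_add ha, sub_eq_neg_add]
      · show b * fp a n (i + j) = b * fp a n i * fp a n j
        rw [mul_assoc, fp_add ha]
      · show fp a n (j - i) = b * fp a n i * (b * fp a n j)
        rw [mul_assoc, ← mul_assoc (fp a n i), hswap, ← mul_assoc, ← mul_assoc, hb2,
          one_mul, ← fp_add ha, sub_eq_neg_add])
  have hsurj : Function.Surjective φ := by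
    rw [← MonoidHom.range_eq_top]
    rw [← top_le_iff, ← hgen, Subgroup.closure_le]
    rintro x hx
    simp only [Set.mem_insert_iff, Set.mem_singleton_iff] at hx
    rcases hx with h | h
    · refine ⟨DihedralGroup.r 1, ?_⟩
      rw [h]
      exact fp_one ha
    · refine ⟨DihedralGroup.sr 0, ?_⟩
      rw [h]
      show b * fp a n 0 = b
      rw [fp_zero ha, mul_one]
  have : Fintype G := Fintype.ofFinite G
  have hbij : Function.Bijective φ := by
    rw [Fintype.bijective_iff_surjective_and_card]
    refine ⟨hsurj, ?_⟩
    rw [DihedralGroup.card, ← Nat.card_eq_fintype_card, hcard]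
  exact ⟨(MulEquiv.ofBijective φ hbij).symm⟩

/-- The generalized quaternion case. -/
lemma quat_case {n : ℕ} (hn : 1 ≤ n) [Finite G] (hcard : Nat.card G = 4 * n)
    {a b : G} (ha : orderOf a = 2 * n) (hb : b * a * b⁻¹ = a⁻¹) (hb2 : b * b = a ^ n)
    (hgen : Subgroup.closure {a, b} = ⊤) : Nonempty (G ≃* QuaternionGroup n) := by
  have : NeZero (2 * n) := ⟨by omega⟩
  have hconj : ∀ i : ZMod (2 * n), b * fp a (2 * n) i * b⁻¹ = fp a (2 * n) (-i) := by
    intro i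
    have hb' : b * a * b⁻¹ = fp a (2 * n) (-1) := by rw [fp_neg ha, fp_one ha, hb]
    simpa using conj_fp ha hb' i
  have hswap : ∀ i : ZMod (2 * n), fp a (2 * n) i * b = b * fp a (2 * n) (-i) := by
    intro i
    have := hconj (-i)
    rw [neg_neg] at this
    rw [← this]
    group
  have hb2' : b * b = fp a (2 * n) ((n : ℕ) : ZMod (2 * n)) := by
    rw [fp_natCast ha, hb2]
  let φ : QuaternionGroup n →* G := MonoidHom.mk'
    (fun x => match x with
      | QuaternionGroup.a i => fp a (2 * n) i
      | QuaternionGroup.xa i => b * fp a (2 * n) i)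
    (by
      rintro (i | i) (j | j)
      · show fp a (2 * n) (i + j) = fp a (2 * n) i * fp a (2 * n) j
        exact fp_add ha i j
      · show b * fp a (2 * n) (j - i) = fp a (2 * n) i * (b * fp a (2 * n) j)
        rw [← mul_assoc, hswap, mul_assoc, ← fp_add ha, sub_eq_neg_add]
      · show b * fp a (2 * n) (i + j) = b * fp a (2 * n) i * fp a (2 * n) j
        rw [mul_assoc, fp_add ha]
      · show fp a (2 * n) ((n : ℕ) + j - i) = b * fp a (2 * n) i * (b * fp a (2 * n) j)
        rw [mul_assoc, ← mul_assoc (fp a (2 * n) i), hswap, ← mul_assoc, ← mul_assoc, hb2',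
          ← fp_add ha, ← fp_add ha]
        congr 1
        ring)
  have hsurj : Function.Surjective φ := by
    rw [← MonoidHom.range_eq_top]
    rw [← top_le_iff, ← hgen, Subgroup.closure_le]
    rintro x hx
    simp only [Set.mem_insert_iff, Set.mem_singleton_iff] at hx
    rcases hx with h | h
    · refine ⟨QuaternionGroup.a 1, ?_⟩
      rw [h]
      exact fp_one ha
    · refine ⟨QuaternionGroup.xa 0, ?_⟩
      rw [h]
      show b * fp a (2 * n) 0 = b
      rw [fp_zero ha, mul_one]
  have : Fintype G := Fintype.ofFinite G
  have : NeZero n := ⟨by omega⟩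
  have hbij : Function.Bijective φ := by
    rw [Fintype.bijective_iff_surjective_and_card]
    refine ⟨hsurj, ?_⟩
    rw [QuaternionGroup.card, ← Nat.card_eq_fintype_card, hcard]
  exact ⟨(MulEquiv.ofBijective φ hbij).symm⟩

end Stmt0Aux

namespace Stmt0Aux

variable {G : Type*} [Group G]

/-- The abelian non-cyclic case. -/
lemma prod_case {N : ℕ} (hN : 1 < N) [Finite G] (hcard : Nat.card G = N * 2)
    {a c : G} (ha : orderOf a = N) (hc : orderOf c = 2) (hcomm : a * c = c * a)
    (hgen : Subgroup.closure {a, c} = ⊤) :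
    Nonempty (G ≃* (Multiplicative (ZMod N) × Multiplicative (ZMod 2))) := by
  have : NeZero N := ⟨by omega⟩
  have hcomm' : ∀ i : ZMod N, ∀ j : ZMod 2, fp a N i * fp c 2 j = fp c 2 j * fp a N i := by
    intro i j
    exact (Commute.pow_pow hcomm.symm _ _).symm
  let φ : (Multiplicative (ZMod N) × Multiplicative (ZMod 2)) →* G := MonoidHom.mk'
    (fun p => fp a N p.1.toAdd * fp c 2 p.2.toAdd)
    (by
      rintro ⟨x1, x2⟩ ⟨y1, y2⟩
      show fp a N (x1.toAdd + y1.toAdd) * fp c 2 (x2.toAdd + y2.toAdd) = _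
      rw [fp_add ha, fp_add hc]
      rw [mul_assoc, ← mul_assoc (fp a N y1.toAdd), hcomm']
      group)
  have hsurj : Function.Surjective φ := by
    rw [← MonoidHom.range_eq_top]
    rw [← top_le_iff, ← hgen, Subgroup.closure_le]
    rintro x hx
    simp only [Set.mem_insert_iff, Set.mem_singleton_iff] at hx
    rcases hx with h | h
    · refine ⟨(Multiplicative.ofAdd 1, 1), ?_⟩
      rw [h]
      show fp a N 1 * fp c 2 0 = a
      rw [fp_one ha, fp_zero hc, mul_one]
    · refine ⟨(1, Multiplicative.ofAdd 1), ?_⟩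
      rw [h]
      show fp a N 0 * fp c 2 1 = c
      rw [fp_one hc, fp_zero ha, one_mul]
  have : Fintype G := Fintype.ofFinite G
  have hbij : Function.Bijective φ := by
    rw [Fintype.bijective_iff_surjective_and_card]
    refine ⟨hsurj, ?_⟩
    rw [← Nat.card_eq_fintype_card, ← Nat.card_eq_fintype_card, hcard]
    simp [Nat.card_prod]
  exact ⟨(MulEquiv.ofBijective φ hbij).symm⟩

/-- Square roots of 1 mod `2^ℓ`. -/
lemma sqrt_one {ℓ : ℕ} (hℓ : 3 ≤ ℓ) {k : ZMod (2 ^ ℓ)} (hodd : ¬ 2 ∣ k.val)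
    (hsq : k * k = 1) :
    k = 1 ∨ k = -1 ∨ k = ((2 ^ (ℓ - 1) - 1 : ℕ) : ZMod (2 ^ ℓ)) ∨
      k = ((2 ^ (ℓ - 1) + 1 : ℕ) : ZMod (2 ^ ℓ)) := by
  obtain ⟨e, rfl⟩ : ∃ e, ℓ = e + 3 := ⟨ℓ - 3, by omega⟩
  have : NeZero (2 ^ (e + 3)) := ⟨by positivity⟩
  have he1 : e + 3 - 1 = e + 2 := by omega
  have hA2 : (2:ℕ) ^ (e + 2) = 2 * 2 ^ (e + 1) := by ring
  have hA3 : (2:ℕ) ^ (e + 3) = 4 * 2 ^ (e + 1) := by ring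
  have hKlt : k.val < 2 ^ (e + 3) := ZMod.val_lt k
  obtain ⟨j, hj⟩ : ∃ j, k.val = 2 * j + 1 := ⟨k.val / 2, by omega⟩
  have hk : k = ((2 * j + 1 : ℕ) : ZMod (2 ^ (e + 3))) := by
    rw [← hj, ZMod.natCast_val, ZMod.cast_id]
  -- divisibility
  have hdvd : 2 ^ (e + 3) ∣ (2 * j + 1) * (2 * j + 1) - 1 := by
    have h1 : (((2 * j + 1) * (2 * j + 1) : ℕ) : ZMod (2 ^ (e + 3))) =
        ((1 : ℕ) : ZMod (2 ^ (e + 3))) := by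
      rw [Nat.cast_mul, ← hk, hsq, Nat.cast_one]
    rw [ZMod.natCast_eq_natCast_iff] at h1
    exact (Nat.modEq_iff_dvd' (by nlinarith)).mp h1.symm
  have hjj : (2 * j + 1) * (2 * j + 1) - 1 = 4 * (j * (j + 1)) := by
    have : (2 * j + 1) * (2 * j + 1) = 4 * (j * (j + 1)) + 1 := by ring
    omega
  rw [hjj] at hdvd
  have hdvd2 : 2 ^ (e + 1) ∣ j * (j + 1) := by
    rw [hA3] at hdvd
    exact (Nat.mul_dvd_mul_iff_left (by norm_num : 0 < 4)).mp hdvd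
  rcases Nat.even_or_odd j with hje | hjo
  · -- j even, j+1 odd, 2^(e+1) ∣ j
    have hcop : Nat.Coprime (2 ^ (e + 1)) (j + 1) := by
      apply Nat.Coprime.pow_left
      rw [Nat.Prime.coprime_iff_not_dvd Nat.prime_two]
      rcases hje with ⟨t, rfl⟩
      omega
    obtain ⟨q, hq⟩ := hcop.dvd_of_dvd_mul_right hdvd2
    have hqlt : q < 2 := by
      by_contra hq2
      push_neg at hq2
      have h2 : 2 ^ (e + 1) * 2 ≤ 2 ^ (e + 1) * q := Nat.mul_le_mul_left _ hq2
      omega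
    interval_cases q
    · left
      have hj0 : j = 0 := by omega
      rw [hk, hj0]
      norm_num
    · right; right; right
      rw [hk, he1]
      congr 1
      omega
  · -- j odd, 2^(e+1) ∣ j + 1
    have hcop : Nat.Coprime (2 ^ (e + 1)) j := by
      apply Nat.Coprime.pow_left
      rw [Nat.Prime.coprime_iff_not_dvd Nat.prime_two]
      rcases hjo with ⟨t, rfl⟩
      omega
    obtain ⟨q, hq⟩ := hcop.dvd_of_dvd_mul_left hdvd2
    have hqlt : q ≤ 2 := by
      by_contra hq2
      push_neg at hq2
      have h2 : 2 ^ (e + 1) * 3 ≤ 2 ^ (e + 1) * q := Nat.mul_le_mul_left _ hq2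
      omega
    interval_cases q
    · omega
    · right; right; left
      rw [hk, he1]
      congr 1
      omega
    · right; left
      rw [hk]
      have hKv : 2 * j + 1 = 2 ^ (e + 3) - 1 := by omega
      rw [hKv]
      have h0 : ((2 ^ (e + 3) - 1 : ℕ) : ZMod (2 ^ (e + 3))) + 1 = 0 := by
        rw [show ((1 : ZMod (2 ^ (e+3)))) = ((1 : ℕ) : ZMod (2 ^ (e+3))) by norm_cast,
          ← Nat.cast_add, show 2 ^ (e + 3) - 1 + 1 = 2 ^ (e + 3) by omega,
          ZMod.natCast_self]
      linear_combination h0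

end Stmt0Aux

open Stmt0Aux in
/-- Every finite 2-group of order `2^(ℓ+1) ≥ 16` having a cyclic
subgroup of index 2 is isomorphic to one of: the cyclic group, `Z_{2^ℓ} × Z_2`,
the dihedral group, the semidihedral group, the modular group, or the generalized
quaternion group of that order. -/
theorem stmt_0 (ℓ : ℕ) (hℓ : 3 ≤ ℓ) (G : Type) [Group G] [Finite G]
    (hcard : Nat.card G = 2 ^ (ℓ + 1))
    (H : Subgroup G) (hidx : H.index = 2) (hcyc : IsCyclic ↥H) :
    Nonempty (G ≃* Multiplicative (ZMod (2 ^ (ℓ + 1)))) ∨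
    Nonempty (G ≃* (Multiplicative (ZMod (2 ^ ℓ)) × Multiplicative (ZMod 2))) ∨
    Nonempty (G ≃* DihedralGroup (2 ^ ℓ)) ∨
    (∃ a b : G, orderOf a = 2 ^ ℓ ∧ orderOf b = 2 ∧
      b * a * b⁻¹ = a ^ (2 ^ (ℓ - 1) - 1) ∧ Subgroup.closure {a, b} = ⊤) ∨
    (∃ a b : G, orderOf a = 2 ^ ℓ ∧ orderOf b = 2 ∧
      b * a * b⁻¹ = a ^ (2 ^ (ℓ - 1) + 1) ∧ Subgroup.closure {a, b} = ⊤) ∨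
    Nonempty (G ≃* QuaternionGroup (2 ^ (ℓ - 1))) := by
  have hNZ : NeZero (2 ^ ℓ) := ⟨by positivity⟩
  have hN2 : 2 ^ (ℓ + 1) = 2 ^ ℓ * 2 := by rw [pow_succ]
  have hNhalf : 2 * 2 ^ (ℓ - 1) = 2 ^ ℓ := by
    rw [← pow_succ']
    congr 1
    omega
  have hN1 : 1 < 2 ^ ℓ := by
    have : (2:ℕ) ^ 1 ≤ 2 ^ ℓ := Nat.pow_le_pow_right (by norm_num) (by omega)
    omega
  have hHcard : Nat.card H = 2 ^ ℓ := by
    have h := Subgroup.card_mul_index H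
    rw [hidx, hcard, hN2] at h
    omega
  obtain ⟨g, hg⟩ := hcyc.exists_generator
  set a : G := (g : G) with haa
  have ha : orderOf a = 2 ^ ℓ := by
    rw [haa, Subgroup.orderOf_coe, orderOf_eq_card_of_forall_mem_zpowers hg, hHcard]
  have haH : a ∈ H := g.2
  have hfpH : ∀ i : ZMod (2 ^ ℓ), fp a (2 ^ ℓ) i ∈ H := fun i => pow_mem haH _
  have hmem : ∀ x ∈ H, ∃ i : ZMod (2 ^ ℓ), x = fp a (2 ^ ℓ) i := by
    intro x hx
    obtain ⟨z, hz⟩ := hg ⟨x, hx⟩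
    refine ⟨((z : ZMod (2 ^ ℓ))), ?_⟩
    have h1 : ((g ^ z : H) : G) = x := congrArg Subtype.val hz
    rw [SubgroupClass.coe_zpow] at h1
    rw [fp_intCast ha]
    exact h1.symm
  obtain ⟨b, hbH⟩ : ∃ b : G, b ∉ H := by
    by_contra hc
    push_neg at hc
    have htop : H = ⊤ := (Subgroup.eq_top_iff' H).mpr hc
    rw [htop, Subgroup.index_top] at hidx
    omega
  have hbinv : b⁻¹ ∉ H := fun h => hbH (by simpa using H.inv_mem h)
  have hconjH : b * a * b⁻¹ ∈ H := by
    simp [Subgroup.mul_mem_iff_of_index_two hidx, haH, hbH, hbinv]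
  have hb2H : b * b ∈ H := Subgroup.mul_self_mem_of_index_two hidx b
  obtain ⟨k, hk⟩ := hmem _ hconjH
  obtain ⟨m, hm⟩ := hmem _ hb2H
  have hconj : ∀ i, b * fp a (2 ^ ℓ) i * b⁻¹ = fp a (2 ^ ℓ) (k * i) := fun i => conj_fp ha hk i
  -- k is odd
  have hkodd : ¬ 2 ∣ k.val := by
    have h1 : orderOf (b * a * b⁻¹) = 2 ^ ℓ := by
      have := orderOf_injective (MulAut.conj b).toMonoidHom (MulAut.conj b).injective a
      simpa [ha] using this
    rw [hk] at h1
    have h2 : (2 ^ ℓ) / (2 ^ ℓ).gcd k.val = 2 ^ ℓ := by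
      have : orderOf (a ^ k.val) = orderOf a / (orderOf a).gcd k.val := orderOf_pow a
      rw [ha] at this
      rw [← this]
      exact h1
    have hgcd : (2 ^ ℓ).gcd k.val = 1 := by
      rcases (Nat.div_eq_self.mp h2) with h | h
      · exact absurd h (by positivity)
      · exact h
    intro h2k
    have : (2 : ℕ) ∣ (2 ^ ℓ).gcd k.val :=
      Nat.dvd_gcd (dvd_pow_self 2 (by omega)) h2k
    omega
  -- k * k = 1
  have hksq : k * k = 1 := by
    apply fp_inj ha
    rw [fp_one ha]
    have h1 : b * (b * a * b⁻¹) * b⁻¹ = fp a (2 ^ ℓ) (k * k) := by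
      rw [hk]; exact hconj k
    have h2 : b * (b * a * b⁻¹) * b⁻¹ = (b * b) * a * (b * b)⁻¹ := by group
    have h3 : (b * b) * a * (b * b)⁻¹ = a := by
      rw [hm]
      have hcm := (fp_comm' ha m).eq
      calc fp a (2 ^ ℓ) m * a * (fp a (2 ^ ℓ) m)⁻¹
          = a * fp a (2 ^ ℓ) m * (fp a (2 ^ ℓ) m)⁻¹ := by rw [hcm]
        _ = a := by group
    rw [← h1, h2, h3]
  -- constraint on m
  have hkm : k * m = m := by
    apply fp_inj ha
    rw [← hconj m, ← hm]
    group
  -- generation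
  have topgen : ∀ c : G, c ∉ H → Subgroup.closure {a, c} = ⊤ := by
    intro c hc
    rw [eq_top_iff]
    intro x _
    have haK : a ∈ Subgroup.closure {a, c} := Subgroup.subset_closure (Set.mem_insert _ _)
    have hcK : c ∈ Subgroup.closure {a, c} :=
      Subgroup.subset_closure (Set.mem_insert_of_mem _ rfl)
    by_cases hx : x ∈ H
    · obtain ⟨i, rfl⟩ := hmem x hx
      exact pow_mem haK _
    · have hcinv : c⁻¹ ∉ H := fun h => hc (by simpa using H.inv_mem h)
      have h1 : c⁻¹ * x ∈ H := by
        simp [Subgroup.mul_mem_iff_of_index_two hidx, hcinv, hx]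
      obtain ⟨i, hi⟩ := hmem _ h1
      have hxe : x = c * fp a (2 ^ ℓ) i := by rw [← hi]; group
      rw [hxe]
      exact mul_mem hcK (pow_mem haK _)
  have hmself : m = ((m.val : ℕ) : ZMod (2 ^ ℓ)) := by
    rw [ZMod.natCast_val, ZMod.cast_id]
  rcases sqrt_one hℓ hkodd hksq with hk1 | hkm1 | hkSD | hkMod
  · -- abelian case
    rw [hk1] at hk hconj
    rw [fp_one ha] at hk
    have hcomm : a * b = b * a := by
      calc a * b = (b * a * b⁻¹) * b := by rw [hk]
        _ = b * a := by group
    have hbfp : ∀ i, b * fp a (2 ^ ℓ) i = fp a (2 ^ ℓ) i * b := by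
      intro i
      have h1 := hconj i
      rw [one_mul] at h1
      calc b * fp a (2 ^ ℓ) i = (b * fp a (2 ^ ℓ) i * b⁻¹) * b := by group
        _ = fp a (2 ^ ℓ) i * b := by rw [h1]
    rcases Nat.even_or_odd m.val with ⟨s, hs⟩ | hmo
    · -- product case
      have hmt : m = (s : ZMod (2 ^ ℓ)) + (s : ZMod (2 ^ ℓ)) := by
        rw [hmself, hs]
        push_cast
        ring
      set t : ZMod (2 ^ ℓ) := (s : ZMod (2 ^ ℓ)) with ht
      set c := b * fp a (2 ^ ℓ) (-t) with hcdef
      have hcH : c ∉ H := by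
        intro h
        apply hbH
        have hbe : b = c * fp a (2 ^ ℓ) t := by
          rw [hcdef, mul_assoc, ← fp_add ha, neg_add_cancel, fp_zero ha, mul_one]
        rw [hbe]
        exact mul_mem h (hfpH t)
      have hc2 : c * c = 1 := by
        have e1 : c * c = (b * b) * (fp a (2 ^ ℓ) (-t) * fp a (2 ^ ℓ) (-t)) := by
          rw [hcdef]
          calc b * fp a (2 ^ ℓ) (-t) * (b * fp a (2 ^ ℓ) (-t))
              = b * (fp a (2 ^ ℓ) (-t) * b) * fp a (2 ^ ℓ) (-t) := by group
            _ = b * (b * fp a (2 ^ ℓ) (-t)) * fp a (2 ^ ℓ) (-t) := by rw [← hbfp]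
            _ = (b * b) * (fp a (2 ^ ℓ) (-t) * fp a (2 ^ ℓ) (-t)) := by group
        rw [e1, hm, ← fp_add ha, ← fp_add ha, hmt,
          show (t + t) + (-t + -t) = (0 : ZMod (2 ^ ℓ)) by ring, fp_zero ha]
      have hcne : c ≠ 1 := fun h => hcH (h ▸ one_mem H)
      have hordc : orderOf c = 2 := orderOf_eq_prime (by rw [pow_two]; exact hc2) hcne
      have hac : a * c = c * a := by
        rw [hcdef]
        calc a * (b * fp a (2 ^ ℓ) (-t)) = (a * b) * fp a (2 ^ ℓ) (-t) := by group
          _ = (b * a) * fp a (2 ^ ℓ) (-t) := by rw [hcomm]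
          _ = b * (a * fp a (2 ^ ℓ) (-t)) := by group
          _ = b * (fp a (2 ^ ℓ) (-t) * a) := by rw [(fp_comm' ha (-t)).symm.eq]
          _ = b * fp a (2 ^ ℓ) (-t) * a := by group
      exact Or.inr (Or.inl (prod_case hN1 (hcard.trans hN2) ha hordc hac (topgen c hcH)))
    · -- cyclic case
      have hOrd : orderOf b = 2 ^ (ℓ + 1) := by
        have hp : b ^ (2 ^ (ℓ + 1)) = 1 := by
          have e1 : b ^ (2 ^ (ℓ + 1)) = (b * b) ^ (2 ^ ℓ) := by
            rw [← pow_two, ← pow_mul]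
            congr 1
            rw [pow_succ]
            ring
          rw [e1, hm, fp_pow ha, ZMod.natCast_self, mul_zero, fp_zero ha]
        have hnp : b ^ (2 ^ ℓ) ≠ 1 := by
          have e1 : b ^ (2 ^ ℓ) = (b * b) ^ (2 ^ (ℓ - 1)) := by
            rw [← pow_two, ← pow_mul]
            congr 1
            omega
          rw [e1, hm, fp_pow ha]
          intro hcon
          have h0 := fp_inj ha (hcon.trans (fp_zero ha).symm)
          have h1 : ((m.val * 2 ^ (ℓ - 1) : ℕ) : ZMod (2 ^ ℓ)) = 0 := by
            push_cast
            push_cast at h0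
            rw [← hmself]
            exact h0
          rw [ZMod.natCast_eq_zero_iff] at h1
          have h2 : 2 ^ (ℓ - 1) * 2 ∣ 2 ^ (ℓ - 1) * m.val := by
            rw [show 2 ^ (ℓ - 1) * 2 = 2 ^ ℓ by omega]
            rw [mul_comm] at h1
            exact h1
          have h3 : 2 ∣ m.val :=
            (Nat.mul_dvd_mul_iff_left (by positivity : 0 < 2 ^ (ℓ - 1))).mp h2
          rcases hmo with ⟨w, hw⟩
          omega
        exact orderOf_eq_prime_pow hnp hp
      have hGc : IsCyclic G := isCyclic_of_orderOf_eq_card b (by rw [hOrd, hcard])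
      refine Or.inl ⟨?_⟩
      have hcc : Nat.card G = Nat.card (Multiplicative (ZMod (2 ^ (ℓ + 1)))) := by
        rw [hcard, ← Nat.card_congr (Multiplicative.ofAdd (α := ZMod (2 ^ (ℓ + 1)))),
          Nat.card_zmod]
      exact mulEquivOfCyclicCardEq hcc
  · -- k = -1 : dihedral or quaternion
    have hamem : b * a * b⁻¹ = a⁻¹ := by
      rw [hk, hkm1, fp_neg ha, fp_one ha]
    have hmm : m + m = 0 := by
      have h1 : -m = m := by
        rw [hkm1] at hkm
        simpa using hkm
      nth_rewrite 1 [← h1]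
      exact neg_add_cancel m
    have hdm : ∃ q, m.val = 2 ^ (ℓ - 1) * q := by
      have h1 : ((m.val + m.val : ℕ) : ZMod (2 ^ ℓ)) = 0 := by
        push_cast
        rw [← hmself]
        exact hmm
      rw [ZMod.natCast_eq_zero_iff] at h1
      obtain ⟨q, hq⟩ := h1
      refine ⟨q, ?_⟩
      have hq' : m.val + m.val = 2 * (2 ^ (ℓ - 1) * q) := by
        rw [hq, ← hNhalf, mul_assoc]
      omega
    have hmval : m.val = 0 ∨ m.val = 2 ^ (ℓ - 1) := by
      obtain ⟨q, hq⟩ := hdm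
      have hlt : m.val < 2 ^ ℓ := ZMod.val_lt m
      have hq2 : q < 2 := by
        by_contra hc
        push_neg at hc
        have h3 : 2 ^ (ℓ - 1) * 2 ≤ 2 ^ (ℓ - 1) * q := Nat.mul_le_mul_left _ hc
        omega
      interval_cases q
      · left; omega
      · right; omega
    rcases hmval with h0 | h1
    · -- dihedral
      have hbb : b * b = 1 := by
        rw [hm, hmself, h0, Nat.cast_zero, fp_zero ha]
      refine Or.inr (Or.inr (Or.inl ?_))
      exact dihedral_case hN1 (by rw [hcard, hN2]; ring) ha hamem hbb (topgen b hbH)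
    · -- quaternion
      have hcard4 : Nat.card G = 4 * 2 ^ (ℓ - 1) := by
        rw [hcard, show ℓ + 1 = (ℓ - 1) + 2 by omega, pow_add]
        ring
      have ha' : orderOf a = 2 * 2 ^ (ℓ - 1) := by rw [ha, hNhalf]
      have hbb : b * b = a ^ (2 ^ (ℓ - 1)) := by
        rw [hm, hmself, h1, fp_natCast ha]
      exact Or.inr (Or.inr (Or.inr (Or.inr (Or.inr
        (quat_case Nat.one_le_two_pow hcard4 ha' hamem hbb (topgen b hbH))))))
  · -- semidihedral
    have hple : (4 : ℕ) ≤ 2 ^ (ℓ - 1) := by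
      have : (2:ℕ) ^ 2 ≤ 2 ^ (ℓ - 1) := Nat.pow_le_pow_right (by norm_num) (by omega)
      omega
    have hconja : b * a * b⁻¹ = a ^ (2 ^ (ℓ - 1) - 1) := by
      rw [hk, hkSD, fp_natCast ha]
    have hk1 : k - 1 = ((2 ^ (ℓ - 1) - 2 : ℕ) : ZMod (2 ^ ℓ)) := by
      rw [hkSD, show (2 ^ (ℓ - 1) - 1 : ℕ) = (2 ^ (ℓ - 1) - 2) + 1 by omega]
      push_cast
      ring
    have hzero : ((((2 ^ (ℓ - 1) - 2) * m.val : ℕ)) : ZMod (2 ^ ℓ)) = 0 := by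
      push_cast
      rw [← hk1, ← hmself, sub_mul, one_mul, hkm, sub_self]
    rw [ZMod.natCast_eq_zero_iff] at hzero
    have hdm : ∃ q, m.val = 2 ^ (ℓ - 1) * q := by
      have h2 : 2 * 2 ^ (ℓ - 2) = 2 ^ (ℓ - 1) := by
        rw [← pow_succ']
        congr 1
        omega
      have e1 : (2 ^ (ℓ - 1) - 2) * m.val = 2 * ((2 ^ (ℓ - 2) - 1) * m.val) := by
        have : (2 ^ (ℓ - 1) - 2) = 2 * (2 ^ (ℓ - 2) - 1) := by omega
        rw [this]
        ring
      have h4 : 2 ^ (ℓ - 1) ∣ (2 ^ (ℓ - 2) - 1) * m.val := by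
        obtain ⟨q, hq⟩ := hzero
        have h5 : 2 * ((2 ^ (ℓ - 2) - 1) * m.val) = 2 * (2 ^ (ℓ - 1) * q) := by
          rw [← e1, hq, ← hNhalf]
          ring
        exact ⟨q, by omega⟩
      have hcop : Nat.Coprime (2 ^ (ℓ - 1)) (2 ^ (ℓ - 2) - 1) := by
        apply Nat.Coprime.pow_left
        rw [Nat.Prime.coprime_iff_not_dvd Nat.prime_two]
        have h5 : 2 * 2 ^ (ℓ - 3) = 2 ^ (ℓ - 2) := by
          rw [← pow_succ']
          congr 1
          omega
        omega
      exact hcop.dvd_of_dvd_mul_left h4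
    have hmval : m.val = 0 ∨ m.val = 2 ^ (ℓ - 1) := by
      obtain ⟨q, hq⟩ := hdm
      have hlt : m.val < 2 ^ ℓ := ZMod.val_lt m
      have hq2 : q < 2 := by
        by_contra hc
        push_neg at hc
        have h3 : 2 ^ (ℓ - 1) * 2 ≤ 2 ^ (ℓ - 1) * q := Nat.mul_le_mul_left _ hc
        omega
      interval_cases q
      · left; omega
      · right; omega
    refine Or.inr (Or.inr (Or.inr (Or.inl ?_)))
    rcases hmval with h0 | h1
    · refine ⟨a, b, ha, ?_, hconja, topgen b hbH⟩
      have hbb : b * b = 1 := by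
        rw [hm, hmself, h0, Nat.cast_zero, fp_zero ha]
      exact orderOf_eq_prime (by rw [pow_two]; exact hbb) (fun h => hbH (h ▸ one_mem H))
    · have hbaH : b * a ∉ H := by
        intro h
        apply hbH
        have hb' : b = (b * a) * a⁻¹ := by group
        rw [hb']
        exact mul_mem h (H.inv_mem haH)
      have hbb : (b * a) * (b * a) = 1 := by
        have e1 : (b * a) * (b * a) = (b * a * b⁻¹) * ((b * b) * a) := by group
        rw [e1, hk, hm]
        nth_rewrite 3 [show a = fp a (2 ^ ℓ) 1 from (fp_one ha).symm]
        rw [← fp_add ha, ← fp_add ha, hkSD, hmself, h1]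
        rw [show ((((2 ^ (ℓ - 1) - 1 : ℕ) : ZMod (2 ^ ℓ))) +
            ((((2 ^ (ℓ - 1) : ℕ) : ℕ) : ZMod (2 ^ ℓ)) + 1)) =
            (((2 ^ (ℓ - 1) - 1) + (2 ^ (ℓ - 1) + 1) : ℕ) : ZMod (2 ^ ℓ)) by push_cast; ring]
        rw [show (2 ^ (ℓ - 1) - 1) + (2 ^ (ℓ - 1) + 1) = 2 ^ ℓ by omega, ZMod.natCast_self,
          fp_zero ha]
      have hconja' : (b * a) * a * (b * a)⁻¹ = a ^ (2 ^ (ℓ - 1) - 1) := by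
        have e1 : (b * a) * a * (b * a)⁻¹ = b * a * b⁻¹ := by group
        rw [e1, hconja]
      refine ⟨a, b * a, ha, ?_, hconja', topgen (b * a) hbaH⟩
      exact orderOf_eq_prime (by rw [pow_two]; exact hbb) (fun h => hbaH (h ▸ one_mem H))
  · -- modular
    have hconja : b * a * b⁻¹ = a ^ (2 ^ (ℓ - 1) + 1) := by
      rw [hk, hkMod, fp_natCast ha]
    have hk1 : k - 1 = ((2 ^ (ℓ - 1) : ℕ) : ZMod (2 ^ ℓ)) := by
      rw [hkMod]
      push_cast
      ring
    have hzero : (((2 ^ (ℓ - 1) * m.val : ℕ)) : ZMod (2 ^ ℓ)) = 0 := by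
      rw [Nat.cast_mul, ← hk1, ← hmself, sub_mul, one_mul, hkm, sub_self]
    rw [ZMod.natCast_eq_zero_iff] at hzero
    obtain ⟨s, hs⟩ : ∃ s, m.val = 2 * s := by
      obtain ⟨q, hq⟩ := hzero
      have h7 : 2 ^ (ℓ - 1) * m.val = 2 ^ (ℓ - 1) * (2 * q) := by
        rw [hq, ← hNhalf]
        ring
      exact ⟨q, Nat.eq_of_mul_eq_mul_left (by positivity) h7⟩
    have hu : IsUnit (((2 ^ (ℓ - 2) + 1 : ℕ)) : ZMod (2 ^ ℓ)) := by
      rw [ZMod.isUnit_iff_coprime]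
      apply Nat.Coprime.pow_right
      rw [Nat.coprime_comm, Nat.Prime.coprime_iff_not_dvd Nat.prime_two]
      have h5 : 2 * 2 ^ (ℓ - 3) = 2 ^ (ℓ - 2) := by
        rw [← pow_succ']
        congr 1
        omega
      omega
    obtain ⟨v, hv⟩ := hu
    set σ : ZMod (2 ^ ℓ) := -(s : ZMod (2 ^ ℓ)) * ↑v⁻¹ with hσdef
    have hσ : σ * (k + 1) + m = 0 := by
      have hkp1 : k + 1 = 2 * (((2 ^ (ℓ - 2) + 1 : ℕ)) : ZMod (2 ^ ℓ)) := by
        rw [hkMod]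
        push_cast
        rw [show (2:ZMod (2 ^ ℓ)) ^ (ℓ - 1) = 2 ^ ((ℓ - 2) + 1) by congr 1; omega, pow_succ]
        ring
      have hm2 : m = 2 * (s : ZMod (2 ^ ℓ)) := by
        rw [hmself, hs]
        push_cast
        ring
      have hv1 : ((v⁻¹ : (ZMod (2 ^ ℓ))ˣ) : ZMod (2 ^ ℓ)) *
          ((v : (ZMod (2 ^ ℓ))ˣ) : ZMod (2 ^ ℓ)) = 1 := Units.inv_mul v
      rw [hkp1, hm2, hσdef, ← hv]
      linear_combination (-2 * (s : ZMod (2 ^ ℓ))) * hv1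
    set b' : G := b * fp a (2 ^ ℓ) σ with hb'def
    have hb'H : b' ∉ H := by
      intro h
      apply hbH
      have hb'' : b = b' * (fp a (2 ^ ℓ) σ)⁻¹ := by rw [hb'def]; group
      rw [hb'']
      exact mul_mem h (H.inv_mem (hfpH σ))
    have hbb : b' * b' = 1 := by
      have e1 : b' * b' = (b * fp a (2 ^ ℓ) σ * b⁻¹) * ((b * b) * fp a (2 ^ ℓ) σ) := by
        rw [hb'def]
        group
      rw [e1, hconj σ, hm, ← fp_add ha, ← fp_add ha,
        show k * σ + (m + σ) = σ * (k + 1) + m by ring, hσ, fp_zero ha]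
    have hconja' : b' * a * b'⁻¹ = a ^ (2 ^ (ℓ - 1) + 1) := by
      have e1 : b' * a * b'⁻¹ = b * (fp a (2 ^ ℓ) σ * a * (fp a (2 ^ ℓ) σ)⁻¹) * b⁻¹ := by
        rw [hb'def]
        group
      have e2 : fp a (2 ^ ℓ) σ * a * (fp a (2 ^ ℓ) σ)⁻¹ = a := by
        rw [(fp_comm' ha σ).eq]
        group
      rw [e1, e2, hconja]
    refine Or.inr (Or.inr (Or.inr (Or.inr (Or.inl ?_))))
    refine ⟨a, b', ha, ?_, hconja', topgen b' hb'H⟩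
    exact orderOf_eq_prime (by rw [pow_two]; exact hbb) (fun h => hb'H (h ▸ one_mem H))
end

section
/- For ℓ ≥ 3, the automorphism group of the semidihedral group SD_{2^{ℓ+1}} has order 2^{2ℓ-2} and is isomorphic to Z_{2^{ℓ-1}} ⋊ Aut(Z_{2^ℓ}); explicitly every automorphism sends (a,b) to (a^i, a^j b) with i odd and j even. -/
open Multiplicative SemidirectProduct

namespace SD5

instance instNZ (n : ℕ) : NeZero ((2:ℕ) ^ n) := ⟨(Nat.two_pow_pos n).ne'⟩

lemma pow_mod_eq {M : Type*} [Monoid M] {x : M} {m : ℕ} (hx : x ^ m = 1) (n : ℕ) :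
    x ^ (n % m) = x ^ n := by
  conv_rhs => rw [← Nat.div_add_mod n m]
  rw [pow_add, pow_mul, hx, one_pow, one_mul]

lemma pow_val_natCast {M : Type*} [Monoid M] {x : M} {m : ℕ} [NeZero m]
    (hx : x ^ m = 1) (n : ℕ) : x ^ ((n : ZMod m)).val = x ^ n := by
  rw [ZMod.val_natCast, pow_mod_eq hx]

/-- Hom out of `Multiplicative (ZMod m)` determined by an element of order dividing `m`. -/
def hompow {M : Type*} [Monoid M] (x : M) (m : ℕ) [NeZero m] (hx : x ^ m = 1) :
    Multiplicative (ZMod m) →* M where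
  toFun e := x ^ (e.toAdd).val
  map_one' := by
    show x ^ (0 : ZMod m).val = 1
    rw [ZMod.val_zero, pow_zero]
  map_mul' e f := by
    show x ^ (e.toAdd + f.toAdd).val = x ^ (e.toAdd).val * x ^ (f.toAdd).val
    rw [ZMod.val_add, pow_mod_eq hx, pow_add]

lemma hompow_apply {M : Type*} [Monoid M] (x : M) (m : ℕ) [NeZero m] (hx : x ^ m = 1)
    (y : ZMod m) : hompow x m hx (ofAdd y) = x ^ y.val := rfl

lemma hompow_natCast {M : Type*} [Monoid M] (x : M) (m : ℕ) [NeZero m] (hx : x ^ m = 1)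
    (n : ℕ) : hompow x m hx (ofAdd (n : ZMod m)) = x ^ n := pow_val_natCast hx n

/-- Multiplication by a unit as an automorphism of `Multiplicative (ZMod m)`. -/
def mulAutOfUnit {m : ℕ} (u : (ZMod m)ˣ) : MulAut (Multiplicative (ZMod m)) where
  toFun x := ofAdd ((u : ZMod m) * x.toAdd)
  invFun x := ofAdd (((u⁻¹ : (ZMod m)ˣ) : ZMod m) * x.toAdd)
  left_inv x := by simp
  right_inv x := by simp
  map_mul' x y := by
    simp only [toAdd_mul, mul_add, ofAdd_add]

lemma mulAutOfUnit_apply {m : ℕ} (u : (ZMod m)ˣ) (y : ZMod m) :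
    mulAutOfUnit u (ofAdd y) = ofAdd ((u : ZMod m) * y) := rfl

/-- `unitsMap` as a monoid hom to the automorphism group. -/
def unitsMap (m : ℕ) : (ZMod m)ˣ →* MulAut (Multiplicative (ZMod m)) where
  toFun := mulAutOfUnit
  map_one' := by
    ext x
    show ofAdd (((1 : (ZMod m)ˣ) : ZMod m) * x.toAdd) = x
    simp
  map_mul' u v := by
    ext x
    show ofAdd (((u*v : (ZMod m)ˣ) : ZMod m) * x.toAdd) = ofAdd ((u : ZMod m) * ((v : ZMod m) * x.toAdd))
    simp [mul_assoc]

lemma unitsMap_bijective (m : ℕ) [NeZero m] : Function.Bijective (unitsMap m) := by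
  have key : ∀ (g : MulAut (Multiplicative (ZMod m))) (x : ZMod m),
      g (ofAdd x) = ofAdd ((g (ofAdd 1)).toAdd * x) := by
    intro g x
    have h1 : ofAdd x = (ofAdd (1 : ZMod m)) ^ x.val := by
      rw [← ofAdd_nsmul]
      congr 1
      rw [nsmul_eq_mul, mul_one, ZMod.natCast_zmod_val]
    rw [h1, map_pow]
    conv_lhs => rw [show g (ofAdd 1) = ofAdd ((g (ofAdd 1)).toAdd) from rfl]
    rw [← ofAdd_nsmul]
    congr 1
    rw [nsmul_eq_mul, ZMod.natCast_zmod_val, mul_comm]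
  constructor
  · intro u v h
    have h2 : mulAutOfUnit u (ofAdd (1 : ZMod m)) = mulAutOfUnit v (ofAdd 1) := by
      rw [show mulAutOfUnit u = unitsMap m u from rfl, show mulAutOfUnit v = unitsMap m v from rfl, h]
    rw [mulAutOfUnit_apply, mulAutOfUnit_apply, mul_one, mul_one] at h2
    exact Units.ext (ofAdd.injective h2)
  · intro f
    set c := (f (ofAdd 1)).toAdd with hc
    set c' := (f.symm (ofAdd 1)).toAdd with hc'
    have hcc' : c * c' = 1 := by
      have h3 : f (f.symm (ofAdd (1 : ZMod m))) = ofAdd 1 := f.apply_symm_apply _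
      have h4 : f (ofAdd c') = ofAdd (c * c') := key f c'
      rw [show f.symm (ofAdd (1 : ZMod m)) = ofAdd c' from rfl] at h3
      rw [h3] at h4
      exact (ofAdd.injective h4).symm
    refine ⟨⟨c, c', hcc', by rwa [mul_comm] at hcc'⟩, ?_⟩
    ext x
    show ofAdd (c * x.toAdd) = f x
    rw [show x = ofAdd x.toAdd from rfl, key f x.toAdd]
    rfl

/-- The isomorphism `(ZMod m)ˣ ≃* MulAut (Multiplicative (ZMod m))`. -/
noncomputable def unitsEquiv (m : ℕ) [NeZero m] :
    (ZMod m)ˣ ≃* MulAut (Multiplicative (ZMod m)) :=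
  MulEquiv.ofBijective (unitsMap m) (unitsMap_bijective m)

/-- Congruence of semidirect products along an isomorphism of the acting group. -/
def sdCongr {N H₁ H₂ : Type*} [Group N] [Group H₁] [Group H₂] (ψ : H₁ ≃* H₂)
    (φ₁ : H₁ →* MulAut N) (φ₂ : H₂ →* MulAut N) (h : ∀ x, φ₂ (ψ x) = φ₁ x) :
    (N ⋊[φ₁] H₁) ≃* (N ⋊[φ₂] H₂) where
  toFun p := ⟨p.left, ψ p.right⟩
  invFun p := ⟨p.left, ψ.symm p.right⟩
  left_inv p := by ext <;> simp
  right_inv p := by ext <;> simp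
  map_mul' p q := by
    ext
    · show (p.left * φ₁ p.right q.left) = p.left * φ₂ (ψ p.right) q.left
      rw [h]
    · show ψ (p.right * q.right) = ψ p.right * ψ q.right
      rw [map_mul]



variable (k : ℕ)

/-- The element `2^(k+2) - 1` of `ZMod (2^(k+3))`. -/
def R : ZMod (2^(k+3)) := ((2^(k+2) - 1 : ℕ) : ZMod (2^(k+3)))

lemma key0 : (2 : ZMod (2^(k+3)))^(k+3) = 0 := by
  have h := ZMod.natCast_self (2^(k+3))
  push_cast at h
  exact h

lemma R_eq : R k = 2^(k+2) - 1 := by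
  unfold R
  rw [Nat.cast_sub Nat.one_le_two_pow]
  push_cast
  ring

lemma R_sq : R k * R k = 1 := by
  rw [R_eq]
  linear_combination ((2:ZMod (2^(k+3)))^(k+1) - 1) * key0 k

lemma one_add_R : (1 : ZMod (2^(k+3))) + R k = 2^(k+2) := by
  rw [R_eq]; ring

/-- `R` as a unit. -/
def Ru : (ZMod (2^(k+3)))ˣ := ⟨R k, R k, R_sq k, R_sq k⟩

/-- Conjugation-by-`b` automorphism of `Multiplicative (ZMod (2^(k+3)))`. -/
def Rconj : MulAut (Multiplicative (ZMod (2^(k+3)))) := mulAutOfUnit (Ru k)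

lemma Rconj_sq : Rconj k ^ 2 = 1 := by
  ext x
  rw [pow_two]
  show Rconj k (Rconj k x) = x
  show ofAdd (R k * (R k * x.toAdd)) = x
  rw [← mul_assoc, R_sq k, one_mul]
  rfl

/-- The action of `Multiplicative (ZMod 2)` used to build the semidihedral group. -/
def phi0 : Multiplicative (ZMod 2) →* MulAut (Multiplicative (ZMod (2^(k+3)))) :=
  hompow (Rconj k) 2 (Rconj_sq k)

/-- The semidihedral group of order `2^(k+4)` as a semidirect product. -/
abbrev SD := SemidirectProduct (Multiplicative (ZMod (2^(k+3)))) (Multiplicative (ZMod 2)) (phi0 k)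

/-- The canonical generator `a`. -/
def aS : SD k := inl (ofAdd 1)

/-- The canonical generator `b`. -/
def bS : SD k := inr (ofAdd 1)

lemma zmod2_cases (x : ZMod 2) : x = 0 ∨ x = 1 := by
  fin_cases x
  · left; rfl
  · right; rfl

lemma eps_cases (ε : Multiplicative (ZMod 2)) : ε = ofAdd 0 ∨ ε = ofAdd 1 := by
  rcases zmod2_cases ε.toAdd with h | h
  · left; rw [← h]; rfl
  · right; rw [← h]; rfl

lemma phi0_zero : phi0 k (ofAdd 0) = 1 := by
  show Rconj k ^ (0 : ZMod 2).val = 1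
  rw [ZMod.val_zero, pow_zero]

lemma phi0_one_apply (x : ZMod (2^(k+3))) :
    phi0 k (ofAdd 1) (ofAdd x) = ofAdd (R k * x) := by
  show (Rconj k ^ (1 : ZMod 2).val) (ofAdd x) = ofAdd (R k * x)
  rw [show (1 : ZMod 2).val = 1 from rfl, pow_one]
  rfl

lemma aS_pow (n : ℕ) : (aS k)^n = inl (ofAdd ((n : ZMod (2^(k+3))))) := by
  unfold aS
  rw [← map_pow]
  congr 1
  rw [← ofAdd_nsmul]
  congr 1
  rw [nsmul_eq_mul, mul_one]

lemma bS_pow (n : ℕ) : (bS k)^n = inr (ofAdd ((n : ZMod 2))) := by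
  unfold bS
  rw [← map_pow]
  congr 1
  rw [← ofAdd_nsmul]
  congr 1
  rw [nsmul_eq_mul, mul_one]

lemma orderOf_aS : orderOf (aS k) = 2^(k+3) := by
  unfold aS
  rw [orderOf_injective inl inl_injective]
  rw [orderOf_ofAdd_eq_addOrderOf, ZMod.addOrderOf_one]


/-- Embedding `ZMod (2^(k+2)) → ZMod (2^(k+3))` by doubling. -/
def Jmap (j : ZMod (2^(k+2))) : ZMod (2^(k+3)) := ((2 * j.val : ℕ) : ZMod (2^(k+3)))

/-- The inclusion `ZMod 2 → ZMod (2^(k+3))` via `val`. -/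
def cz (ε : ZMod 2) : ZMod (2^(k+3)) := ((ε.val : ℕ) : ZMod (2^(k+3)))

lemma cz_zero : cz k 0 = 0 := by
  unfold cz; rw [ZMod.val_zero]; exact Nat.cast_zero

lemma cz_one : cz k 1 = 1 := by
  unfold cz; rw [show (1 : ZMod 2).val = 1 from rfl]; exact Nat.cast_one

lemma L1 (m : ℕ) : ((2 * (m % 2^(k+2)) : ℕ) : ZMod (2^(k+3))) = ((2 * m : ℕ) : ZMod (2^(k+3))) := by
  rw [ZMod.natCast_eq_natCast_iff]
  rw [show 2^(k+3) = 2 * 2^(k+2) by ring]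
  exact (Nat.mod_modEq m (2^(k+2))).mul_left' 2

lemma Jmap_natCast (n : ℕ) : Jmap k ((n : ZMod (2^(k+2)))) = ((2 * n : ℕ) : ZMod (2^(k+3))) := by
  unfold Jmap
  rw [ZMod.val_natCast]
  exact L1 k n

lemma Jmap_add (j j' : ZMod (2^(k+2))) : Jmap k (j + j') = Jmap k j + Jmap k j' := by
  have h : j + j' = (((j.val + j'.val : ℕ)) : ZMod (2^(k+2))) := by
    push_cast
    rw [ZMod.natCast_zmod_val, ZMod.natCast_zmod_val]
  rw [h, Jmap_natCast]
  unfold Jmap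
  push_cast
  ring

/-- Reduction `ZMod (2^(k+3)) → ZMod (2^(k+2))`. -/
def red : ZMod (2^(k+3)) →+* ZMod (2^(k+2)) :=
  ZMod.castHom (pow_dvd_pow 2 (Nat.le_succ (k+2))) (ZMod (2^(k+2)))

lemma red_natCast (n : ℕ) : red k ((n : ℕ) : ZMod (2^(k+3))) = (n : ZMod (2^(k+2))) :=
  map_natCast _ n

lemma Jmap_mul (x : ZMod (2^(k+3))) (j : ZMod (2^(k+2))) :
    Jmap k (red k x * j) = x * Jmap k j := by
  have hx : x = ((x.val : ℕ) : ZMod (2^(k+3))) := (ZMod.natCast_zmod_val x).symm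
  have hj : j = ((j.val : ℕ) : ZMod (2^(k+2))) := (ZMod.natCast_zmod_val j).symm
  rw [hx, hj, red_natCast, ← Nat.cast_mul, Jmap_natCast, Jmap_natCast]
  push_cast
  ring

lemma Jmap_inj {j j' : ZMod (2^(k+2))} (h : Jmap k j = Jmap k j') : j = j' := by
  unfold Jmap at h
  rw [ZMod.natCast_eq_natCast_iff, show 2^(k+3) = 2 * 2^(k+2) by ring] at h
  have h2 := Nat.ModEq.mul_left_cancel' (c := 2) (by norm_num) h
  have h3 : ((j.val : ℕ) : ZMod (2^(k+2))) = ((j'.val : ℕ) : ZMod (2^(k+2))) :=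
    (ZMod.natCast_eq_natCast_iff _ _ _).mpr h2
  rwa [ZMod.natCast_zmod_val, ZMod.natCast_zmod_val] at h3

lemma hRJ (j : ZMod (2^(k+2))) : Jmap k j + R k * Jmap k j = 0 := by
  have h0 : ((2^(k+3) * j.val : ℕ) : ZMod (2^(k+3))) = 0 := by
    rw [ZMod.natCast_eq_zero_iff]
    exact dvd_mul_right _ _
  have h1 : (1 + R k) * Jmap k j = 0 := by
    rw [one_add_R]
    unfold Jmap
    push_cast at h0 ⊢
    linear_combination h0
  linear_combination h1

/-- The underlying function of the automorphism attached to `(j, u)`. -/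
def alphaFun (j : ZMod (2^(k+2))) (u : (ZMod (2^(k+3)))ˣ) : SD k → SD k :=
  fun x => ⟨ofAdd ((u : ZMod (2^(k+3))) * x.left.toAdd + cz k x.right.toAdd * Jmap k j), x.right⟩

lemma alphaFun_mk (j : ZMod (2^(k+2))) (u : (ZMod (2^(k+3)))ˣ) (l : Multiplicative (ZMod (2^(k+3))))
    (ε : Multiplicative (ZMod 2)) :
    alphaFun k j u ⟨l, ε⟩ =
      ⟨ofAdd ((u : ZMod (2^(k+3))) * l.toAdd + cz k ε.toAdd * Jmap k j), ε⟩ := rfl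


lemma Rconj_pow_apply (v : ℕ) (t : Multiplicative (ZMod (2^(k+3)))) :
    (Rconj k ^ v) t = ofAdd ((R k)^v * t.toAdd) := by
  induction v generalizing t with
  | zero =>
    rw [pow_zero, pow_zero, one_mul]
    rfl
  | succ n ih =>
    have h1 : Rconj k ^ (n+1) = Rconj k ^ n * Rconj k := pow_succ _ _
    rw [h1, MulAut.mul_apply]
    have h2 : Rconj k t = ofAdd (R k * t.toAdd) := rfl
    rw [h2, ih (ofAdd (R k * t.toAdd))]
    exact congrArg ofAdd (by rw [toAdd_ofAdd]; ring)

lemma phi0_eq (ε : Multiplicative (ZMod 2)) : phi0 k ε = Rconj k ^ (ε.toAdd).val := rfl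

lemma mk_mul (l l' : Multiplicative (ZMod (2^(k+3)))) (ε ε' : Multiplicative (ZMod 2)) :
    (⟨l, ε⟩ : SD k) * ⟨l', ε'⟩ =
      ⟨ofAdd (l.toAdd + (R k)^(ε.toAdd).val * l'.toAdd), ε * ε'⟩ := by
  apply SemidirectProduct.ext
  · show l * phi0 k ε l' = ofAdd (l.toAdd + (R k)^(ε.toAdd).val * l'.toAdd)
    rw [phi0_eq, Rconj_pow_apply]
    rfl
  · rfl

lemma zmod2_val_one : (1 : ZMod 2).val = 1 := rfl
lemma zmod2_one_add_one : (1 : ZMod 2) + 1 = 0 := by decide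

lemma alpha_hom (j : ZMod (2^(k+2))) (u : (ZMod (2^(k+3)))ˣ) (x y : SD k) :
    alphaFun k j u (x * y) = alphaFun k j u x * alphaFun k j u y := by
  obtain ⟨xl, xr⟩ := x
  obtain ⟨yl, yr⟩ := y
  rcases eps_cases xr with h | h <;> rcases eps_cases yr with h' | h' <;>
    subst h <;> subst h' <;>
    rw [mk_mul, alphaFun_mk, alphaFun_mk, alphaFun_mk, mk_mul]
  all_goals refine SemidirectProduct.ext (congrArg ofAdd ?_) rfl
  all_goals simp only [toAdd_ofAdd, toAdd_mul, add_zero, zero_add, zmod2_one_add_one,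
      cz_zero, cz_one, ZMod.val_zero, zmod2_val_one, pow_zero, pow_one, one_mul,
      zero_mul, mul_zero]
  · ring
  · ring
  · ring
  · linear_combination (-1 : ZMod (2^(k+3))) * hRJ k j


lemma alpha_comp (j j' : ZMod (2^(k+2))) (u u' : (ZMod (2^(k+3)))ˣ) (x : SD k) :
    alphaFun k j u (alphaFun k j' u' x) =
      alphaFun k (j + red k (u : ZMod (2^(k+3))) * j') (u * u') x := by
  obtain ⟨l, ε⟩ := x
  rw [alphaFun_mk, alphaFun_mk, alphaFun_mk]
  refine SemidirectProduct.ext (congrArg ofAdd ?_) rfl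
  rw [toAdd_ofAdd, Jmap_add, Jmap_mul]
  push_cast
  ring

lemma alpha_id (x : SD k) : alphaFun k 0 1 x = x := by
  obtain ⟨l, ε⟩ := x
  rw [alphaFun_mk]
  have hJ : Jmap k (0 : ZMod (2^(k+2))) = 0 := by
    unfold Jmap
    rw [ZMod.val_zero, mul_zero, Nat.cast_zero]
  refine SemidirectProduct.ext ?_ rfl
  show ofAdd (((1 : (ZMod (2^(k+3)))ˣ) : ZMod (2^(k+3))) * l.toAdd + cz k ε.toAdd * Jmap k 0) = l
  rw [hJ, mul_zero, add_zero, Units.val_one, one_mul]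
  rfl

/-- The automorphism of `SD k` attached to `(j, u)`. -/
def Phiaut (j : ZMod (2^(k+2))) (u : (ZMod (2^(k+3)))ˣ) : MulAut (SD k) where
  toFun := alphaFun k j u
  invFun := alphaFun k (-(red k ((u⁻¹ : (ZMod (2^(k+3)))ˣ) : ZMod (2^(k+3))) * j)) u⁻¹
  left_inv x := by
    rw [alpha_comp, neg_add_cancel, inv_mul_cancel]
    exact alpha_id k x
  right_inv x := by
    rw [alpha_comp, mul_neg, ← mul_assoc, ← map_mul, Units.mul_inv, map_one, one_mul,
      add_neg_cancel, mul_inv_cancel]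
    exact alpha_id k x
  map_mul' := alpha_hom k j u


/-- The action of the units group on `Multiplicative (ZMod (2^(k+2)))` by reduction. -/
def phi' : (ZMod (2^(k+3)))ˣ →* MulAut (Multiplicative (ZMod (2^(k+2)))) :=
  (unitsMap (2^(k+2))).comp (Units.map (red k).toMonoidHom)

/-- The model group `Z_{2^{k+2}} ⋊ (Z/2^{k+3})ˣ`. -/
abbrev Gm := SemidirectProduct (Multiplicative (ZMod (2^(k+2)))) ((ZMod (2^(k+3)))ˣ) (phi' k)

lemma Phiaut_aS (j : ZMod (2^(k+2))) (u : (ZMod (2^(k+3)))ˣ) :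
    Phiaut k j u (aS k) = (⟨ofAdd (u : ZMod (2^(k+3))), 1⟩ : SD k) := by
  show alphaFun k j u ⟨ofAdd 1, 1⟩ = _
  rw [alphaFun_mk]
  refine SemidirectProduct.ext (congrArg ofAdd ?_) rfl
  show (u : ZMod (2^(k+3))) * (ofAdd (1 : ZMod (2^(k+3)))).toAdd + cz k (0 : ZMod 2) * Jmap k j = u
  rw [toAdd_ofAdd, cz_zero, zero_mul, add_zero, mul_one]

lemma Phiaut_bS (j : ZMod (2^(k+2))) (u : (ZMod (2^(k+3)))ˣ) :
    Phiaut k j u (bS k) = (⟨ofAdd (Jmap k j), ofAdd 1⟩ : SD k) := by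
  show alphaFun k j u ⟨ofAdd 0, ofAdd 1⟩ = _
  rw [alphaFun_mk]
  refine SemidirectProduct.ext (congrArg ofAdd ?_) rfl
  show (u : ZMod (2^(k+3))) * (ofAdd (0 : ZMod (2^(k+3)))).toAdd
      + cz k (ofAdd (1 : ZMod 2)).toAdd * Jmap k j = Jmap k j
  rw [toAdd_ofAdd, toAdd_ofAdd, cz_one, one_mul, mul_zero, zero_add]

/-- The homomorphism from the model group to `MulAut (SD k)`. -/
def Phi : Gm k →* MulAut (SD k) where
  toFun p := Phiaut k p.left.toAdd p.right
  map_one' := MulEquiv.ext fun x => alpha_id k x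
  map_mul' p p' := MulEquiv.ext fun x => by
    show alphaFun k ((p.left * phi' k p.right p'.left)).toAdd (p.right * p'.right) x
      = alphaFun k p.left.toAdd p.right (alphaFun k p'.left.toAdd p'.right x)
    rw [alpha_comp]
    rfl

lemma Phi_injective : Function.Injective (Phi k) := by
  intro p p' h
  have h1 : Phiaut k p.left.toAdd p.right (aS k) = Phiaut k p'.left.toAdd p'.right (aS k) := by
    rw [show Phiaut k p.left.toAdd p.right = Phi k p from rfl,
      show Phiaut k p'.left.toAdd p'.right = Phi k p' from rfl, h]
  have h2 : Phiaut k p.left.toAdd p.right (bS k) = Phiaut k p'.left.toAdd p'.right (bS k) := by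
    rw [show Phiaut k p.left.toAdd p.right = Phi k p from rfl,
      show Phiaut k p'.left.toAdd p'.right = Phi k p' from rfl, h]
  rw [Phiaut_aS, Phiaut_aS] at h1
  rw [Phiaut_bS, Phiaut_bS] at h2
  have hu : p.right = p'.right := by
    have := congrArg (fun z : SD k => z.left.toAdd) h1
    exact Units.ext this
  have hj : p.left = p'.left := by
    have := congrArg (fun z : SD k => z.left.toAdd) h2
    have hJ : Jmap k p.left.toAdd = Jmap k p'.left.toAdd := this
    have := Jmap_inj k hJ
    show p.left = p'.left
    have e1 : p.left = ofAdd p.left.toAdd := rfl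
    have e2 : p'.left = ofAdd p'.left.toAdd := rfl
    rw [e1, e2, this]
  exact SemidirectProduct.ext hj hu


lemma genSD : Subgroup.closure {aS k, bS k} = ⊤ := by
  rw [eq_top_iff]
  rintro ⟨l, ε⟩ -
  have hx : (⟨l, ε⟩ : SD k) = aS k ^ (l.toAdd).val * bS k ^ (ε.toAdd).val := by
    rw [aS_pow, bS_pow, ZMod.natCast_zmod_val, ZMod.natCast_zmod_val]
    rw [show ofAdd l.toAdd = l from rfl, show ofAdd ε.toAdd = ε from rfl]
    exact mk_eq_inl_mul_inr ε l
  rw [hx]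
  exact mul_mem (pow_mem (Subgroup.subset_closure (by simp)) _)
    (pow_mem (Subgroup.subset_closure (by simp)) _)

lemma sq_mk (n : ZMod (2^(k+3))) :
    (⟨ofAdd n, ofAdd 1⟩ : SD k)^2 = inl (ofAdd ((2 : ZMod (2^(k+3)))^(k+2) * n)) := by
  rw [pow_two, mk_mul]
  refine SemidirectProduct.ext (congrArg ofAdd ?_) ?_
  · show (ofAdd n).toAdd + (R k)^((ofAdd (1 : ZMod 2)).toAdd).val * (ofAdd n).toAdd
      = (2 : ZMod (2^(k+3)))^(k+2) * n
    rw [toAdd_ofAdd, toAdd_ofAdd, zmod2_val_one, pow_one]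
    linear_combination n * one_add_R k
  · exact congrArg ofAdd zmod2_one_add_one

lemma bS_sq : bS k ^ 2 = 1 := by
  have h : bS k ^ 2 = inr (ofAdd (((2:ℕ) : ZMod 2))) := bS_pow k 2
  rw [h, show ((2:ℕ) : ZMod 2) = 0 by decide]
  rfl

lemma aut_classify (f : MulAut (SD k)) :
    ∃ (u : (ZMod (2^(k+3)))ˣ) (j : ZMod (2^(k+2))),
      f (aS k) = ⟨ofAdd (u : ZMod (2^(k+3))), 1⟩ ∧
      f (bS k) = ⟨ofAdd (Jmap k j), ofAdd 1⟩ ∧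
      f = Phi k ⟨ofAdd j, u⟩ := by
  have hordA : orderOf (f (aS k)) = 2^(k+3) := by
    rw [show f (aS k) = f.toMonoidHom (aS k) from rfl,
      orderOf_injective f.toMonoidHom f.injective, orderOf_aS]
  set fa := f (aS k) with hfa
  have hfam : fa = ⟨ofAdd fa.left.toAdd, fa.right⟩ := rfl
  rcases eps_cases fa.right with hr | hr
  case inr =>
    -- fa has ε-component 1 : impossible since it would have order ≤ 4
    exfalso
    set m := fa.left.toAdd
    have hfa4 : fa ^ 4 = 1 := by
      have e : fa = ⟨ofAdd m, ofAdd 1⟩ := by rw [hfam, hr]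
      rw [e, show (4:ℕ) = 2*2 from rfl, pow_mul, sq_mk, ← map_pow]
      rw [pow_two, show ofAdd ((2 : ZMod (2^(k+3)))^(k+2) * m) * ofAdd ((2 : ZMod (2^(k+3)))^(k+2) * m)
        = ofAdd ((2 : ZMod (2^(k+3)))^(k+2) * m + (2 : ZMod (2^(k+3)))^(k+2) * m) from rfl]
      rw [show ((2 : ZMod (2^(k+3)))^(k+2) * m + (2 : ZMod (2^(k+3)))^(k+2) * m : ZMod (2^(k+3))) = 0 by
        linear_combination m * key0 k]
      rfl
    have hdvd : 2^(k+3) ∣ 4 := hordA ▸ orderOf_dvd_of_pow_eq_one hfa4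
    have hle : 2^(k+3) ≤ 4 := Nat.le_of_dvd (by norm_num) hdvd
    have hge : 2^3 ≤ 2^(k+3) := Nat.pow_le_pow_right (by norm_num) (by omega)
    omega
  case inl =>
  set n := fa.left.toAdd with hn
  have hfan : fa = inl (ofAdd n) := by rw [hfam, hr]; rfl
  have hordn : addOrderOf n = 2^(k+3) := by
    rw [hfan, orderOf_injective (inl : Multiplicative (ZMod (2^(k+3))) →* SD k) inl_injective,
      orderOf_ofAdd_eq_addOrderOf] at hordA
    exact hordA
  have hunit : IsUnit n := by
    have hcast : ((n.val : ℕ) : ZMod (2^(k+3))) = n := ZMod.natCast_zmod_val n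
    have hcoe : addOrderOf ((n.val : ℕ) : ZMod (2^(k+3))) = 2^(k+3) / Nat.gcd (2^(k+3)) n.val :=
      ZMod.addOrderOf_coe n.val (NeZero.ne _)
    rw [hcast, hordn] at hcoe
    have hg : Nat.gcd (2^(k+3)) n.val = 1 := by
      rcases (Nat.div_eq_self.mp hcoe.symm) with h | h
      · exact absurd h (NeZero.ne _)
      · exact h
    rw [← hcast]
    exact (ZMod.isUnit_iff_coprime n.val (2^(k+3))).mpr (Nat.coprime_comm.mp hg)
  set fb := f (bS k) with hfb
  have hfbm : fb = ⟨ofAdd fb.left.toAdd, fb.right⟩ := rfl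
  rcases eps_cases fb.right with hr2 | hr2
  case inl =>
    -- fb would lie in the image of inl, contradicting surjectivity
    exfalso
    have hfbn : fb = inl (ofAdd fb.left.toAdd) := by rw [hfbm, hr2]; rfl
    have htop : Subgroup.closure ({fa, fb} : Set (SD k)) = ⊤ := by
      have h1 : Subgroup.closure ({fa, fb} : Set (SD k))
          = Subgroup.map f.toMonoidHom (Subgroup.closure {aS k, bS k}) := by
        rw [MonoidHom.map_closure]
        congr 1
        rw [Set.image_insert_eq, Set.image_singleton]
        rfl
      rw [h1, genSD k]
      exact Subgroup.map_top_of_surjective _ f.surjective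
    have hle : Subgroup.closure ({fa, fb} : Set (SD k))
        ≤ (inl : Multiplicative (ZMod (2^(k+3))) →* SD k).range := by
      rw [Subgroup.closure_le]
      rintro x hx
      rcases hx with rfl | hx
      · exact ⟨ofAdd n, hfan.symm⟩
      · rcases hx with rfl
        exact ⟨ofAdd fb.left.toAdd, hfbn.symm⟩
    have hbSmem : bS k ∈ (inl : Multiplicative (ZMod (2^(k+3))) →* SD k).range := by
      apply hle
      rw [htop]
      exact Subgroup.mem_top _
    obtain ⟨z, hz⟩ := hbSmem
    have := congrArg SemidirectProduct.right hz
    have h0 : (1 : Multiplicative (ZMod 2)) = ofAdd 1 := this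
    have : (0 : ZMod 2) = 1 := congrArg Multiplicative.toAdd h0
    exact absurd this (by decide)
  case inr =>
  set m := fb.left.toAdd with hm
  have hfbn : fb = ⟨ofAdd m, ofAdd 1⟩ := by rw [hfbm, hr2]
  have hfb2 : fb ^ 2 = 1 := by
    rw [hfb, ← map_pow, bS_sq, map_one]
  have hzero : (2 : ZMod (2^(k+3)))^(k+2) * m = 0 := by
    rw [hfbn, sq_mk] at hfb2
    have := congrArg (fun z : SD k => z.left.toAdd) hfb2
    exact this
  have h2dvd : 2 ∣ m.val := by
    have hcast : ((m.val : ℕ) : ZMod (2^(k+3))) = m := ZMod.natCast_zmod_val m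
    have h7 : ((2^(k+2) * m.val : ℕ) : ZMod (2^(k+3))) = 0 := by
      push_cast
      rw [hcast]
      exact hzero
    have h8 : 2^(k+3) ∣ 2^(k+2) * m.val := (ZMod.natCast_eq_zero_iff _ _).mp h7
    have h9 : 2^(k+2) * 2 ∣ 2^(k+2) * m.val := by
      rw [show 2^(k+2) * 2 = 2^(k+3) by ring]
      exact h8
    exact (mul_dvd_mul_iff_left (a := (2:ℕ)^(k+2)) (by positivity)).mp h9
  refine ⟨hunit.unit, ((m.val / 2 : ℕ) : ZMod (2^(k+2))), ?_, ?_, ?_⟩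
  · rw [hfan, hunit.unit_spec]
    rfl
  · rw [hfbn]
    congr 1
    rw [Jmap_natCast, Nat.mul_div_cancel' h2dvd, ZMod.natCast_zmod_val]
  · have heqgen : Set.EqOn (⇑f.toMonoidHom) (⇑(Phi k ⟨ofAdd ((m.val / 2 : ℕ) : ZMod (2^(k+2))), hunit.unit⟩).toMonoidHom)
        ({aS k, bS k} : Set (SD k)) := by
      rintro x hx
      have hJm : Jmap k ((m.val / 2 : ℕ) : ZMod (2^(k+2))) = m := by
        rw [Jmap_natCast, Nat.mul_div_cancel' h2dvd, ZMod.natCast_zmod_val]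
      rcases hx with rfl | hx
      · show f (aS k) = Phi k _ (aS k)
        have hPhi : Phi k ⟨ofAdd ((m.val / 2 : ℕ) : ZMod (2^(k+2))), hunit.unit⟩ (aS k)
            = ⟨ofAdd ((hunit.unit : ZMod (2^(k+3)))), 1⟩ := Phiaut_aS k _ _
        rw [hPhi, ← hfa, hfan, hunit.unit_spec]
        rfl
      · rcases hx with rfl
        show f (bS k) = Phi k _ (bS k)
        have hPhi : Phi k ⟨ofAdd ((m.val / 2 : ℕ) : ZMod (2^(k+2))), hunit.unit⟩ (bS k)
            = ⟨ofAdd (Jmap k ((m.val / 2 : ℕ) : ZMod (2^(k+2)))), ofAdd 1⟩ := Phiaut_bS k _ _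
        rw [hPhi, hJm, ← hfb, hfbn]
    have hclos := MonoidHom.eqOn_closure heqgen
    rw [genSD k] at hclos
    exact MulEquiv.ext fun x => hclos (Subgroup.mem_top x)


lemma Phi_surjective : Function.Surjective (Phi k) := fun f => by
  obtain ⟨u, j, _, _, hf⟩ := aut_classify k f
  exact ⟨⟨ofAdd j, u⟩, hf.symm⟩

/-- The model group is isomorphic to the automorphism group of `SD k`. -/
noncomputable def autEquiv : Gm k ≃* MulAut (SD k) :=
  MulEquiv.ofBijective (Phi k) ⟨Phi_injective k, Phi_surjective k⟩

/-- `Gm` as a product of sets. -/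
def gmEquivProd : Gm k ≃ (Multiplicative (ZMod (2^(k+2))) × (ZMod (2^(k+3)))ˣ) where
  toFun p := (p.left, p.right)
  invFun p := ⟨p.1, p.2⟩
  left_inv p := rfl
  right_inv p := rfl

/-- `SD` as a product of sets. -/
def sdEquivProd : SD k ≃ (Multiplicative (ZMod (2^(k+3))) × Multiplicative (ZMod 2)) where
  toFun p := (p.left, p.right)
  invFun p := ⟨p.1, p.2⟩
  left_inv p := rfl
  right_inv p := rfl

instance : Finite (SD k) := Finite.of_equiv _ (sdEquivProd k).symm

lemma card_SD : Nat.card (SD k) = 2^(k+4) := by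
  rw [Nat.card_congr (sdEquivProd k), Nat.card_prod,
    Nat.card_congr (Multiplicative.toAdd), Nat.card_congr (Multiplicative.toAdd),
    Nat.card_zmod, Nat.card_zmod]
  ring

lemma card_Gm : Nat.card (Gm k) = 2^(2*k+4) := by
  rw [Nat.card_congr (gmEquivProd k), Nat.card_prod,
    Nat.card_congr (Multiplicative.toAdd), Nat.card_zmod]
  rw [Nat.card_eq_fintype_card, ZMod.card_units_eq_totient,
    Nat.totient_prime_pow Nat.prime_two (by omega : 0 < k+3)]
  rw [show 2 - 1 = 1 from rfl, mul_one, ← pow_add]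
  congr 1
  omega

/-- The final `φ` used in the statement. -/
noncomputable def phiFinal : MulAut (Multiplicative (ZMod (2^(k+3)))) →*
    MulAut (Multiplicative (ZMod (2^(k+2)))) :=
  (phi' k).comp (unitsEquiv (2^(k+3))).symm.toMonoidHom

/-- The model group is isomorphic to the semidirect product in the statement. -/
noncomputable def isoFinal : Gm k ≃*
    SemidirectProduct (Multiplicative (ZMod (2^(k+2))))
      (MulAut (Multiplicative (ZMod (2^(k+3))))) (phiFinal k) :=
  sdCongr (unitsEquiv (2^(k+3))) (phi' k) (phiFinal k) (fun x => by
    show (phi' k) ((unitsEquiv (2^(k+3))).symm ((unitsEquiv (2^(k+3))) x)) = phi' k x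
    rw [MulEquiv.symm_apply_apply])

lemma exists_iso (G : Type) [Group G] (a b : G) (ha : orderOf a = 2^(k+3)) (hb : orderOf b = 2)
    (hrel : b * a * b⁻¹ = a ^ (2^(k+2) - 1)) (hgen : Subgroup.closure {a, b} = ⊤) :
    ∃ e : SD k ≃* G, (∀ x : ZMod (2^(k+3)), e (inl (ofAdd x)) = a ^ x.val) ∧
      e (aS k) = a ∧ e (bS k) = b := by
  have hA : a ^ (2^(k+3)) = 1 := by rw [← ha]; exact pow_orderOf_eq_one a
  have hB : b ^ (2:ℕ) = 1 := by rw [← hb]; exact pow_orderOf_eq_one b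
  have hcond : ∀ g, (hompow a (2^(k+3)) hA).comp ((phi0 k g).toMonoidHom)
      = (MulAut.conj ((hompow b 2 hB) g)).toMonoidHom.comp (hompow a (2^(k+3)) hA) := by
    intro g
    rcases eps_cases g with h | h <;> subst h <;> apply MonoidHom.ext <;> intro x
    · show (hompow a (2^(k+3)) hA) (phi0 k (ofAdd 0) x)
        = MulAut.conj ((hompow b 2 hB) (ofAdd 0)) ((hompow a (2^(k+3)) hA) x)
      rw [phi0_zero]
      have hb0 : (hompow b 2 hB) (ofAdd (0 : ZMod 2)) = 1 := by
        show b ^ (0 : ZMod 2).val = 1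
        rw [ZMod.val_zero, pow_zero]
      rw [hb0, map_one]
      rfl
    · show (hompow a (2^(k+3)) hA) (phi0 k (ofAdd 1) x)
        = MulAut.conj ((hompow b 2 hB) (ofAdd 1)) ((hompow a (2^(k+3)) hA) x)
      have hb1 : (hompow b 2 hB) (ofAdd (1 : ZMod 2)) = b := by
        show b ^ (1 : ZMod 2).val = b
        rw [zmod2_val_one, pow_one]
      have hphi : phi0 k (ofAdd 1) x = ofAdd (R k * x.toAdd) := by
        rw [phi0_eq, Rconj_pow_apply, toAdd_ofAdd, zmod2_val_one, pow_one]
      rw [hb1, hphi, MulAut.conj_apply]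
      have hconj : ∀ (t : ℕ), b * a ^ t * b⁻¹ = a ^ ((2^(k+2) - 1) * t) := by
        intro t
        calc b * a^t * b⁻¹ = (MulAut.conj b) (a^t) := rfl
        _ = ((MulAut.conj b) a)^t := map_pow _ _ _
        _ = (a ^ (2^(k+2)-1))^t := by rw [MulAut.conj_apply, hrel]
        _ = a ^ ((2^(k+2)-1) * t) := by rw [← pow_mul]
      have hRx : R k * x.toAdd = (((2^(k+2)-1) * (x.toAdd).val : ℕ) : ZMod (2^(k+3))) := by
        rw [Nat.cast_mul, ZMod.natCast_zmod_val]
        rfl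
      show a ^ (R k * x.toAdd).val = b * a ^ (x.toAdd).val * b⁻¹
      rw [hconj, hRx, pow_val_natCast hA]
  set π := SemidirectProduct.lift (hompow a (2^(k+3)) hA) (hompow b 2 hB) hcond with hπ
  have hπa : π (aS k) = a := by
    show π (inl (ofAdd 1)) = a
    rw [lift_inl]
    show a ^ (1 : ZMod (2^(k+3))).val = a
    rw [ZMod.val_one_eq_one_mod, Nat.mod_eq_of_lt (by
      have : (2:ℕ)^1 ≤ 2^(k+3) := Nat.pow_le_pow_right (by norm_num) (by omega)
      omega), pow_one]
  have hπb : π (bS k) = b := by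
    show π (inr (ofAdd 1)) = b
    rw [lift_inr]
    show b ^ (1 : ZMod 2).val = b
    rw [zmod2_val_one, pow_one]
  have hsurj : Function.Surjective π := by
    rw [← MonoidHom.range_eq_top, eq_top_iff, ← hgen, Subgroup.closure_le]
    rintro x hx
    rcases hx with rfl | hx
    · exact ⟨aS k, hπa⟩
    · rcases hx with rfl
      exact ⟨bS k, hπb⟩
  have hbnot : b ∉ Subgroup.zpowers a := by
    intro hmem
    obtain ⟨t, ht⟩ := hmem
    have hcomm : Commute a b := by rw [← ht]; exact (Commute.refl a).zpow_right t
    have hrel2 : a = a ^ (2^(k+2)-1) := by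
      rw [← hrel, ← hcomm.eq, mul_inv_cancel_right]
    have h2 : a ^ 1 = a ^ (2^(k+2)-1) := by rw [pow_one]; exact hrel2
    rw [pow_eq_pow_iff_modEq, ha] at h2
    have e1 : (2:ℕ)^2 ≤ 2^(k+2) := Nat.pow_le_pow_right (by norm_num) (by omega)
    have e2 : (2:ℕ)^(k+2) < 2^(k+3) := Nat.pow_lt_pow_right (by norm_num) (by omega)
    unfold Nat.ModEq at h2
    rw [Nat.mod_eq_of_lt (by omega), Nat.mod_eq_of_lt (by omega)] at h2
    omega
  have : Finite G := Finite.of_surjective π hsurj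
  have hsub : Nat.card (Subgroup.zpowers a) = 2^(k+3) := by rw [Nat.card_zpowers, ha]
  have hidx1 : (Subgroup.zpowers a).index ≠ 1 := by
    intro h1
    exact hbnot (by rw [Subgroup.index_eq_one.mp h1]; exact Subgroup.mem_top b)
  have hidx0 : (Subgroup.zpowers a).index ≠ 0 := Subgroup.index_ne_zero_of_finite
  have hcardG : Nat.card G = 2^(k+3) * (Subgroup.zpowers a).index := by
    rw [← Subgroup.card_mul_index (Subgroup.zpowers a), hsub]
  have hge : 2^(k+4) ≤ Nat.card G := by
    have h2le : 2 ≤ (Subgroup.zpowers a).index := by omega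
    calc (2:ℕ)^(k+4) = 2^(k+3) * 2 := by ring
    _ ≤ 2^(k+3) * (Subgroup.zpowers a).index := Nat.mul_le_mul_left _ h2le
    _ = Nat.card G := hcardG.symm
  have hle : Nat.card G ≤ Nat.card (SD k) := Nat.card_le_card_of_surjective π hsurj
  have hcards : Nat.card (SD k) = Nat.card G := by
    rw [card_SD] at hle ⊢
    omega
  have hbij : Function.Bijective π := (Nat.bijective_iff_surjective_and_card π).mpr ⟨hsurj, hcards⟩
  refine ⟨MulEquiv.ofBijective π hbij, ?_, hπa, hπb⟩
  intro x
  show π (inl (ofAdd x)) = a ^ x.val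
  rw [lift_inl]
  rfl

end SD5

open SD5 Multiplicative SemidirectProduct in
/-- For `ℓ ≥ 3`, the automorphism group of the semidihedral group
`SD_{2^(ℓ+1)} = ⟨a, b | a^(2^ℓ) = b² = 1, a^b = a^(2^(ℓ-1)-1)⟩` has order
`2^(2ℓ-2)` and is isomorphic to `Z_{2^(ℓ-1)} ⋊ Aut(Z_{2^ℓ})`; explicitly every
automorphism sends `(a, b)` to `(a^i, a^j * b)` with `i` odd and `j` even. -/
theorem stmt_5 (ℓ : ℕ) (hℓ : 3 ≤ ℓ) (G : Type) [Group G] (a b : G)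
    (ha : orderOf a = 2 ^ ℓ) (hb : orderOf b = 2)
    (hrel : b * a * b⁻¹ = a ^ (2 ^ (ℓ - 1) - 1))
    (hgen : Subgroup.closure {a, b} = ⊤) :
    Nat.card (MulAut G) = 2 ^ (2 * ℓ - 2) ∧
    (∃ φ : MulAut (Multiplicative (ZMod (2 ^ ℓ))) →*
        MulAut (Multiplicative (ZMod (2 ^ (ℓ - 1)))),
      Nonempty (MulAut G ≃*
        SemidirectProduct (Multiplicative (ZMod (2 ^ (ℓ - 1))))
          (MulAut (Multiplicative (ZMod (2 ^ ℓ)))) φ)) ∧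
    (∀ g : MulAut G, ∃ i j : ℕ, Odd i ∧ Even j ∧ g a = a ^ i ∧ g b = a ^ j * b) := by
  obtain ⟨k, rfl⟩ : ∃ k, ℓ = k + 3 := ⟨ℓ - 3, by omega⟩
  obtain ⟨e, hinl, hea, heb⟩ := SD5.exists_iso k G a b ha hb hrel hgen
  let congrAut : MulAut (SD5.SD k) ≃* MulAut G := MulAut.congr e
  have cardEq : Nat.card (MulAut G) = 2^(2*k+4) := by
    rw [← Nat.card_congr congrAut.toEquiv, ← Nat.card_congr (SD5.autEquiv k).toEquiv,
      SD5.card_Gm]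
  refine ⟨?_, ?_, ?_⟩
  · rw [show 2*(k+3)-2 = 2*k+4 from by omega]
    exact cardEq
  · exact ⟨SD5.phiFinal k,
      ⟨(congrAut.symm.trans (SD5.autEquiv k).symm).trans (SD5.isoFinal k)⟩⟩
  · intro g
    set f := congrAut.symm g with hf
    obtain ⟨u, j, hfa, hfb, _⟩ := SD5.aut_classify k f
    have hae : e.symm a = SD5.aS k := by rw [← hea, MulEquiv.symm_apply_apply]
    have hbe : e.symm b = SD5.bS k := by rw [← heb, MulEquiv.symm_apply_apply]
    have hg : g = congrAut f := (MulEquiv.apply_symm_apply congrAut g).symm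
    have hga : g a = e (f (SD5.aS k)) := by
      rw [hg]
      show e (f (e.symm a)) = e (f (SD5.aS k))
      rw [hae]
    have hgb : g b = e (f (SD5.bS k)) := by
      rw [hg]
      show e (f (e.symm b)) = e (f (SD5.bS k))
      rw [hbe]
    refine ⟨((u : ZMod (2^(k+3)))).val, (SD5.Jmap k j).val, ?_, ?_, ?_, ?_⟩
    · have hcop := ZMod.val_coe_unit_coprime u
      have h2 : Nat.Coprime ((u : ZMod (2^(k+3)))).val 2 :=
        Nat.Coprime.coprime_dvd_right (dvd_pow_self 2 (by omega)) hcop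
      exact Nat.coprime_two_right.mp h2
    · have hv : (SD5.Jmap k j).val = (2 * j.val) % 2^(k+3) := ZMod.val_natCast _ _
      have hdvd : 2 ∣ (2 * j.val) % 2^(k+3) :=
        (Nat.dvd_mod_iff ⟨2^(k+2), by ring⟩).mpr ⟨j.val, rfl⟩
      obtain ⟨c, hc⟩ := hdvd
      exact ⟨c, by omega⟩
    · rw [hga, hfa]
      exact hinl _
    · rw [hgb, hfb]
      have hsplit : (⟨ofAdd (SD5.Jmap k j), ofAdd 1⟩ : SD5.SD k)
          = inl (ofAdd (SD5.Jmap k j)) * SD5.bS k :=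
        mk_eq_inl_mul_inr (ofAdd 1) (ofAdd (SD5.Jmap k j))
      rw [hsplit, map_mul, hinl, heb]
end

section
/- The central product G = Q_{2^{ℓ+1}} ∘ Z_4 (ℓ ≥ 2) cannot be generated by two elements, and its involutions are exactly a^{2^{ℓ-1}}, a^{2^{ℓ-2}} d^{±1}, and a^i c d for 0 ≤ i < 2^ℓ. -/
/-- The central product `Q_{2^(ℓ+1)} ∘ Z_4` (for `ℓ ≥ 2`): the quotient of
`Q_{2^(ℓ+1)} × Z_4` identifying the central involution `a^(2^(ℓ-1)) = c²` of the
generalized quaternion group with the involution `d²` of `Z_4 = ⟨d⟩`. -/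
abbrev QZ4 (ℓ : ℕ) :=
  (QuaternionGroup (2 ^ (ℓ - 1)) × Multiplicative (ZMod 4)) ⧸
    Subgroup.normalClosure
      {(QuaternionGroup.a ((2 ^ (ℓ - 1) : ℕ) : ZMod (2 * 2 ^ (ℓ - 1))),
        Multiplicative.ofAdd (2 : ZMod 4))}

/-- The image `a` in `Q_{2^(ℓ+1)} ∘ Z_4` of the generator of order `2^ℓ` of the
quaternion factor. -/
def QZ4.aa (ℓ : ℕ) : QZ4 ℓ := QuotientGroup.mk (QuaternionGroup.a 1, 1)

/-- The image `c` in `Q_{2^(ℓ+1)} ∘ Z_4` of the second generator of the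
quaternion factor. -/
def QZ4.cc (ℓ : ℕ) : QZ4 ℓ := QuotientGroup.mk (QuaternionGroup.xa 0, 1)

/-- The image `d` in `Q_{2^(ℓ+1)} ∘ Z_4` of the generator of the `Z_4` factor. -/
def QZ4.dd (ℓ : ℕ) : QZ4 ℓ := QuotientGroup.mk (1, Multiplicative.ofAdd (1 : ZMod 4))

open QuaternionGroup Multiplicative Subgroup

namespace Stmt11

abbrev Q (k : ℕ) := QuaternionGroup (2 ^ (k + 1))
abbrev P (k : ℕ) := Q k × Multiplicative (ZMod 4)

abbrev z (k : ℕ) : P k :=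
  (a ((2 ^ (k + 1) : ℕ) : ZMod (2 * 2 ^ (k + 1))), ofAdd (2 : ZMod 4))

variable (k : ℕ)

local instance : NeZero (2 * 2 ^ (k + 1)) := ⟨by positivity⟩

abbrev nn : ZMod (2 * 2 ^ (k + 1)) := ((2 ^ (k + 1) : ℕ) : ZMod (2 * 2 ^ (k + 1)))
abbrev mm : ZMod (2 * 2 ^ (k + 1)) := ((2 ^ k : ℕ) : ZMod (2 * 2 ^ (k + 1)))

lemma nn_add_nn : nn k + nn k = 0 := by
  have : ((2 * 2 ^ (k + 1) : ℕ) : ZMod (2 * 2 ^ (k + 1))) = 0 := ZMod.natCast_self _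
  rw [← this]; push_cast; ring

lemma nn_ne_zero : nn k ≠ 0 := by
  rw [Ne, ZMod.natCast_eq_zero_iff]
  intro h
  have := Nat.le_of_dvd (by positivity) h
  have h1 : 0 < 2 ^ (k + 1) := by positivity
  omega

lemma mm_add_mm : mm k + mm k = nn k := by
  have : ((2 ^ k : ℕ) : ZMod (2 * 2 ^ (k + 1))) + ((2 ^ k : ℕ)) = ((2 ^ k + 2 ^ k : ℕ)) := by
    push_cast; ring
  rw [Stmt11.mm, this]
  congr 1
  rw [pow_succ]; ring

lemma solveA (i : ZMod (2 * 2 ^ (k + 1))) : i + i = 0 ↔ i = 0 ∨ i = nn k := by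
  constructor
  · intro h
    have hv : (i + i).val = 0 := by rw [h, ZMod.val_zero]
    rw [ZMod.val_add] at hv
    have hlt := ZMod.val_lt i
    have hd : 2 * 2 ^ (k + 1) ∣ 2 * i.val := by
      have : 2 * i.val = i.val + i.val := by ring
      rw [this]; exact Nat.dvd_of_mod_eq_zero hv
    obtain ⟨t, ht⟩ := (Nat.dvd_of_mul_dvd_mul_left (by norm_num) hd : 2 ^ (k + 1) ∣ i.val)
    have hK : 0 < 2 ^ (k + 1) := by positivity
    have ht2 : t < 2 := by nlinarith
    have : i.val = 0 ∨ i.val = 2 ^ (k + 1) := by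
      interval_cases t <;> omega
    rcases this with h0 | h1
    · left; exact (ZMod.val_eq_zero i).mp h0
    · right
      apply ZMod.val_injective
      rw [h1, ZMod.val_cast_of_lt]
      omega
  · rintro (rfl | rfl)
    · simp
    · exact nn_add_nn k

lemma solveB (i : ZMod (2 * 2 ^ (k + 1))) :
    i + i = nn k ↔ i = mm k ∨ i = mm k + nn k := by
  have h := solveA k (i - mm k)
  constructor
  · intro hi
    have h0 : (i - mm k) + (i - mm k) = 0 := by
      linear_combination hi - mm_add_mm k
    rcases h.mp h0 with h1 | h1
    · left; linear_combination h1
    · right; linear_combination h1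
  · rintro (rfl | rfl)
    · exact mm_add_mm k
    · linear_combination mm_add_mm k + nn_add_nn k


lemma z_mul_z : z k * z k = 1 := by
  have h4 : ofAdd (2 : ZMod 4) * ofAdd (2 : ZMod 4) = 1 := by decide
  show (a (nn k) * a (nn k), ofAdd (2 : ZMod 4) * ofAdd (2 : ZMod 4)) = 1
  rw [a_mul_a, nn_add_nn, h4]
  rfl

lemma z_comm (g : P k) : g * z k = z k * g := by
  obtain ⟨(i | i), e⟩ := g <;> refine Prod.ext ?_ (mul_comm _ _)
  · show a i * a (nn k) = a (nn k) * a i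
    rw [a_mul_a, a_mul_a]
    exact congrArg a (add_comm _ _)
  · show xa i * a (nn k) = a (nn k) * xa i
    rw [xa_mul_a, a_mul_xa]
    congr 1
    linear_combination nn_add_nn k

instance : (zpowers (z k)).Normal := by
  constructor
  intro w hw g
  obtain ⟨m, rfl⟩ := hw
  have hc : Commute g (z k) := z_comm k g
  have : g * z k ^ m = z k ^ m * g := (hc.zpow_right m).eq
  rw [show g * z k ^ m * g⁻¹ = z k ^ m from by rw [this, mul_assoc, mul_inv_cancel, mul_one]]
  exact zpow_mem (mem_zpowers _) m

lemma N_eq : normalClosure {z k} = zpowers (z k) :=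
  le_antisymm (normalClosure_le_normal (by simp [Set.singleton_subset_iff, mem_zpowers]))
    (zpowers_le.mpr (subset_normalClosure rfl))

lemma mem_N (w : P k) : w ∈ normalClosure {z k} ↔ w = 1 ∨ w = z k := by
  rw [N_eq]
  constructor
  · rintro ⟨m, rfl⟩
    have hz2 : z k ^ (2 : ℤ) = 1 := by
      rw [show (2:ℤ) = 1 + 1 from rfl, zpow_add, zpow_one, z_mul_z]
    rcases Int.even_or_odd m with ⟨t, rfl⟩ | ⟨t, rfl⟩
    · left
      show z k ^ (t + t) = 1
      rw [show t + t = 2 * t from by ring, zpow_mul, hz2, one_zpow]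
    · right
      show z k ^ (2 * t + 1) = z k
      rw [zpow_add, zpow_mul, hz2, one_zpow, one_mul, zpow_one]
  · rintro (rfl | rfl)
    · exact one_mem _
    · exact mem_zpowers _

lemma mk_eq (p q : P k) :
    (QuotientGroup.mk p : P k ⧸ normalClosure {z k}) = QuotientGroup.mk q ↔
      q = p ∨ q = p * z k := by
  rw [QuotientGroup.eq, mem_N]
  constructor
  · rintro (h | h)
    · left; exact (inv_mul_eq_one.mp h).symm
    · right; rw [← h, mul_inv_cancel_left]
  · rintro (rfl | rfl)
    · left; simp
    · right; simp

lemma mk_eq_one (p : P k) :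
    (QuotientGroup.mk p : P k ⧸ normalClosure {z k}) = 1 ↔ p = 1 ∨ p = z k := by
  rw [QuotientGroup.eq_one_iff, mem_N]


abbrev Gq (k : ℕ) := P k ⧸ normalClosure {z k}

abbrev Aa : Gq k := QuotientGroup.mk (a 1, 1)
abbrev Cc : Gq k := QuotientGroup.mk (xa 0, 1)
abbrev Dd : Gq k := QuotientGroup.mk (1, ofAdd (1 : ZMod 4))

lemma prod_pow (g : Q k) (e : Multiplicative (ZMod 4)) (t : ℕ) :
    (g, e) ^ t = (g ^ t, e ^ t) := by
  induction t with
  | zero => rfl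
  | succ m ih => simp [pow_succ, ih]

lemma Aa_pow (t : ℕ) :
    Aa k ^ t = QuotientGroup.mk (a ((t : ℕ) : ZMod (2 * 2 ^ (k + 1))), 1) := by
  rw [show Aa k = QuotientGroup.mk ((a 1 : Q k), (1 : Multiplicative (ZMod 4))) from rfl,
    ← QuotientGroup.mk_pow, prod_pow, a_one_pow, one_pow]

lemma AaDd : Aa k ^ 2 ^ k * Dd k = QuotientGroup.mk (a (mm k), ofAdd (1 : ZMod 4)) := by
  rw [Aa_pow, ← QuotientGroup.mk_mul, Prod.mk_mul_mk]
  exact congrArg _ (Prod.ext (mul_one _) (one_mul _))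

lemma AaDd' :
    Aa k ^ 2 ^ k * (Dd k)⁻¹ = QuotientGroup.mk (a (mm k), ofAdd (3 : ZMod 4)) := by
  have h1 : ((1 : Q k), ofAdd (1 : ZMod 4))⁻¹ = (1, ofAdd (3 : ZMod 4)) := by
    rw [Prod.inv_mk, inv_one]
    congr 1
  have h2 : (Dd k)⁻¹ = QuotientGroup.mk ((1 : Q k), ofAdd (3 : ZMod 4)) := by
    rw [show Dd k = (QuotientGroup.mk ((1 : Q k), ofAdd (1 : ZMod 4)) : Gq k) from rfl,
      ← QuotientGroup.mk_inv, h1]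
  rw [Aa_pow, h2, ← QuotientGroup.mk_mul, Prod.mk_mul_mk]
  exact congrArg _ (Prod.ext (mul_one _) (one_mul _))

lemma AaCcDd (t : ℕ) :
    Aa k ^ t * Cc k * Dd k =
      QuotientGroup.mk (xa (-((t : ℕ) : ZMod (2 * 2 ^ (k + 1)))), ofAdd (1 : ZMod 4)) := by
  rw [Aa_pow, ← QuotientGroup.mk_mul, ← QuotientGroup.mk_mul]
  refine congrArg _ (Prod.ext ?_ ?_)
  · show a ((t : ℕ) : ZMod (2 * 2 ^ (k + 1))) * xa 0 * 1 = _
    rw [mul_one, a_mul_xa, zero_sub]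
  · show 1 * 1 * ofAdd (1 : ZMod 4) = ofAdd (1 : ZMod 4)
    rw [one_mul, one_mul]


lemma ne_one_AaDd (eps : ZMod 4) (h1 : eps ≠ 0) (h2 : eps ≠ 2) (g : Q k) :
    (QuotientGroup.mk (g, ofAdd eps) : Gq k) ≠ 1 := by
  intro h
  rw [mk_eq_one] at h
  rcases h with h | h
  · have := (Prod.ext_iff.mp h).2
    exact h1 (by simpa using this)
  · have := (Prod.ext_iff.mp h).2
    exact h2 (by simpa using this)

lemma back1 : (Aa k ^ 2 ^ (k + 1) : Gq k) ≠ 1 ∧ Aa k ^ 2 ^ (k + 1) * Aa k ^ 2 ^ (k + 1) = 1 := by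
  rw [Aa_pow]
  constructor
  · intro h
    rw [mk_eq_one] at h
    rcases h with h | h
    · have h1 : a (nn k) = (1 : Q k) := (Prod.ext_iff.mp h).1
      rw [one_def] at h1
      have : nn k = 0 := by injection h1
      exact nn_ne_zero k this
    · have h2 : (1 : Multiplicative (ZMod 4)) = ofAdd (2 : ZMod 4) := (Prod.ext_iff.mp h).2
      exact absurd h2 (by decide)
  · rw [← QuotientGroup.mk_mul, Prod.mk_mul_mk, a_mul_a, nn_add_nn, mk_eq_one]
    left
    exact Prod.ext one_def.symm (one_mul 1)

lemma back2 : (Aa k ^ 2 ^ k * Dd k : Gq k) ≠ 1 ∧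
    (Aa k ^ 2 ^ k * Dd k) * (Aa k ^ 2 ^ k * Dd k) = 1 := by
  rw [AaDd]
  refine ⟨ne_one_AaDd k 1 (by decide) (by decide) _, ?_⟩
  rw [← QuotientGroup.mk_mul, Prod.mk_mul_mk, a_mul_a, mm_add_mm, mk_eq_one]
  right
  refine Prod.ext rfl ?_
  show ofAdd (1 : ZMod 4) * ofAdd 1 = ofAdd 2
  decide

lemma back3 : (Aa k ^ 2 ^ k * (Dd k)⁻¹ : Gq k) ≠ 1 ∧
    (Aa k ^ 2 ^ k * (Dd k)⁻¹) * (Aa k ^ 2 ^ k * (Dd k)⁻¹) = 1 := by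
  rw [AaDd']
  refine ⟨ne_one_AaDd k 3 (by decide) (by decide) _, ?_⟩
  rw [← QuotientGroup.mk_mul, Prod.mk_mul_mk, a_mul_a, mm_add_mm, mk_eq_one]
  right
  refine Prod.ext rfl ?_
  show ofAdd (3 : ZMod 4) * ofAdd 3 = ofAdd 2
  decide

lemma back4 (t : ℕ) : (Aa k ^ t * Cc k * Dd k : Gq k) ≠ 1 ∧
    (Aa k ^ t * Cc k * Dd k) * (Aa k ^ t * Cc k * Dd k) = 1 := by
  rw [AaCcDd]
  constructor
  · intro h
    rw [mk_eq_one] at h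
    rcases h with h | h
    · have h1 : xa (-((t : ℕ) : ZMod (2 * 2 ^ (k + 1)))) = (1 : Q k) := (Prod.ext_iff.mp h).1
      rw [one_def] at h1
      exact absurd h1 (by simp [-a_zero])
    · have h1 : xa (-((t : ℕ) : ZMod (2 * 2 ^ (k + 1)))) = a (nn k) := (Prod.ext_iff.mp h).1
      exact absurd h1 (by simp)
  · rw [← QuotientGroup.mk_mul, Prod.mk_mul_mk, xa_mul_xa, add_sub_cancel_right, mk_eq_one]
    right
    refine Prod.ext rfl ?_
    show ofAdd (1 : ZMod 4) * ofAdd 1 = ofAdd 2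
    decide

lemma involutions (x : Gq k) :
    (x ≠ 1 ∧ x * x = 1) ↔
      (x = Aa k ^ 2 ^ (k + 1) ∨
       x = Aa k ^ 2 ^ k * Dd k ∨
       x = Aa k ^ 2 ^ k * (Dd k)⁻¹ ∨
       ∃ i : ℕ, i < 2 ^ (k + 2) ∧ x = Aa k ^ i * Cc k * Dd k) := by
  have e_sq1 : ∀ e : Multiplicative (ZMod 4), e * e = 1 ↔ e = 1 ∨ e = ofAdd 2 := by decide
  have e_sq2 : ∀ e : Multiplicative (ZMod 4), e * e = ofAdd 2 ↔ e = ofAdd 1 ∨ e = ofAdd 3 := by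
    decide
  have hpow : (2 : ℕ) ^ (k + 2) = 2 * 2 ^ (k + 1) := by ring
  constructor
  · rintro ⟨hne, hsq⟩
    induction x using QuotientGroup.induction_on with
    | H p =>
    obtain ⟨g, e⟩ := p
    rcases g with i | i
    · rw [← QuotientGroup.mk_mul, Prod.mk_mul_mk, a_mul_a, mk_eq_one] at hsq
      rcases hsq with h | h
      · have h1 : a (i + i) = (1 : Q k) := (Prod.ext_iff.mp h).1
        have h2 : e * e = 1 := (Prod.ext_iff.mp h).2
        rw [one_def] at h1
        have hi : i + i = 0 := by injection h1
        rcases (solveA k i).mp hi with rfl | rfl <;> rcases (e_sq1 e).mp h2 with rfl | rfl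
        · exact absurd ((mk_eq_one k _).mpr (Or.inl (Prod.ext one_def.symm rfl))) hne
        · left
          rw [Aa_pow, mk_eq]
          right
          refine Prod.ext ?_ ?_
          · show a ((2 ^ (k + 1) : ℕ) : ZMod (2 * 2 ^ (k + 1))) = a 0 * a (nn k)
            rw [a_mul_a, zero_add]
          · show (1 : Multiplicative (ZMod 4)) = ofAdd 2 * ofAdd 2
            decide
        · left
          rw [Aa_pow]
        · exact absurd ((mk_eq_one k _).mpr (Or.inr rfl)) hne
      · have h1 : a (i + i) = a (nn k) := (Prod.ext_iff.mp h).1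
        have h2 : e * e = ofAdd 2 := (Prod.ext_iff.mp h).2
        have hi : i + i = nn k := by injection h1
        rcases (solveB k i).mp hi with rfl | rfl <;> rcases (e_sq2 e).mp h2 with rfl | rfl
        · right; left
          rw [AaDd]
        · right; right; left
          rw [AaDd']
        · right; right; left
          rw [AaDd', mk_eq]
          right
          refine Prod.ext ?_ ?_
          · show a (mm k) = a (mm k + nn k) * a (nn k)
            rw [a_mul_a, add_assoc, nn_add_nn, add_zero]
          · show ofAdd (3 : ZMod 4) = ofAdd 1 * ofAdd 2
            decide
        · right; left
          rw [AaDd, mk_eq]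
          right
          refine Prod.ext ?_ ?_
          · show a (mm k) = a (mm k + nn k) * a (nn k)
            rw [a_mul_a, add_assoc, nn_add_nn, add_zero]
          · show ofAdd (1 : ZMod 4) = ofAdd 3 * ofAdd 2
            decide
    · rw [← QuotientGroup.mk_mul, Prod.mk_mul_mk, xa_mul_xa, add_sub_cancel_right,
        mk_eq_one] at hsq
      rcases hsq with h | h
      · have h1 : a (nn k) = (1 : Q k) := (Prod.ext_iff.mp h).1
        rw [one_def] at h1
        have : nn k = 0 := by injection h1
        exact absurd this (nn_ne_zero k)
      · have h2 : e * e = ofAdd 2 := (Prod.ext_iff.mp h).2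
        rcases (e_sq2 e).mp h2 with rfl | rfl
        · right; right; right
          refine ⟨(-i).val, ?_, ?_⟩
          · have := ZMod.val_lt (-i)
            omega
          · rw [AaCcDd]
            have hv : (((-i).val : ℕ) : ZMod (2 * 2 ^ (k + 1))) = -i := by
              rw [ZMod.natCast_val, ZMod.cast_id]
            rw [hv, neg_neg]
        · right; right; right
          refine ⟨(-(i + nn k)).val, ?_, ?_⟩
          · have := ZMod.val_lt (-(i + nn k))
            omega
          · rw [AaCcDd]
            have hv : (((-(i + nn k)).val : ℕ) : ZMod (2 * 2 ^ (k + 1))) = -(i + nn k) := by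
              rw [ZMod.natCast_val, ZMod.cast_id]
            rw [hv, neg_neg, mk_eq]
            right
            refine Prod.ext ?_ ?_
            · show xa (i + nn k) = xa i * a (nn k)
              rw [xa_mul_a]
            · show ofAdd (1 : ZMod 4) = ofAdd 3 * ofAdd 2
              decide
  · rintro (rfl | rfl | rfl | ⟨t, ht, rfl⟩)
    · exact back1 k
    · exact back2 k
    · exact back3 k
    · exact back4 k t


abbrev V := Multiplicative (ZMod 2 × ZMod 2 × ZMod 2)

def q1 {k : ℕ} : Q k → ZMod 2
  | a i => ZMod.castHom (dvd_mul_right 2 _) (ZMod 2) i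
  | xa i => ZMod.castHom (dvd_mul_right 2 _) (ZMod 2) i

def q2 {k : ℕ} : Q k → ZMod 2
  | a _ => 0
  | xa _ => 1

def phiFun {k : ℕ} (p : P k) : V :=
  ofAdd (q1 p.1, q2 p.1, ZMod.castHom (by norm_num : (2 : ℕ) ∣ 4) (ZMod 2) p.2.toAdd)

lemma cast_nn : (ZMod.castHom (dvd_mul_right 2 (2 ^ (k + 1))) (ZMod 2)) (nn k) = 0 := by
  rw [map_natCast, ZMod.natCast_eq_zero_iff]
  exact dvd_pow_self 2 (Nat.succ_ne_zero k)

def phi (k : ℕ) : P k →* V :=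
  MonoidHom.mk' phiFun (by
    have hsub : ∀ x y : ZMod 2, x - y = y + x := by decide
    have hz : ∀ x y : ZMod 2, 0 + y - x = x + y := by decide
    rintro ⟨(i | i), e⟩ ⟨(j | j), e'⟩ <;>
      simp only [Prod.mk_mul_mk, a_mul_a, a_mul_xa, xa_mul_a, xa_mul_xa, phiFun, q1, q2,
        ← ofAdd_add, Prod.mk_add_mk, toAdd_mul, map_add, map_sub] <;>
      refine congrArg ofAdd ?_ <;>
      simp only [Prod.mk.injEq] <;>
      refine ⟨?_, ?_, trivial⟩ <;>
      first
        | rfl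
        | decide
        | exact hsub _ _
        | (rw [cast_nn]; exact hz _ _))

lemma phi_z : phi k (z k) = 1 := by
  show ofAdd ((ZMod.castHom (dvd_mul_right 2 (2 ^ (k + 1))) (ZMod 2)) (nn k), (0 : ZMod 2),
    (ZMod.castHom (by norm_num : (2 : ℕ) ∣ 4) (ZMod 2)) (2 : ZMod 4)) = 1
  rw [cast_nn]
  decide

def Phi (k : ℕ) : Gq k →* V :=
  QuotientGroup.lift _ (phi k) (by
    intro w hw
    rcases (mem_N k w).mp hw with rfl | rfl
    · exact map_one _
    · exact phi_z k)

lemma Phi_surj : Function.Surjective (Phi k) := by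
  have hy2 : ∀ t : ZMod 2, t = 0 ∨ t = 1 := by decide
  intro v
  obtain ⟨⟨x, yy, w⟩, rfl⟩ : ∃ t, v = ofAdd t := ⟨toAdd v, rfl⟩
  rcases hy2 yy with rfl | rfl
  · refine ⟨QuotientGroup.mk (a ((x.val : ℕ) : ZMod (2 * 2 ^ (k + 1))),
      ofAdd ((w.val : ℕ) : ZMod 4)), ?_⟩
    refine congrArg ofAdd (Prod.ext ?_ (Prod.ext rfl ?_))
    · show (ZMod.castHom (dvd_mul_right 2 (2 ^ (k + 1))) (ZMod 2))
        ((x.val : ℕ) : ZMod (2 * 2 ^ (k + 1))) = x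
      rw [map_natCast, ZMod.natCast_val, ZMod.cast_id]
    · show (ZMod.castHom (by norm_num : (2 : ℕ) ∣ 4) (ZMod 2)) ((w.val : ℕ) : ZMod 4) = w
      rw [map_natCast, ZMod.natCast_val, ZMod.cast_id]
  · refine ⟨QuotientGroup.mk (xa ((x.val : ℕ) : ZMod (2 * 2 ^ (k + 1))),
      ofAdd ((w.val : ℕ) : ZMod 4)), ?_⟩
    refine congrArg ofAdd (Prod.ext ?_ (Prod.ext rfl ?_))
    · show (ZMod.castHom (dvd_mul_right 2 (2 ^ (k + 1))) (ZMod 2))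
        ((x.val : ℕ) : ZMod (2 * 2 ^ (k + 1))) = x
      rw [map_natCast, ZMod.natCast_val, ZMod.cast_id]
    · show (ZMod.castHom (by norm_num : (2 : ℕ) ∣ 4) (ZMod 2)) ((w.val : ℕ) : ZMod 4) = w
      rw [map_natCast, ZMod.natCast_val, ZMod.cast_id]

set_option synthInstance.maxSize 2000 in
set_option synthInstance.maxHeartbeats 1000000 in
lemma hprod : ∀ u v t s : V, (t = 1 ∨ t = u ∨ t = v ∨ t = u * v) →
      (s = 1 ∨ s = u ∨ s = v ∨ s = u * v) →
      (t * s = 1 ∨ t * s = u ∨ t * s = v ∨ t * s = u * v) := by decide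

lemma hbad : ∀ u v : V, ∃ t : V, ¬(t = 1 ∨ t = u ∨ t = v ∨ t = u * v) := by decide

lemma not_two_gen : ¬∃ x y : Gq k, Subgroup.closure {x, y} = ⊤ := by
  rintro ⟨x, y, hxy⟩
  have hsurj := Phi_surj k
  have htop : Subgroup.closure {Phi k x, Phi k y} = (⊤ : Subgroup V) := by
    have h1 := congrArg (Subgroup.map (Phi k)) hxy
    rw [MonoidHom.map_closure, Set.image_insert_eq, Set.image_singleton,
      ← MonoidHom.range_eq_map, MonoidHom.range_eq_top_of_surjective _ hsurj] at h1
    exact h1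
  have hinv : ∀ t : V, t⁻¹ = t := by decide
  obtain ⟨t, ht⟩ := hbad (Phi k x) (Phi k y)
  apply ht
  have htmem : t ∈ Subgroup.closure {Phi k x, Phi k y} := htop ▸ Subgroup.mem_top t
  refine Subgroup.closure_induction
    (p := fun s _ => s = 1 ∨ s = Phi k x ∨ s = Phi k y ∨ s = Phi k x * Phi k y)
    ?_ (Or.inl rfl) (fun a b _ _ ha hb => hprod _ _ _ _ ha hb) ?_ htmem
  · rintro s (rfl | rfl)
    · exact Or.inr (Or.inl rfl)
    · exact Or.inr (Or.inr (Or.inl rfl))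
  · intro a _ ha
    rw [hinv a]
    exact ha

end Stmt11



/-- The central product `G = Q_{2^(ℓ+1)} ∘ Z_4` (`ℓ ≥ 2`)
cannot be generated by two elements, and its involutions are exactly
`a^(2^(ℓ-1))`, `a^(2^(ℓ-2)) * d^(±1)`, and `a^i * c * d` for `0 ≤ i < 2^ℓ`. -/
theorem stmt_11 (ℓ : ℕ) (hℓ : 2 ≤ ℓ) :
    (¬∃ x y : QZ4 ℓ, Subgroup.closure {x, y} = ⊤) ∧
    (∀ x : QZ4 ℓ, (x ≠ 1 ∧ x * x = 1) ↔
      (x = QZ4.aa ℓ ^ 2 ^ (ℓ - 1) ∨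
       x = QZ4.aa ℓ ^ 2 ^ (ℓ - 2) * QZ4.dd ℓ ∨
       x = QZ4.aa ℓ ^ 2 ^ (ℓ - 2) * (QZ4.dd ℓ)⁻¹ ∨
       ∃ i : ℕ, i < 2 ^ ℓ ∧ x = QZ4.aa ℓ ^ i * QZ4.cc ℓ * QZ4.dd ℓ)) := by
  obtain ⟨k, rfl⟩ : ∃ k, ℓ = k + 2 := ⟨ℓ - 2, by omega⟩
  exact ⟨Stmt11.not_two_gen k, Stmt11.involutions k⟩
end

section
/- For ℓ ≥ 3, in G = Q_{2^{ℓ+1}} ∘ Z_4, the subgroup ⟨a,c⟩ ≅ Q_{2^{ℓ+1}} is the unique subgroup of G isomorphic to Q_{2^{ℓ+1}}, hence is characteristic; consequently Aut(G) ≅ Aut(Q_{2^{ℓ+1}}) × Z_2, where the Z_2 factor is generated by the automorphism fixing a, c and inverting d. -/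
set_option linter.unusedSectionVars false
open QuaternionGroup Subgroup

section ZModLemmas
variable {n : ℕ} [NeZero n]

lemma zmod_n_ne_zero : ((n : ℕ) : ZMod (2 * n)) ≠ 0 := by
  rw [Ne, ZMod.natCast_eq_zero_iff]
  intro h
  have h2 := Nat.le_of_dvd (NeZero.pos n) h
  have := NeZero.pos n
  omega

lemma zmod_add_self_eq_zero {i : ZMod (2 * n)} (h : i + i = 0) :
    i = 0 ∨ i = ((n : ℕ) : ZMod (2 * n)) := by
  have h2 : ((i.val + i.val : ℕ) : ZMod (2 * n)) = 0 := by
    push_cast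
    rw [ZMod.natCast_val, ZMod.cast_id, h]
  rw [ZMod.natCast_eq_zero_iff] at h2
  have hlt : i.val < 2 * n := ZMod.val_lt i
  obtain ⟨c, hc⟩ := h2
  have hc2 : c = 0 ∨ c = 1 := by
    by_contra hge
    have h3 : 2 ≤ c := by omega
    have : 2 * n * 2 ≤ 2 * n * c := Nat.mul_le_mul_left _ h3
    omega
  rcases hc2 with rfl | rfl
  · left
    have : i.val = 0 := by omega
    rw [← ZMod.natCast_zmod_val i, this, Nat.cast_zero]
  · right
    have : i.val = n := by omega
    rw [← ZMod.natCast_zmod_val i, this]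

omit [NeZero n] in
lemma zmod_two_ne_zero (hn : 2 ≤ n) : ((2 : ℕ) : ZMod (2 * n)) ≠ 0 := by
  rw [Ne, ZMod.natCast_eq_zero_iff]
  intro h
  have := Nat.le_of_dvd (by omega) h
  omega

end ZModLemmas
section QuatLemmas
variable {n : ℕ} [NeZero n]

lemma quat_n_add_n : ((n : ℕ) : ZMod (2 * n)) + ((n : ℕ) : ZMod (2 * n)) = 0 := by
  rw [← Nat.cast_add, ← two_mul, ZMod.natCast_self]

lemma quat_central (g : QuaternionGroup n) :
    a ((n : ℕ) : ZMod (2 * n)) * g = g * a ((n : ℕ) : ZMod (2 * n)) := by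
  rcases g with i | i
  · rw [a_mul_a, a_mul_a, add_comm]
  · rw [a_mul_xa, xa_mul_a]
    congr 1
    have := quat_n_add_n (n := n)
    rw [sub_eq_iff_eq_add]
    linear_combination -this

lemma quat_an_sq : (a ((n : ℕ) : ZMod (2 * n)) : QuaternionGroup n) *
    a ((n : ℕ) : ZMod (2 * n)) = 1 := by
  rw [a_mul_a, quat_n_add_n, one_def]

lemma quat_an_ne_one : (a ((n : ℕ) : ZMod (2 * n)) : QuaternionGroup n) ≠ 1 := by
  rw [one_def, Ne, a.injEq]
  exact zmod_n_ne_zero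

lemma quat_mem_closure (g : QuaternionGroup n) :
    g ∈ Subgroup.closure {(a 1 : QuaternionGroup n), xa 0} := by
  have ha : ∀ i : ZMod (2 * n), a i ∈ Subgroup.closure {(a 1 : QuaternionGroup n), xa 0} := by
    intro i
    have : (a 1 : QuaternionGroup n) ^ i.val = a i := by
      rw [a_one_pow, ZMod.natCast_zmod_val]
    exact this ▸ pow_mem (Subgroup.subset_closure (by simp)) _
  rcases g with i | i
  · exact ha i
  · have : (a (-i) : QuaternionGroup n) * xa 0 = xa i := by
      rw [a_mul_xa, zero_sub, neg_neg]
    exact this ▸ mul_mem (ha (-i)) (Subgroup.subset_closure (by simp))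

lemma quat_closure_top :
    Subgroup.closure {(a 1 : QuaternionGroup n), xa 0} = ⊤ :=
  top_le_iff.mp fun g _ => quat_mem_closure g

lemma quat_invol {x : QuaternionGroup n} (h : x * x = 1) :
    x = 1 ∨ x = a ((n : ℕ) : ZMod (2 * n)) := by
  rcases x with i | i
  · rw [a_mul_a, one_def, a.injEq] at h
    rcases zmod_add_self_eq_zero h with h1 | h1
    · left; rw [h1, one_def]
    · right; rw [h1]
  · exfalso
    rw [xa_mul_xa, add_sub_cancel_right, one_def, a.injEq] at h
    exact zmod_n_ne_zero h

lemma quat_not_comm (hn : 2 ≤ n) :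
    (a 1 : QuaternionGroup n) * xa 0 ≠ xa 0 * a 1 := by
  rw [a_mul_xa, xa_mul_a, Ne, xa.injEq, zero_sub, zero_add]
  intro h
  apply zmod_two_ne_zero hn
  push_cast
  linear_combination -h

lemma quat_aut_fix (ψ : MulAut (QuaternionGroup n)) :
    ψ (a ((n : ℕ) : ZMod (2 * n))) = a ((n : ℕ) : ZMod (2 * n)) := by
  have h1 : ψ (a ((n : ℕ) : ZMod (2 * n))) * ψ (a ((n : ℕ) : ZMod (2 * n))) = 1 := by
    rw [← map_mul, quat_an_sq, map_one]
  rcases quat_invol h1 with h | h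
  · exact absurd (ψ.injective (h.trans (map_one ψ).symm)) quat_an_ne_one
  · exact h

end QuatLemmas
namespace Stmt12
open Multiplicative

variable (ℓ : ℕ)

instance : NeZero (2 ^ (ℓ - 1)) := ⟨pow_ne_zero _ two_ne_zero⟩

/-- the identified relator -/
def rr : QuaternionGroup (2 ^ (ℓ - 1)) × Multiplicative (ZMod 4) :=
  (QuaternionGroup.a ((2 ^ (ℓ - 1) : ℕ) : ZMod (2 * 2 ^ (ℓ - 1))),
    Multiplicative.ofAdd (2 : ZMod 4))

abbrev NN : Subgroup (QuaternionGroup (2 ^ (ℓ - 1)) × Multiplicative (ZMod 4)) :=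
  Subgroup.normalClosure {rr ℓ}

lemma rr_central (p : QuaternionGroup (2 ^ (ℓ - 1)) × Multiplicative (ZMod 4)) :
    rr ℓ * p = p * rr ℓ := by
  rcases p with ⟨q, t⟩
  rw [rr, Prod.mk_mul_mk, Prod.mk_mul_mk, Prod.mk.injEq]
  exact ⟨quat_central q, mul_comm _ t⟩

lemma rr_sq : rr ℓ * rr ℓ = 1 := by
  rw [rr, Prod.mk_mul_mk, quat_an_sq,
    show (ofAdd (2 : ZMod 4)) * ofAdd 2 = 1 by decide]
  rfl

lemma NN_eq : NN ℓ = Subgroup.zpowers (rr ℓ) := by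
  haveI hno : (Subgroup.zpowers (rr ℓ)).Normal := by
    constructor
    rintro x ⟨k, rfl⟩ g
    have hc : Commute (rr ℓ) g := rr_central ℓ g
    have h2 : g * rr ℓ ^ k * g⁻¹ = rr ℓ ^ k := by
      rw [← (hc.zpow_left k).eq, mul_assoc, mul_inv_cancel, mul_one]
    rw [h2]
    exact ⟨k, rfl⟩
  refine le_antisymm (Subgroup.normalClosure_le_normal ?_) ?_
  · simp [Subgroup.mem_zpowers]
  · exact Subgroup.zpowers_le.mpr (Subgroup.subset_normalClosure (Set.mem_singleton _))

lemma mem_NN_iff {p : QuaternionGroup (2 ^ (ℓ - 1)) × Multiplicative (ZMod 4)} :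
    p ∈ NN ℓ ↔ p = 1 ∨ p = rr ℓ := by
  rw [NN_eq]
  have h1 : rr ℓ ^ (2 : ℤ) = 1 := by rw [zpow_two, rr_sq]
  constructor
  · rintro ⟨k, rfl⟩
    rcases Int.even_or_odd k with ⟨c, rfl⟩ | ⟨c, rfl⟩
    · left
      show rr ℓ ^ (c + c) = 1
      rw [← two_mul, zpow_mul, h1, one_zpow]
    · right
      show rr ℓ ^ (2 * c + 1) = rr ℓ
      rw [zpow_add, zpow_mul, h1, one_zpow, one_mul, zpow_one]
  · rintro (rfl | rfl)
    exacts [one_mem _, Subgroup.mem_zpowers _]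

lemma mk_eq_mk_iff {p q : QuaternionGroup (2 ^ (ℓ - 1)) × Multiplicative (ZMod 4)} :
    (QuotientGroup.mk p : QZ4 ℓ) = QuotientGroup.mk q ↔ q = p ∨ q = p * rr ℓ := by
  rw [QuotientGroup.eq]
  exact Iff.trans (mem_NN_iff ℓ)
    (by rw [inv_mul_eq_one, inv_mul_eq_iff_eq_mul]; exact or_congr_left eq_comm)

/-- embedding of the quaternion factor -/
def ι : QuaternionGroup (2 ^ (ℓ - 1)) →* QZ4 ℓ :=
  (QuotientGroup.mk' (NN ℓ)).comp (MonoidHom.inl _ _)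

lemma ι_apply (q : QuaternionGroup (2 ^ (ℓ - 1))) :
    ι ℓ q = QuotientGroup.mk (q, 1) := rfl

lemma snd_ne_lemma : (1 : Multiplicative (ZMod 4)) ≠ 1 * ofAdd (2 : ZMod 4) := by decide

lemma ι_inj : Function.Injective (ι ℓ) := by
  intro x y h
  rw [ι_apply, ι_apply, mk_eq_mk_iff] at h
  rcases h with h | h
  · exact ((Prod.ext_iff.mp h).1).symm
  · exact absurd (Prod.ext_iff.mp h).2 (snd_ne_lemma)

abbrev KK : Subgroup (QZ4 ℓ) := Subgroup.closure {QZ4.aa ℓ, QZ4.cc ℓ}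

lemma K_eq_range : (ι ℓ).range = KK ℓ := by
  rw [MonoidHom.range_eq_map, ← quat_closure_top (n := 2 ^ (ℓ - 1)),
    MonoidHom.map_closure, Set.image_insert_eq, Set.image_singleton]
  rfl

/-- the isomorphism of the quaternion factor to `⟨a,c⟩` -/
noncomputable def e1 : QuaternionGroup (2 ^ (ℓ - 1)) ≃* KK ℓ :=
  (MonoidHom.ofInjective (ι_inj ℓ)).trans (MulEquiv.subgroupCongr (K_eq_range ℓ))

lemma e1_coe (q : QuaternionGroup (2 ^ (ℓ - 1))) : ((e1 ℓ q : KK ℓ) : QZ4 ℓ) = ι ℓ q := by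
  rw [e1]
  rfl

lemma mem_K_iff {q : QuaternionGroup (2 ^ (ℓ - 1))} {t : Multiplicative (ZMod 4)} :
    (QuotientGroup.mk (q, t) : QZ4 ℓ) ∈ KK ℓ ↔ t = 1 ∨ t = ofAdd (2 : ZMod 4) := by
  rw [← K_eq_range]
  constructor
  · rintro ⟨q', hq'⟩
    rw [ι_apply, mk_eq_mk_iff] at hq'
    rcases hq' with h | h
    · left; exact (Prod.ext_iff.mp h).2
    · right
      rw [rr] at h
      exact ((Prod.ext_iff.mp h).2).trans (one_mul _)
  · rintro (rfl | rfl)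
    · exact ⟨q, rfl⟩
    · refine ⟨q * (QuaternionGroup.a ((2 ^ (ℓ - 1) : ℕ) : ZMod (2 * 2 ^ (ℓ - 1))))⁻¹, ?_⟩
      rw [ι_apply, mk_eq_mk_iff]
      right
      rw [rr, Prod.mk_mul_mk, Prod.ext_iff]
      constructor
      · rw [inv_mul_cancel_right]
      · exact (one_mul _).symm
lemma card_Q : Nat.card (QuaternionGroup (2 ^ (ℓ - 1))) = 4 * 2 ^ (ℓ - 1) := by
  rw [Nat.card_eq_fintype_card, QuaternionGroup.card]

lemma rr_ne_one : rr ℓ ≠ 1 := by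
  intro h
  exact quat_an_ne_one (congrArg Prod.fst h)

lemma orderOf_rr : orderOf (rr ℓ) = 2 := by
  haveI : Fact (Nat.Prime 2) := ⟨Nat.prime_two⟩
  refine orderOf_eq_prime ?_ (rr_ne_one ℓ)
  rw [pow_two, rr_sq]

lemma card_NN : Nat.card (NN ℓ) = 2 := by
  rw [NN_eq, Nat.card_zpowers, orderOf_rr]

lemma card_P : Nat.card (QuaternionGroup (2 ^ (ℓ - 1)) × Multiplicative (ZMod 4)) =
    16 * 2 ^ (ℓ - 1) := by
  rw [Nat.card_prod, card_Q, Nat.card_eq_fintype_card]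
  rw [show Fintype.card (Multiplicative (ZMod 4)) = 4 from rfl]
  ring

lemma card_QZ4 : Nat.card (QZ4 ℓ) = 8 * 2 ^ (ℓ - 1) := by
  have h := Subgroup.card_eq_card_quotient_mul_card_subgroup (NN ℓ)
  rw [card_P, card_NN] at h
  have hq : Nat.card (QZ4 ℓ) = Nat.card ((QuaternionGroup (2 ^ (ℓ - 1)) ×
      Multiplicative (ZMod 4)) ⧸ NN ℓ) := rfl
  rw [hq]
  omega

lemma card_of_iso {H : Subgroup (QZ4 ℓ)} (e : H ≃* QuaternionGroup (2 ^ (ℓ - 1))) :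
    Nat.card H = 4 * 2 ^ (ℓ - 1) := by
  rw [Nat.card_congr e.toEquiv, card_Q]

lemma card_KK : Nat.card (KK ℓ) = 4 * 2 ^ (ℓ - 1) :=
  card_of_iso ℓ (e1 ℓ).symm

lemma index_of_iso {H : Subgroup (QZ4 ℓ)} (e : H ≃* QuaternionGroup (2 ^ (ℓ - 1))) :
    H.index = 2 := by
  have h := Subgroup.card_mul_index H
  rw [card_of_iso ℓ e, card_QZ4] at h
  have hn : 0 < 2 ^ (ℓ - 1) := Nat.pow_pos (by norm_num)
  refine Nat.eq_of_mul_eq_mul_left (show 0 < 4 * 2 ^ (ℓ - 1) by omega) ?_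
  rw [h]; ring
lemma z4_odd_sq : ∀ s : Multiplicative (ZMod 4), s ≠ 1 → s ≠ ofAdd (2 : ZMod 4) →
    s * s = ofAdd (2 : ZMod 4) := by decide

lemma z4_even_odd : ∀ s t : Multiplicative (ZMod 4), (s = 1 ∨ s = ofAdd (2 : ZMod 4)) →
    t ≠ 1 → t ≠ ofAdd (2 : ZMod 4) → s * t ≠ 1 ∧ s * t ≠ ofAdd (2 : ZMod 4) := by decide

/-- the central involution of the quaternion subgroup -/
def zG : QZ4 ℓ :=
  QuotientGroup.mk (QuaternionGroup.a ((2 ^ (ℓ - 1) : ℕ) : ZMod (2 * 2 ^ (ℓ - 1))), 1)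

lemma zG_mem_K : zG ℓ ∈ KK ℓ := (mem_K_iff ℓ).mpr (Or.inl rfl)

lemma zG_sq : zG ℓ * zG ℓ = 1 := by
  rw [zG, ← QuotientGroup.mk_mul, Prod.mk_mul_mk, quat_an_sq, mul_one]
  exact QuotientGroup.mk_one _

lemma zG_ne_one : zG ℓ ≠ 1 := by
  rw [zG, Ne, show (1 : QZ4 ℓ) = QuotientGroup.mk 1 from rfl, mk_eq_mk_iff]
  rintro (h | h)
  · exact quat_an_ne_one (congrArg Prod.fst h).symm
  · exact snd_ne_lemma (congrArg Prod.snd h)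

lemma cc_sq : QZ4.cc ℓ * QZ4.cc ℓ = zG ℓ := by
  rw [QZ4.cc, zG, ← QuotientGroup.mk_mul, Prod.mk_mul_mk, QuaternionGroup.xa_mul_xa,
    mul_one, add_sub_cancel_right]

section Uniq
variable {H : Subgroup (QZ4 ℓ)}

lemma invol_eq (e : H ≃* QuaternionGroup (2 ^ (ℓ - 1))) (x : QZ4 ℓ) (hx : x ∈ H)
    (hsq : x * x = 1) (hne : x ≠ 1) :
    e ⟨x, hx⟩ = QuaternionGroup.a ((2 ^ (ℓ - 1) : ℕ) : ZMod (2 * 2 ^ (ℓ - 1))) := by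
  have h1 : e ⟨x, hx⟩ * e ⟨x, hx⟩ = 1 := by
    rw [← map_mul]
    have h2 : (⟨x, hx⟩ * ⟨x, hx⟩ : H) = 1 := by
      ext
      exact hsq
    rw [h2, map_one]
  rcases quat_invol h1 with h | h
  · exact absurd (congrArg Subtype.val (e.injective (h.trans (map_one e).symm))) hne
  · exact h

lemma invol_unique (e : H ≃* QuaternionGroup (2 ^ (ℓ - 1))) {x y : QZ4 ℓ}
    (hx : x ∈ H) (hy : y ∈ H) (hx2 : x * x = 1)
    (hy2 : y * y = 1) (hx1 : x ≠ 1) (hy1 : y ≠ 1) : x = y := by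
  have h := (invol_eq ℓ e x hx hx2 hx1).trans (invol_eq ℓ e y hy hy2 hy1).symm
  exact congrArg Subtype.val (e.injective h)

lemma zG_mem (H2 : H.index = 2) : zG ℓ ∈ H := by
  rw [← cc_sq]
  exact Subgroup.mul_self_mem_of_index_two H2 _

lemma xa_mk_ne_one (k : ZMod (2 * 2 ^ (ℓ - 1))) (s : Multiplicative (ZMod 4)) :
    (QuotientGroup.mk (QuaternionGroup.xa k, s) : QZ4 ℓ) ≠ 1 := by
  rw [Ne, show (1 : QZ4 ℓ) = QuotientGroup.mk 1 from rfl, mk_eq_mk_iff]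
  rintro (h | h) <;>
    simp [rr, Prod.ext_iff, QuaternionGroup.one_def, Prod.mk_mul_mk, -QuaternionGroup.a_zero] at h

lemma no_xa_odd (e : H ≃* QuaternionGroup (2 ^ (ℓ - 1))) (H2 : H.index = 2)
    (k : ZMod (2 * 2 ^ (ℓ - 1)))
    (s : Multiplicative (ZMod 4)) (hs1 : s ≠ 1) (hs2 : s ≠ ofAdd (2 : ZMod 4)) :
    (QuotientGroup.mk (QuaternionGroup.xa k, s) : QZ4 ℓ) ∉ H := by
  intro hmem
  have hsq : (QuotientGroup.mk (QuaternionGroup.xa k, s) : QZ4 ℓ) *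
      QuotientGroup.mk (QuaternionGroup.xa k, s) = 1 := by
    rw [← QuotientGroup.mk_mul, Prod.mk_mul_mk, QuaternionGroup.xa_mul_xa,
      add_sub_cancel_right, z4_odd_sq s hs1 hs2]
    exact (QuotientGroup.eq_one_iff _).mpr ((mem_NN_iff ℓ).mpr (Or.inr rfl))
  have heq : (QuotientGroup.mk (QuaternionGroup.xa k, s) : QZ4 ℓ) = zG ℓ :=
    invol_unique ℓ e hmem (zG_mem ℓ H2) hsq (zG_sq ℓ) (xa_mk_ne_one ℓ k s) (zG_ne_one ℓ)
  rw [zG, mk_eq_mk_iff] at heq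
  rcases heq with h | h <;>
    simp [rr, Prod.ext_iff, Prod.mk_mul_mk] at h

lemma uniq_subgroup (e : H ≃* QuaternionGroup (2 ^ (ℓ - 1))) (hn2 : 2 ≤ 2 ^ (ℓ - 1)) :
    H = KK ℓ := by
  have H2 : H.index = 2 := index_of_iso ℓ e
  refine Subgroup.eq_of_le_of_card_ge ?_ ?_
  swap
  · rw [card_KK, card_of_iso ℓ e]
  intro g hg
  by_contra hgK
  obtain ⟨⟨q, t⟩, rfl⟩ := QuotientGroup.mk_surjective g
  have ht : t ≠ 1 ∧ t ≠ ofAdd (2 : ZMod 4) := by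
    constructor <;> intro h <;> exact hgK ((mem_K_iff ℓ).mpr (by tauto))
  rcases q with i | i
  swap
  · exact no_xa_odd ℓ e H2 i t ht.1 ht.2 hg
  by_cases hxa : ∃ k s, (QuotientGroup.mk (QuaternionGroup.xa k, s) : QZ4 ℓ) ∈ H
  · obtain ⟨k, s, hks⟩ := hxa
    have hs : s = 1 ∨ s = ofAdd (2 : ZMod 4) := by
      by_contra hcon
      push_neg at hcon
      exact no_xa_odd ℓ e H2 k s hcon.1 hcon.2 hks
    have hmul : (QuotientGroup.mk (QuaternionGroup.xa (k + i), s * t) : QZ4 ℓ) ∈ H := by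
      have h3 := mul_mem hks hg
      rwa [← QuotientGroup.mk_mul, Prod.mk_mul_mk, QuaternionGroup.xa_mul_a] at h3
    have hst := z4_even_odd s t hs ht.1 ht.2
    exact no_xa_odd ℓ e H2 (k + i) (s * t) hst.1 hst.2 hmul
  · push_neg at hxa
    have key : ∀ x : H, ∃ j u, (x : QZ4 ℓ) = QuotientGroup.mk (QuaternionGroup.a j, u) := by
      intro x
      obtain ⟨⟨qx, ux⟩, hx⟩ := QuotientGroup.mk_surjective (x : QZ4 ℓ)
      rcases qx with j | j
      · exact ⟨j, ux, hx.symm⟩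
      · exact absurd (hx ▸ x.2) (hxa j ux)
    obtain ⟨jA, uA, hA⟩ := key (e.symm (QuaternionGroup.a 1))
    obtain ⟨jX, uX, hX⟩ := key (e.symm (QuaternionGroup.xa 0))
    have hcomm : ((e.symm (QuaternionGroup.a 1) : H) : QZ4 ℓ) * (e.symm (QuaternionGroup.xa 0) : QZ4 ℓ) =
        ((e.symm (QuaternionGroup.xa 0) : H) : QZ4 ℓ) * (e.symm (QuaternionGroup.a 1) : QZ4 ℓ) := by
      rw [hA, hX, ← QuotientGroup.mk_mul, ← QuotientGroup.mk_mul, Prod.mk_mul_mk,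
        Prod.mk_mul_mk, QuaternionGroup.a_mul_a, QuaternionGroup.a_mul_a,
        add_comm jA jX, mul_comm uA uX]
    have hcomm2 : e.symm (QuaternionGroup.a 1) * e.symm (QuaternionGroup.xa 0) =
        e.symm (QuaternionGroup.xa 0) * e.symm (QuaternionGroup.a 1) := Subtype.ext hcomm
    have h5 := congrArg e hcomm2
    rw [map_mul, map_mul, MulEquiv.apply_symm_apply, MulEquiv.apply_symm_apply] at h5
    exact quat_not_comm hn2 h5
end Uniq
/-- inversion automorphism of `Z_4` -/
def invAut : MulAut (Multiplicative (ZMod 4)) := MulEquiv.inv (Multiplicative (ZMod 4))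

lemma invAut_apply (x : Multiplicative (ZMod 4)) : invAut x = x⁻¹ := rfl

lemma invAut_sq : invAut * invAut = 1 := by
  ext x
  rw [MulAut.mul_apply, invAut_apply, invAut_apply, inv_inv, MulAut.one_apply]

lemma invAut_pow_mod (k : ℕ) : invAut ^ (k % 2) = invAut ^ k := by
  conv_rhs => rw [← Nat.div_add_mod k 2]
  rw [pow_add, pow_mul, pow_two, invAut_sq, one_pow, one_mul]

lemma invAut_pow_ofAdd_two (k : ℕ) :
    (invAut ^ k) (ofAdd (2 : ZMod 4)) = ofAdd (2 : ZMod 4) := by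
  induction k with
  | zero => rfl
  | succ m ih => rw [pow_succ, MulAut.mul_apply, invAut_apply, show (ofAdd (2 : ZMod 4))⁻¹ =
      ofAdd (2 : ZMod 4) by decide, ih]

lemma map_NN (ψ : MulAut (QuaternionGroup (2 ^ (ℓ - 1)))) (k : ℕ) :
    Subgroup.map (MulEquiv.prodCongr ψ (invAut ^ k) :
      QuaternionGroup (2 ^ (ℓ - 1)) × Multiplicative (ZMod 4) ≃* _).toMonoidHom
      (NN ℓ) = NN ℓ := by
  rw [NN_eq, MonoidHom.map_zpowers]
  have h : (MulEquiv.prodCongr ψ (invAut ^ k)).toMonoidHom (rr ℓ) = rr ℓ := by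
    show (ψ (QuaternionGroup.a ((2 ^ (ℓ - 1) : ℕ) : ZMod (2 * 2 ^ (ℓ - 1)))),
        (invAut ^ k) (ofAdd (2 : ZMod 4))) = rr ℓ
    rw [quat_aut_fix, invAut_pow_ofAdd_two, rr]
  rw [h, ← NN_eq]

/-- descended automorphisms of the central product -/
def psiAux (ψ : MulAut (QuaternionGroup (2 ^ (ℓ - 1)))) (k : ℕ) : MulAut (QZ4 ℓ) :=
  QuotientGroup.congr (NN ℓ) (NN ℓ) (MulEquiv.prodCongr ψ (invAut ^ k)) (map_NN ℓ ψ k)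

lemma psiAux_mk (ψ : MulAut (QuaternionGroup (2 ^ (ℓ - 1)))) (k : ℕ)
    (q : QuaternionGroup (2 ^ (ℓ - 1))) (t : Multiplicative (ZMod 4)) :
    psiAux ℓ ψ k (QuotientGroup.mk (q, t)) = QuotientGroup.mk (ψ q, (invAut ^ k) t) :=
  rfl

lemma dd_inv_eq : (QZ4.dd ℓ)⁻¹ =
    QuotientGroup.mk ((1 : QuaternionGroup (2 ^ (ℓ - 1))), (ofAdd (1 : ZMod 4))⁻¹) := by
  rw [QZ4.dd, ← QuotientGroup.mk_inv]
  congr 1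
  rw [Prod.inv_mk, inv_one]

lemma dd_ne_dd_inv : QZ4.dd ℓ ≠ (QZ4.dd ℓ)⁻¹ := by
  rw [dd_inv_eq, QZ4.dd, Ne, mk_eq_mk_iff]
  rintro (h | h)
  · exact absurd (congrArg Prod.snd h)
      (show ¬(ofAdd (1 : ZMod 4))⁻¹ = ofAdd (1 : ZMod 4) by decide)
  · exact quat_an_ne_one
      (congrArg Prod.fst (h.trans (by rw [rr, Prod.mk_mul_mk, one_mul]))).symm

/-- the automorphism inverting `d` and fixing the quaternion subgroup -/
def tau : MulAut (QZ4 ℓ) := psiAux ℓ 1 1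

lemma tau_sq : tau ℓ * tau ℓ = 1 := by
  ext g
  obtain ⟨⟨q, t⟩, rfl⟩ := QuotientGroup.mk_surjective g
  rw [MulAut.mul_apply, tau, psiAux_mk, psiAux_mk, MulAut.one_apply]
  simp [invAut_apply]

lemma tau_aa : tau ℓ (QZ4.aa ℓ) = QZ4.aa ℓ := by
  rw [QZ4.aa, tau, psiAux_mk]
  simp [invAut_apply]

lemma tau_cc : tau ℓ (QZ4.cc ℓ) = QZ4.cc ℓ := by
  rw [QZ4.cc, tau, psiAux_mk]
  simp [invAut_apply]

lemma tau_dd : tau ℓ (QZ4.dd ℓ) = (QZ4.dd ℓ)⁻¹ := by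
  rw [dd_inv_eq, QZ4.dd, tau, psiAux_mk]
  simp [invAut_apply]

lemma tau_order : orderOf (tau ℓ) = 2 := by
  haveI : Fact (Nat.Prime 2) := ⟨Nat.prime_two⟩
  refine orderOf_eq_prime (by rw [pow_two, tau_sq]) ?_
  intro h
  have h1 : tau ℓ (QZ4.dd ℓ) = QZ4.dd ℓ := by rw [h, MulAut.one_apply]
  rw [tau_dd] at h1
  exact dd_ne_dd_inv ℓ h1.symm
lemma pair_eq {α β : Type*} {a c : α} {b d : β} (h1 : a = c) (h2 : b = d) :
    (a, b) = (c, d) := by rw [h1, h2]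

lemma z4_shift : ∀ t : Multiplicative (ZMod 4), ¬ t = t * ofAdd (2 : ZMod 4) := by decide

lemma z4_sq_eq : ∀ s : Multiplicative (ZMod 4), 1 = s * s * ofAdd (2 : ZMod 4) →
    s = ofAdd (1 : ZMod 4) ∨ s = ofAdd (3 : ZMod 4) := by decide

lemma dd_central (g : QZ4 ℓ) : QZ4.dd ℓ * g = g * QZ4.dd ℓ := by
  obtain ⟨⟨q, t⟩, rfl⟩ := QuotientGroup.mk_surjective g
  rw [QZ4.dd, ← QuotientGroup.mk_mul, ← QuotientGroup.mk_mul, Prod.mk_mul_mk, Prod.mk_mul_mk,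
    one_mul, mul_one, mul_comm t]

lemma dd_sq : QZ4.dd ℓ * QZ4.dd ℓ = zG ℓ := by
  rw [QZ4.dd, zG, ← QuotientGroup.mk_mul, Prod.mk_mul_mk, one_mul, mk_eq_mk_iff]
  right
  rw [rr, Prod.mk_mul_mk, one_mul]
  exact pair_eq rfl (by decide)

lemma mk_one_dd (s : Multiplicative (ZMod 4))
    (h : (QuotientGroup.mk ((1 : QuaternionGroup (2 ^ (ℓ - 1))), s) : QZ4 ℓ) *
      QuotientGroup.mk ((1 : QuaternionGroup (2 ^ (ℓ - 1))), s) = zG ℓ) :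
    (QuotientGroup.mk ((1 : QuaternionGroup (2 ^ (ℓ - 1))), s) : QZ4 ℓ) = QZ4.dd ℓ ∨
      (QuotientGroup.mk ((1 : QuaternionGroup (2 ^ (ℓ - 1))), s) : QZ4 ℓ) = (QZ4.dd ℓ)⁻¹ := by
  rw [← QuotientGroup.mk_mul, Prod.mk_mul_mk, one_mul, zG, mk_eq_mk_iff] at h
  rcases h with h | h
  · exact absurd (congrArg Prod.fst h) quat_an_ne_one
  · rw [rr, Prod.mk_mul_mk, one_mul] at h
    have hs := z4_sq_eq s (congrArg Prod.snd h)
    rcases hs with rfl | rfl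
    · left; rfl
    · right
      rw [dd_inv_eq]
      exact congrArg _ (pair_eq rfl (by decide))

lemma central_sq_dd (hn2 : 2 ≤ 2 ^ (ℓ - 1)) (g : QZ4 ℓ)
    (hc : ∀ x, g * x = x * g) (hsq : g * g = zG ℓ) :
    g = QZ4.dd ℓ ∨ g = (QZ4.dd ℓ)⁻¹ := by
  obtain ⟨⟨q, t⟩, rfl⟩ := QuotientGroup.mk_surjective g
  rcases q with i | i
  · have hc1 := hc (QZ4.cc ℓ)
    rw [QZ4.cc, ← QuotientGroup.mk_mul, ← QuotientGroup.mk_mul, Prod.mk_mul_mk, Prod.mk_mul_mk,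
      QuaternionGroup.a_mul_xa, QuaternionGroup.xa_mul_a, mul_one, one_mul,
      mk_eq_mk_iff] at hc1
    rcases hc1 with h | h
    swap
    · exact absurd (congrArg Prod.snd (h.trans (by rw [rr, Prod.mk_mul_mk]))) (z4_shift t)
    · have hfst : (0 : ZMod (2 * 2 ^ (ℓ - 1))) + i = 0 - i :=
        QuaternionGroup.xa.inj (congrArg Prod.fst h)
      have hii : i + i = 0 := by linear_combination hfst
      rcases zmod_add_self_eq_zero hii with rfl | rfl
      · exact mk_one_dd ℓ t hsq
      · have hg2 : (QuotientGroup.mk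
            (QuaternionGroup.a ((2 ^ (ℓ - 1) : ℕ) : ZMod (2 * 2 ^ (ℓ - 1))), t) : QZ4 ℓ) =
            QuotientGroup.mk ((1 : QuaternionGroup (2 ^ (ℓ - 1))), t * ofAdd (2 : ZMod 4)) := by
          rw [mk_eq_mk_iff]
          right
          rw [rr, Prod.mk_mul_mk, quat_an_sq]
        rw [hg2] at hsq ⊢
        exact mk_one_dd ℓ (t * ofAdd (2 : ZMod 4)) hsq
  · exfalso
    have hc2 := hc (QZ4.aa ℓ)
    rw [QZ4.aa, ← QuotientGroup.mk_mul, ← QuotientGroup.mk_mul, Prod.mk_mul_mk, Prod.mk_mul_mk,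
      QuaternionGroup.xa_mul_a, QuaternionGroup.a_mul_xa, mul_one, one_mul,
      mk_eq_mk_iff] at hc2
    rcases hc2 with h | h
    · have hfst : i - 1 = i + 1 := QuaternionGroup.xa.inj (congrArg Prod.fst h)
      have h2 : ((2 : ℕ) : ZMod (2 * 2 ^ (ℓ - 1))) = 0 := by
        push_cast
        linear_combination -hfst
      exact zmod_two_ne_zero hn2 h2
    · exact absurd (congrArg Prod.snd (h.trans (by rw [rr, Prod.mk_mul_mk]))) (z4_shift t)
/-- the full automorphism-group homomorphism -/
def Psi : MulAut (QuaternionGroup (2 ^ (ℓ - 1))) × Multiplicative (ZMod 2) →*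
    MulAut (QZ4 ℓ) where
  toFun p := psiAux ℓ p.1 (Multiplicative.toAdd p.2).val
  map_one' := by
    ext g
    obtain ⟨⟨q, t⟩, rfl⟩ := QuotientGroup.mk_surjective g
    show psiAux ℓ 1 (Multiplicative.toAdd (1 : Multiplicative (ZMod 2))).val _ = _
    rw [psiAux_mk, MulAut.one_apply]
    norm_num [show (Multiplicative.toAdd (1 : Multiplicative (ZMod 2))).val = 0 from rfl]

  map_mul' p p' := by
    ext g
    obtain ⟨⟨x, t⟩, rfl⟩ := QuotientGroup.mk_surjective g
    show psiAux ℓ (p.1 * p'.1) (Multiplicative.toAdd (p.2 * p'.2)).val _ = _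
    rw [MulAut.mul_apply, psiAux_mk, psiAux_mk, psiAux_mk]
    have h2 : (invAut ^ (Multiplicative.toAdd (p.2 * p'.2)).val) t =
        (invAut ^ (Multiplicative.toAdd p.2).val)
          ((invAut ^ (Multiplicative.toAdd p'.2).val) t) := by
      rw [show Multiplicative.toAdd (p.2 * p'.2) =
          Multiplicative.toAdd p.2 + Multiplicative.toAdd p'.2 from rfl,
        ZMod.val_add, invAut_pow_mod, pow_add, MulAut.mul_apply]
    rw [MulAut.mul_apply, h2]

lemma Psi_mk (p : MulAut (QuaternionGroup (2 ^ (ℓ - 1))) × Multiplicative (ZMod 2))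
    (q : QuaternionGroup (2 ^ (ℓ - 1))) (t : Multiplicative (ZMod 4)) :
    Psi ℓ p (QuotientGroup.mk (q, t)) =
      QuotientGroup.mk (p.1 q, (invAut ^ (Multiplicative.toAdd p.2).val) t) :=
  rfl

lemma mk_eq_of_snd_eq {x y : QuaternionGroup (2 ^ (ℓ - 1))} {t : Multiplicative (ZMod 4)}
    (h : (QuotientGroup.mk (x, t) : QZ4 ℓ) = QuotientGroup.mk (y, t)) : y = x := by
  rw [mk_eq_mk_iff] at h
  rcases h with h | h
  · exact congrArg Prod.fst h
  · exact absurd (congrArg Prod.snd (h.trans (by rw [rr, Prod.mk_mul_mk]))) (z4_shift t)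

lemma mk_one_eq {t t' : Multiplicative (ZMod 4)}
    (h : (QuotientGroup.mk ((1 : QuaternionGroup (2 ^ (ℓ - 1))), t) : QZ4 ℓ) =
      QuotientGroup.mk (1, t')) : t' = t := by
  rw [mk_eq_mk_iff] at h
  rcases h with h | h
  · exact congrArg Prod.snd h
  · exact absurd (congrArg Prod.fst (h.trans (by rw [rr, Prod.mk_mul_mk, one_mul])))
      quat_an_ne_one.symm

lemma aut_ext {ψ ψ' : MulAut (QuaternionGroup (2 ^ (ℓ - 1)))}
    (h1 : ψ (QuaternionGroup.a 1) = ψ' (QuaternionGroup.a 1))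
    (h2 : ψ (QuaternionGroup.xa 0) = ψ' (QuaternionGroup.xa 0)) : ψ = ψ' := by
  refine MulEquiv.toMonoidHom_injective
    (MonoidHom.eq_of_eqOn_dense (quat_closure_top (n := 2 ^ (ℓ - 1))) ?_)
  intro x hx
  simp only [Set.mem_insert_iff, Set.mem_singleton_iff] at hx
  rcases hx with rfl | rfl
  exacts [h1, h2]

lemma z2_eps : ∀ ε ε' : Multiplicative (ZMod 2),
    (invAut ^ (Multiplicative.toAdd ε).val) (ofAdd (1 : ZMod 4)) =
      (invAut ^ (Multiplicative.toAdd ε').val) (ofAdd (1 : ZMod 4)) → ε = ε' := by decide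

lemma Psi_inj : Function.Injective (Psi ℓ) := by
  rintro ⟨ψ, ε⟩ ⟨ψ', ε'⟩ h
  have haa := DFunLike.congr_fun h (QZ4.aa ℓ)
  have hcc := DFunLike.congr_fun h (QZ4.cc ℓ)
  have hdd := DFunLike.congr_fun h (QZ4.dd ℓ)
  rw [QZ4.aa, Psi_mk, Psi_mk, map_one, map_one] at haa
  rw [QZ4.cc, Psi_mk, Psi_mk, map_one, map_one] at hcc
  rw [QZ4.dd, Psi_mk, Psi_mk, map_one ((ψ, ε).1 : MulAut _), map_one ((ψ', ε').1 : MulAut _)] at hdd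
  have h1 := mk_eq_of_snd_eq ℓ haa
  have h2 := mk_eq_of_snd_eq ℓ hcc
  have h3 := z2_eps ε ε' (mk_one_eq ℓ hdd).symm
  exact Prod.ext (aut_ext ℓ h1.symm h2.symm) h3

section Surj
variable (χ : MulAut (QZ4 ℓ))

lemma chi_fix_K (hn2 : 2 ≤ 2 ^ (ℓ - 1)) : Subgroup.map χ.toMonoidHom (KK ℓ) = KK ℓ :=
  uniq_subgroup ℓ
    (((KK ℓ).equivMapOfInjective χ.toMonoidHom χ.injective).symm.trans (e1 ℓ).symm) hn2

/-- restriction of an automorphism to the subgroup `K` -/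
def chiK (hK : Subgroup.map χ.toMonoidHom (KK ℓ) = KK ℓ) : KK ℓ ≃* KK ℓ where
  toFun x := ⟨χ (x : QZ4 ℓ), by
    have hx : χ (x : QZ4 ℓ) ∈ Subgroup.map χ.toMonoidHom (KK ℓ) := ⟨(x : QZ4 ℓ), x.2, rfl⟩
    rwa [hK] at hx⟩
  invFun x := ⟨χ.symm (x : QZ4 ℓ), by
    have hx : (x : QZ4 ℓ) ∈ Subgroup.map χ.toMonoidHom (KK ℓ) := by rw [hK]; exact x.2
    obtain ⟨y, hy, hyx⟩ := hx
    have : χ.symm x = y := by rw [← hyx]; exact χ.symm_apply_apply y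
    rw [this]
    exact hy⟩
  left_inv x := Subtype.ext (χ.symm_apply_apply (x : QZ4 ℓ))
  right_inv x := Subtype.ext (χ.apply_symm_apply (x : QZ4 ℓ))
  map_mul' x y := Subtype.ext (map_mul χ (x : QZ4 ℓ) (y : QZ4 ℓ))

lemma chi_zG (hK : Subgroup.map χ.toMonoidHom (KK ℓ) = KK ℓ) : χ (zG ℓ) = zG ℓ := by
  have hmem : χ (zG ℓ) ∈ KK ℓ := by
    rw [← hK]
    exact ⟨zG ℓ, zG_mem_K ℓ, rfl⟩
  refine invol_unique ℓ (e1 ℓ).symm hmem (zG_mem_K ℓ) ?_ (zG_sq ℓ) ?_ (zG_ne_one ℓ)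
  · rw [← map_mul, zG_sq, map_one]
  · intro hcon
    exact zG_ne_one ℓ (χ.injective (hcon.trans (map_one χ).symm))

lemma chi_dd (hn2 : 2 ≤ 2 ^ (ℓ - 1)) (hK : Subgroup.map χ.toMonoidHom (KK ℓ) = KK ℓ) :
    χ (QZ4.dd ℓ) = QZ4.dd ℓ ∨ χ (QZ4.dd ℓ) = (QZ4.dd ℓ)⁻¹ := by
  refine central_sq_dd ℓ hn2 _ ?_ ?_
  · intro x
    obtain ⟨y, rfl⟩ := χ.surjective x
    rw [← map_mul, ← map_mul, dd_central]
  · rw [← map_mul, dd_sq]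
    exact chi_zG ℓ χ hK
end Surj
lemma invAut_pow_one (k : ℕ) : (invAut ^ k) (1 : Multiplicative (ZMod 4)) = 1 := map_one _

lemma mk_one_t (t : Multiplicative (ZMod 4)) :
    (QuotientGroup.mk ((1 : QuaternionGroup (2 ^ (ℓ - 1))), t) : QZ4 ℓ) =
      QZ4.dd ℓ ^ (Multiplicative.toAdd t).val := by
  have h1 : QZ4.dd ℓ ^ (Multiplicative.toAdd t).val =
      QuotientGroup.mk (((1 : QuaternionGroup (2 ^ (ℓ - 1))),
        ofAdd (1 : ZMod 4)) ^ (Multiplicative.toAdd t).val) :=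
    (QuotientGroup.mk_pow _ _ _).symm
  rw [h1]
  congr 1
  rw [Prod.pow_mk, one_pow, ← ofAdd_nsmul, nsmul_eq_mul, mul_one, ZMod.natCast_val,
    ZMod.cast_id, ofAdd_toAdd]

lemma QZ4_gen : Subgroup.closure {QZ4.aa ℓ, QZ4.cc ℓ, QZ4.dd ℓ} = ⊤ := by
  rw [eq_top_iff']
  intro g
  obtain ⟨⟨q, t⟩, rfl⟩ := QuotientGroup.mk_surjective g
  have hsplit : (QuotientGroup.mk (q, t) : QZ4 ℓ) =
      QuotientGroup.mk (q, 1) * QuotientGroup.mk (1, t) := by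
    rw [← QuotientGroup.mk_mul, Prod.mk_mul_mk, mul_one, one_mul]
  rw [hsplit]
  refine mul_mem ?_ ?_
  · refine Subgroup.closure_mono (show ({QZ4.aa ℓ, QZ4.cc ℓ} : Set (QZ4 ℓ)) ⊆ {QZ4.aa ℓ, QZ4.cc ℓ, QZ4.dd ℓ}
      by intro x hx; simp only [Set.mem_insert_iff, Set.mem_singleton_iff] at hx ⊢; tauto) ?_
    exact (mem_K_iff ℓ).mpr (Or.inl rfl)
  · rw [mk_one_t]
    exact pow_mem (Subgroup.subset_closure (by simp)) _

lemma aut_eq_of_gens {χ χ' : MulAut (QZ4 ℓ)} (h1 : χ (QZ4.aa ℓ) = χ' (QZ4.aa ℓ))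
    (h2 : χ (QZ4.cc ℓ) = χ' (QZ4.cc ℓ)) (h3 : χ (QZ4.dd ℓ) = χ' (QZ4.dd ℓ)) : χ = χ' := by
  refine MulEquiv.toMonoidHom_injective (MonoidHom.eq_of_eqOn_dense (QZ4_gen ℓ) ?_)
  intro x hx
  simp only [Set.mem_insert_iff, Set.mem_singleton_iff] at hx
  rcases hx with rfl | rfl | rfl
  exacts [h1, h2, h3]

lemma Psi_surj (hn2 : 2 ≤ 2 ^ (ℓ - 1)) : Function.Surjective (Psi ℓ) := by
  intro χ
  have hK := chi_fix_K ℓ χ hn2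
  set ψ : MulAut (QuaternionGroup (2 ^ (ℓ - 1))) :=
    ((e1 ℓ).trans (chiK ℓ χ hK)).trans (e1 ℓ).symm with hψ
  have hψ_coe : ∀ q : QuaternionGroup (2 ^ (ℓ - 1)),
      (QuotientGroup.mk (ψ q, 1) : QZ4 ℓ) = χ (QuotientGroup.mk (q, 1)) := by
    intro q
    have h0 : (QuotientGroup.mk (ψ q, 1) : QZ4 ℓ) = ι ℓ (ψ q) := rfl
    have h2 : e1 ℓ (ψ q) = chiK ℓ χ hK (e1 ℓ q) := by
      rw [hψ]
      show e1 ℓ ((e1 ℓ).symm (chiK ℓ χ hK (e1 ℓ q))) = _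
      rw [MulEquiv.apply_symm_apply]
    have h3 : ((chiK ℓ χ hK (e1 ℓ q) : KK ℓ) : QZ4 ℓ) = χ ((e1 ℓ q : KK ℓ) : QZ4 ℓ) := rfl
    rw [h0, ← e1_coe, h2, h3, e1_coe]
    rfl
  have hone : ψ (1 : QuaternionGroup (2 ^ (ℓ - 1))) = 1 := map_one ψ
  rcases chi_dd ℓ χ hn2 hK with hdd | hdd
  · refine ⟨(ψ, 1), aut_eq_of_gens ℓ ?_ ?_ ?_⟩
    · rw [QZ4.aa, Psi_mk, invAut_pow_one]
      exact hψ_coe (QuaternionGroup.a 1)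
    · rw [QZ4.cc, Psi_mk, invAut_pow_one]
      exact hψ_coe (QuaternionGroup.xa 0)
    · rw [hdd, QZ4.dd, Psi_mk, hone]
      rfl
  · refine ⟨(ψ, ofAdd 1), aut_eq_of_gens ℓ ?_ ?_ ?_⟩
    · rw [QZ4.aa, Psi_mk, invAut_pow_one]
      exact hψ_coe (QuaternionGroup.a 1)
    · rw [QZ4.cc, Psi_mk, invAut_pow_one]
      exact hψ_coe (QuaternionGroup.xa 0)
    · rw [hdd, dd_inv_eq, QZ4.dd, Psi_mk, hone]
      rfl

end Stmt12

/-- For `ℓ ≥ 3`, in `G = Q_{2^(ℓ+1)} ∘ Z_4`, the subgroup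
`⟨a, c⟩ ≅ Q_{2^(ℓ+1)}` is the unique subgroup isomorphic to `Q_{2^(ℓ+1)}`,
hence characteristic; consequently `Aut(G) ≅ Aut(Q_{2^(ℓ+1)}) × Z_2`, where the
`Z_2` factor is generated by the automorphism fixing `a, c` and inverting
`d`. -/
theorem stmt_12 (ℓ : ℕ) (hℓ : 3 ≤ ℓ) :
    Nonempty (↥(Subgroup.closure {QZ4.aa ℓ, QZ4.cc ℓ}) ≃*
      QuaternionGroup (2 ^ (ℓ - 1))) ∧
    (∀ H : Subgroup (QZ4 ℓ), Nonempty (↥H ≃* QuaternionGroup (2 ^ (ℓ - 1))) →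
      H = Subgroup.closure {QZ4.aa ℓ, QZ4.cc ℓ}) ∧
    (Subgroup.closure {QZ4.aa ℓ, QZ4.cc ℓ}).Characteristic ∧
    Nonempty (MulAut (QZ4 ℓ) ≃*
      (MulAut (QuaternionGroup (2 ^ (ℓ - 1))) × Multiplicative (ZMod 2))) ∧
    (∃ τ : MulAut (QZ4 ℓ), orderOf τ = 2 ∧
      τ (QZ4.aa ℓ) = QZ4.aa ℓ ∧ τ (QZ4.cc ℓ) = QZ4.cc ℓ ∧
      τ (QZ4.dd ℓ) = (QZ4.dd ℓ)⁻¹) := by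
  have hn2 : 2 ≤ 2 ^ (ℓ - 1) := by
    calc 2 = 2 ^ 1 := (pow_one 2).symm
    _ ≤ 2 ^ (ℓ - 1) := Nat.pow_le_pow_right (by norm_num) (by omega)
  refine ⟨⟨(Stmt12.e1 ℓ).symm⟩, ?_, ?_, ?_, ?_⟩
  · intro H hne
    obtain ⟨e⟩ := hne
    exact Stmt12.uniq_subgroup ℓ e hn2
  · rw [Subgroup.characteristic_iff_map_eq]
    intro φ
    exact Stmt12.uniq_subgroup ℓ
      (((Stmt12.KK ℓ).equivMapOfInjective φ.toMonoidHom φ.injective).symm.trans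
        (Stmt12.e1 ℓ).symm) hn2
  · exact ⟨(MulEquiv.ofBijective (Stmt12.Psi ℓ)
      ⟨Stmt12.Psi_inj ℓ, Stmt12.Psi_surj ℓ hn2⟩).symm⟩
  · exact ⟨Stmt12.tau ℓ, Stmt12.tau_order ℓ, Stmt12.tau_aa ℓ, Stmt12.tau_cc ℓ,
      Stmt12.tau_dd ℓ⟩
end

section
/- Let G = ⟨a⟩ ⋊ ⟨b,c⟩ where |a| = 2^ℓ (ℓ ≥ 3), |b| = |c| = 2, a^b = a^{-1}, a^c = a^{2^{ℓ-1}+1}, and [b,c] = 1. Then Z(G) = ⟨a^{2^{ℓ-1}}⟩ has order 2, Z(G) ≤ G', and G/Z(G) ≅ D_{2^ℓ} × Z_2; that is, G is a double cover of D_{2^ℓ} × Z_2. -/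
private def eF {G : Type} [Group G] (N : ℕ) (a b c : G) (x : ZMod N × ZMod 2 × ZMod 2) : G :=
  a ^ x.1.val * b ^ x.2.1.val * c ^ x.2.2.val

private lemma Apow_aux {G : Type} [Group G] {n : ℕ} [NeZero n] {a : G} (h : orderOf a = n)
    (i j : ZMod n) : a ^ (i + j).val = a ^ i.val * a ^ j.val := by
  rw [← pow_add, pow_eq_pow_iff_modEq, h, ZMod.val_add]
  exact Nat.mod_modEq _ _

private lemma Apow_natCast {G : Type} [Group G] {n : ℕ} [NeZero n] {a : G} (h : orderOf a = n)
    (t : ℕ) : a ^ ((t : ZMod n)).val = a ^ t := by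
  rw [ZMod.val_natCast, ← h, pow_mod_orderOf]

private lemma Apow_neg {G : Type} [Group G] {n : ℕ} [NeZero n] {a : G} (h : orderOf a = n)
    (i : ZMod n) : a ^ (-i).val = (a ^ i.val)⁻¹ := by
  apply eq_inv_of_mul_eq_one_left
  rw [← Apow_aux h, neg_add_cancel, ZMod.val_zero, pow_zero]

private lemma z2cases (x : ZMod 2) : x = 0 ∨ x = 1 := by revert x; decide

private lemma key_mul {G : Type} [Group G] {a b c : G} {N m : ℕ} [NeZero N]
    (ha : orderOf a = N) (hb : orderOf b = 2) (hc : orderOf c = 2)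
    (hab : b * a * b⁻¹ = a⁻¹) (hac : c * a * c⁻¹ = a ^ (m + 1))
    (hbc : b * c = c * b) (x y : ZMod N × ZMod 2 × ZMod 2) :
    eF N a b c x * eF N a b c y =
      eF N a b c (x.1 + (-1) ^ x.2.1.val * ((m + 1 : ℕ) : ZMod N) ^ x.2.2.val * y.1,
        x.2.1 + y.2.1, x.2.2 + y.2.2) := by
  obtain ⟨i, j, k⟩ := x
  obtain ⟨i', j', k'⟩ := y
  set μ : ZMod N := ((m + 1 : ℕ) : ZMod N) with hμ
  have conj_b : ∀ t : ZMod N, b * a ^ t.val = a ^ (-t).val * b := by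
    intro t
    have h1 : (b * a * b⁻¹) ^ t.val = b * a ^ t.val * b⁻¹ := conj_pow
    rw [hab] at h1
    rw [Apow_neg ha, ← inv_pow, h1]
    group
  have pow_b : ∀ (j : ZMod 2) (t : ZMod N),
      b ^ j.val * a ^ t.val = a ^ (((-1 : ZMod N)) ^ j.val * t).val * b ^ j.val := by
    intro j t
    rcases z2cases j with h | h <;> subst h
    · simp [ZMod.val_zero]
    · simp only [show ((1 : ZMod 2)).val = 1 from rfl, pow_one, neg_one_mul]
      exact conj_b t
  have conj_c : ∀ t : ZMod N, c * a ^ t.val = a ^ (μ * t).val * c := by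
    intro t
    have h1 : (c * a * c⁻¹) ^ t.val = c * a ^ t.val * c⁻¹ := conj_pow
    rw [hac, ← pow_mul] at h1
    have h2 : a ^ (μ * t).val = a ^ ((m + 1) * t.val) := by
      have : μ * t = (((m + 1) * t.val : ℕ) : ZMod N) := by
        push_cast [hμ]
        rw [ZMod.natCast_val, ZMod.cast_id]
      rw [this, Apow_natCast ha]
    rw [h2, h1]
    group
  have pow_c : ∀ (k : ZMod 2) (t : ZMod N),
      c ^ k.val * a ^ t.val = a ^ (μ ^ k.val * t).val * c ^ k.val := by
    intro k t
    rcases z2cases k with h | h <;> subst h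
    · simp [ZMod.val_zero]
    · simp only [show ((1 : ZMod 2)).val = 1 from rfl, pow_one]
      exact conj_c t
  have comm_cb : ∀ (k j : ZMod 2), c ^ k.val * b ^ j.val = b ^ j.val * c ^ k.val := by
    intro k j
    exact Commute.eq (Commute.pow_pow (Commute.symm hbc) k.val j.val)
  show a ^ i.val * b ^ j.val * c ^ k.val * (a ^ i'.val * b ^ j'.val * c ^ k'.val) = _
  calc a ^ i.val * b ^ j.val * c ^ k.val * (a ^ i'.val * b ^ j'.val * c ^ k'.val)
      = a ^ i.val * (b ^ j.val * (c ^ k.val * a ^ i'.val)) * (b ^ j'.val * c ^ k'.val) := by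
        group
    _ = a ^ i.val * (b ^ j.val * (a ^ (μ ^ k.val * i').val * c ^ k.val)) *
          (b ^ j'.val * c ^ k'.val) := by rw [pow_c]
    _ = a ^ i.val * (b ^ j.val * a ^ (μ ^ k.val * i').val) * c ^ k.val *
          (b ^ j'.val * c ^ k'.val) := by group
    _ = a ^ i.val * (a ^ ((-1 : ZMod N) ^ j.val * (μ ^ k.val * i')).val * b ^ j.val) *
          c ^ k.val * (b ^ j'.val * c ^ k'.val) := by rw [pow_b]
    _ = a ^ i.val * a ^ ((-1 : ZMod N) ^ j.val * (μ ^ k.val * i')).val * b ^ j.val *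
          (c ^ k.val * b ^ j'.val) * c ^ k'.val := by group
    _ = a ^ i.val * a ^ ((-1 : ZMod N) ^ j.val * (μ ^ k.val * i')).val * b ^ j.val *
          (b ^ j'.val * c ^ k.val) * c ^ k'.val := by rw [comm_cb]
    _ = (a ^ i.val * a ^ ((-1 : ZMod N) ^ j.val * (μ ^ k.val * i')).val) *
          (b ^ j.val * b ^ j'.val) * (c ^ k.val * c ^ k'.val) := by group
    _ = _ := by
        show _ = a ^ (i + (-1 : ZMod N) ^ j.val * μ ^ k.val * i').val * b ^ (j + j').val *
          c ^ (k + k').val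
        rw [Apow_aux ha, Apow_aux hb, Apow_aux hc, mul_assoc ((-1 : ZMod N) ^ j.val)]

private def dF (m N : ℕ) (h : m ∣ N) (i : ZMod N) (j : ZMod 2) : DihedralGroup m :=
  if j = 0 then .r (ZMod.castHom h (ZMod m) i) else .sr (-(ZMod.castHom h (ZMod m) i))

private lemma dF_zero {m N : ℕ} (h : m ∣ N) (i : ZMod N) :
    dF m N h i 0 = DihedralGroup.r (ZMod.castHom h (ZMod m) i) := if_pos rfl

private lemma dF_one {m N : ℕ} (h : m ∣ N) (i : ZMod N) :
    dF m N h i 1 = DihedralGroup.sr (-(ZMod.castHom h (ZMod m) i)) := if_neg (by decide)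

private lemma d_mul {m N : ℕ} (h : m ∣ N) {μ : ZMod N} (hμ : ZMod.castHom h (ZMod m) μ = 1)
    (i i' : ZMod N) (j j' : ZMod 2) (k : ZMod 2) :
    dF m N h (i + (-1) ^ j.val * μ ^ k.val * i') (j + j') = dF m N h i j * dF m N h i' j' := by
  have hmap : ∀ t t' : ZMod N, ∀ s : ℕ, ZMod.castHom h (ZMod m) (t + (-1) ^ s * μ ^ k.val * t')
      = ZMod.castHom h (ZMod m) t + (-1) ^ s * ZMod.castHom h (ZMod m) t' := by
    intro t t' s
    rw [map_add, map_mul, map_mul, map_pow, map_pow, map_neg, map_one, hμ, one_pow, mul_one]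
  rcases z2cases j with hj | hj <;> rcases z2cases j' with hj' | hj' <;> subst hj <;> subst hj'
  · rw [show ((0:ZMod 2)) + 0 = 0 from rfl, dF_zero, dF_zero, dF_zero,
      DihedralGroup.r_mul_r, hmap]
    congr 1
    simp only [show ((0:ZMod 2)).val = 0 from rfl, pow_zero]
    ring
  · rw [show ((0:ZMod 2)) + 1 = 1 from rfl, dF_one, dF_zero, dF_one,
      DihedralGroup.r_mul_sr, hmap]
    congr 1
    simp only [show ((0:ZMod 2)).val = 0 from rfl, pow_zero]
    ring
  · rw [show ((1:ZMod 2)) + 0 = 1 from rfl, dF_one, dF_one, dF_zero,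
      DihedralGroup.sr_mul_r, hmap]
    congr 1
    simp only [show ((1:ZMod 2)).val = 1 from rfl, pow_one]
    ring
  · rw [show ((1:ZMod 2)) + 1 = 0 from rfl, dF_zero, dF_one, dF_one,
      DihedralGroup.sr_mul_sr, hmap]
    congr 1
    simp only [show ((1:ZMod 2)).val = 1 from rfl, pow_one]
    ring


/-- Let `G = ⟨a⟩ ⋊ ⟨b, c⟩` with `|a| = 2^ℓ` (`ℓ ≥ 3`),
`|b| = |c| = 2`, `a^b = a⁻¹`, `a^c = a^(2^(ℓ-1)+1)`, `[b, c] = 1`. Then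
`Z(G) = ⟨a^(2^(ℓ-1))⟩` has order 2, `Z(G) ≤ G'`, and `G/Z(G) ≅ D_{2^ℓ} × Z_2`;
that is, `G` is a double cover of `D_{2^ℓ} × Z_2`. -/
theorem stmt_15 (ℓ : ℕ) (hℓ : 3 ≤ ℓ) (G : Type) [Group G] (a b c : G)
    (ha : orderOf a = 2 ^ ℓ) (hb : orderOf b = 2) (hc : orderOf c = 2)
    (hab : b * a * b⁻¹ = a⁻¹) (hac : c * a * c⁻¹ = a ^ (2 ^ (ℓ - 1) + 1))
    (hbc : b * c = c * b)
    (hgen : Subgroup.closure {a, b, c} = ⊤)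
    (hcard : Nat.card G = 2 ^ (ℓ + 2)) :
    Subgroup.center G = Subgroup.zpowers (a ^ 2 ^ (ℓ - 1)) ∧
    Nat.card (Subgroup.center G) = 2 ∧
    Subgroup.center G ≤ commutator G ∧
    ∃ π : G →* DihedralGroup (2 ^ (ℓ - 1)) × Multiplicative (ZMod 2),
      Function.Surjective π ∧ π.ker = Subgroup.center G := by
  set m : ℕ := 2 ^ (ℓ - 1) with hm
  set N : ℕ := 2 ^ ℓ with hNdef
  haveI : NeZero N := ⟨pow_ne_zero _ two_ne_zero⟩
  haveI : NeZero m := ⟨pow_ne_zero _ two_ne_zero⟩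
  have hN2m : N = 2 * m := by
    rw [hNdef, hm, ← pow_succ']
    congr 1
    omega
  have hm4 : 4 ≤ m := by
    calc (4:ℕ) = 2 ^ 2 := by norm_num
    _ ≤ 2 ^ (ℓ - 1) := Nat.pow_le_pow_right (by norm_num) (by omega)
  set z : G := a ^ m with hzdef
  set e : ZMod N × ZMod 2 × ZMod 2 → G := eF N a b c with hedef
  set μ : ZMod N := ((m + 1 : ℕ) : ZMod N) with hμdef
  have law : ∀ x y : ZMod N × ZMod 2 × ZMod 2, e x * e y =
      e (x.1 + (-1) ^ x.2.1.val * μ ^ x.2.2.val * y.1, x.2.1 + y.2.1, x.2.2 + y.2.2) :=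
    fun x y => key_mul ha hb hc hab hac hbc x y
  -- basic values of e
  have he1 : e (0, 0, 0) = 1 := by
    show a ^ (0 : ZMod N).val * b ^ (0 : ZMod 2).val * c ^ (0 : ZMod 2).val = 1
    rw [ZMod.val_zero, show ((0:ZMod 2)).val = 0 from rfl]
    simp
  have hea : e (1, 0, 0) = a := by
    show a ^ (1 : ZMod N).val * b ^ (0 : ZMod 2).val * c ^ (0 : ZMod 2).val = a
    rw [show ((1 : ZMod N)) = ((1:ℕ) : ZMod N) by norm_cast, Apow_natCast ha,
      show ((0:ZMod 2)).val = 0 from rfl]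
    simp
  have heb : e (0, 1, 0) = b := by
    show a ^ (0 : ZMod N).val * b ^ (1 : ZMod 2).val * c ^ (0 : ZMod 2).val = b
    rw [ZMod.val_zero, show ((1:ZMod 2)).val = 1 from rfl, show ((0:ZMod 2)).val = 0 from rfl]
    simp
  have hec : e (0, 0, 1) = c := by
    show a ^ (0 : ZMod N).val * b ^ (0 : ZMod 2).val * c ^ (1 : ZMod 2).val = c
    rw [ZMod.val_zero, show ((1:ZMod 2)).val = 1 from rfl, show ((0:ZMod 2)).val = 0 from rfl]
    simp
  have h2t : ∀ t : ZMod 2, t + t = 0 := by decide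
  have hez : e (((m : ℕ) : ZMod N), 0, 0) = z := by
    show a ^ (((m:ℕ) : ZMod N)).val * b ^ (0 : ZMod 2).val * c ^ (0 : ZMod 2).val = z
    rw [Apow_natCast ha, show ((0:ZMod 2)).val = 0 from rfl]
    simp [hzdef]
  have husq : μ * μ = 1 := by
    have h1 : ((m * m : ℕ) : ZMod N) = 0 := by
      rw [ZMod.natCast_eq_zero_iff, hNdef, hm, ← pow_add]
      exact pow_dvd_pow 2 (by omega)
    have h2 : ((2 * m : ℕ) : ZMod N) = 0 := by
      rw [ZMod.natCast_eq_zero_iff, hN2m]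
    push_cast [hμdef] at h1 h2 ⊢
    linear_combination h1 + h2
  have hFin : Finite G := Nat.finite_of_card_ne_zero (by rw [hcard]; positivity)
  have husq' : ∀ s v i : ZMod N, s * s = 1 → v * v = 1 → i + s * v * -(s * v * i) = 0 := by
    intro s v i hs hv
    linear_combination (-(v * v * i)) * hs + (-i) * hv
  have hspow : ∀ t : ZMod 2, ((-1 : ZMod N)) ^ t.val * ((-1 : ZMod N)) ^ t.val = 1 := by
    intro t
    rw [← mul_pow]
    norm_num
  have hvpow : ∀ t : ZMod 2, μ ^ t.val * μ ^ t.val = 1 := by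
    intro t
    rw [← pow_add, ← two_mul, pow_mul, show μ ^ 2 = 1 by rw [sq]; exact husq, one_pow]
  let S : Subgroup G :=
    { carrier := Set.range e
      one_mem' := ⟨(0, 0, 0), he1⟩
      mul_mem' := by
        rintro _ _ ⟨x, rfl⟩ ⟨y, rfl⟩
        exact ⟨_, (law x y).symm⟩
      inv_mem' := by
        rintro _ ⟨⟨i, j, k⟩, rfl⟩
        refine ⟨(-((-1) ^ j.val * μ ^ k.val * i), j, k), ?_⟩
        apply eq_inv_of_mul_eq_one_left
        rw [law]
        show e (-((-1) ^ j.val * μ ^ k.val * i) + (-1) ^ j.val * μ ^ k.val * i, j + j, k + k) = 1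
        rw [neg_add_cancel, h2t, h2t]
        exact he1 }
  have hgenS : Subgroup.closure {a, b, c} ≤ S := by
    refine (Subgroup.closure_le S).mpr ?_
    intro x hx
    simp only [Set.mem_insert_iff, Set.mem_singleton_iff] at hx
    rcases hx with rfl | rfl | rfl
    · exact ⟨(1, 0, 0), hea⟩
    · exact ⟨(0, 1, 0), heb⟩
    · exact ⟨(0, 0, 1), hec⟩
  have hsurj : Function.Surjective e := by
    intro g
    have hgmem : g ∈ Subgroup.closure {a, b, c} := by rw [hgen]; trivial
    exact hgenS hgmem
  have hcards : Nat.card (ZMod N × ZMod 2 × ZMod 2) = Nat.card G := by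
    simp only [Nat.card_prod, Nat.card_zmod, hcard, hNdef]
    ring
  have hbij : Function.Bijective e := (Nat.bijective_iff_surjective_and_card e).mpr
    ⟨hsurj, hcards⟩
  set E := Equiv.ofBijective e hbij with hE
  -- z is central
  have hz2 : z * z = 1 := by
    rw [hzdef, ← pow_add, ← two_mul, ← hN2m, ← ha]
    exact pow_orderOf_eq_one a
  have hzinv : z⁻¹ = z := inv_eq_of_mul_eq_one_right hz2
  have hza : a * z = z * a := Commute.eq ((Commute.refl a).pow_right m)
  have hzb : b * z = z * b := by
    have h1 : (b * a * b⁻¹) ^ m = b * a ^ m * b⁻¹ := conj_pow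
    rw [hab, inv_pow, ← hzdef, hzinv] at h1
    calc b * z = b * z * b⁻¹ * b := by group
    _ = z * b := by rw [← h1]
  have hzc : c * z = z * c := by
    have h1 : (c * a * c⁻¹) ^ m = c * a ^ m * c⁻¹ := conj_pow
    have h2 : (a ^ (m + 1)) ^ m = z := by
      rw [← pow_mul, add_mul, one_mul, pow_add, hzdef]
      have : a ^ (m * m) = 1 := by
        apply orderOf_dvd_iff_pow_eq_one.mp
        rw [ha, hNdef, hm, ← pow_add]
        exact pow_dvd_pow 2 (by omega)
      rw [this, one_mul]
    rw [hac, h2, ← hzdef] at h1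
    calc c * z = c * z * c⁻¹ * c := by group
    _ = z * c := by rw [← h1]
  have hzcen : z ∈ Subgroup.center G := by
    rw [Subgroup.mem_center_iff]
    intro g
    have hle : Subgroup.closure {a, b, c} ≤ Subgroup.centralizer {z} := by
      refine (Subgroup.closure_le _).mpr ?_
      intro x hx
      simp only [Set.mem_insert_iff, Set.mem_singleton_iff] at hx
      rcases hx with rfl | rfl | rfl <;>
        · rw [SetLike.mem_coe, Subgroup.mem_centralizer_iff]
          rintro h rfl
          first
            | exact hza.symm
            | exact hzb.symm
            | exact hzc.symm
    have hg : g ∈ Subgroup.centralizer {z} := hle (by rw [hgen]; trivial)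
    exact (Subgroup.mem_centralizer_iff.mp hg z rfl).symm
  have hndvd : ∀ t : ℕ, 0 < t → t < N → ¬ ((t : ZMod N) = 0) := by
    intro t ht hlt h
    rw [ZMod.natCast_eq_zero_iff] at h
    exact absurd (Nat.le_of_dvd ht h) (by omega)
  have hcenter : Subgroup.center G = Subgroup.zpowers z := by
    apply le_antisymm
    · intro g hg
      obtain ⟨⟨i, j, k⟩, rfl⟩ := hsurj g
      have hga : a * e (i, j, k) = e (i, j, k) * a := Subgroup.mem_center_iff.mp hg a
      rw [← hea, law, law] at hga
      have hga' := hbij.injective hga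
      simp only [Prod.mk.injEq, show ((0:ZMod 2)).val = 0 from rfl, pow_zero, one_mul,
        mul_one, add_zero, zero_add] at hga'
      obtain ⟨h1, -, -⟩ := hga'
      have hu : (-1 : ZMod N) ^ j.val * μ ^ k.val = 1 := by linear_combination -h1
      rcases z2cases j with hj | hj <;> rcases z2cases k with hk | hk <;> subst hj <;> subst hk <;>
        simp only [show ((0:ZMod 2)).val = 0 from rfl, show ((1:ZMod 2)).val = 1 from rfl,
          pow_zero, pow_one, one_mul, mul_one] at hu
      · -- j = 0, k = 0
        have hgb : b * e (i, 0, 0) = e (i, 0, 0) * b := Subgroup.mem_center_iff.mp hg b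
        rw [← heb, law, law] at hgb
        have hgb' := hbij.injective hgb
        simp only [Prod.mk.injEq, show ((0:ZMod 2)).val = 0 from rfl,
          show ((1:ZMod 2)).val = 1 from rfl, pow_zero, pow_one, one_mul,
          mul_one, mul_zero, add_zero, zero_add] at hgb'
        obtain ⟨h1b, -, -⟩ := hgb'
        have h2i : ((i.val + i.val : ℕ) : ZMod N) = 0 := by
          push_cast [ZMod.natCast_val, ZMod.cast_id]
          linear_combination -h1b
        rw [ZMod.natCast_eq_zero_iff] at h2i
        obtain ⟨t, ht⟩ := h2i
        have hivlt : i.val < N := ZMod.val_lt i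
        have ht2 : t < 2 := by
          by_contra hcon
          push_neg at hcon
          have : N * 2 ≤ N * t := Nat.mul_le_mul_left N hcon
          omega
        have hiv : i.val = 0 ∨ i.val = m := by interval_cases t <;> omega
        rcases hiv with hiv | hiv
        · have : i = 0 := (ZMod.val_eq_zero i).mp hiv
          subst this
          rw [he1]
          exact (Subgroup.zpowers z).one_mem
        · have : i = ((m : ℕ) : ZMod N) := by
            conv_lhs => rw [← ZMod.natCast_rightInverse i]
            rw [hiv]
          subst this
          rw [hez]
          exact Subgroup.mem_zpowers z
      · -- j = 0, k = 1 : μ = 1, contradiction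
        exfalso
        apply hndvd m (by omega) (by omega)
        rw [hμdef] at hu
        push_cast at hu ⊢
        linear_combination hu
      · -- j = 1, k = 0 : -1 = 1
        exfalso
        apply hndvd 2 (by omega) (by omega)
        push_cast
        linear_combination -hu
      · -- j = 1, k = 1 : -μ = 1
        exfalso
        apply hndvd (m + 2) (by omega) (by omega)
        rw [hμdef] at hu
        push_cast at hu ⊢
        linear_combination -hu
    · exact Subgroup.zpowers_le.mpr hzcen
  have hordz : orderOf z = 2 := by
    have hgcd : Nat.gcd (2 * m) m = m := Nat.gcd_eq_right (dvd_mul_left m 2)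
    rw [hzdef, orderOf_pow' (x := a) (show m ≠ 0 by omega), ha, hN2m, hgcd]
    exact Nat.mul_div_cancel 2 (by omega)
  have hcom : Subgroup.center G ≤ commutator G := by
    rw [hcenter]
    apply Subgroup.zpowers_le.mpr
    open scoped commutatorElement in
    have hzca : ⁅c, a⁆ = z := by
      rw [commutatorElement_def, hac, pow_succ, hzdef, mul_inv_cancel_right]
    rw [← hzca, commutator_def]
    exact Subgroup.commutator_mem_commutator (Subgroup.mem_top c) (Subgroup.mem_top a)
  have dv : m ∣ N := ⟨2, by omega⟩
  have hμcast : ZMod.castHom dv (ZMod m) μ = 1 := by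
    rw [hμdef, map_natCast]
    push_cast
    simp
  have hπmul : ∀ g h : G,
      ((dF m N dv (E.symm (g * h)).1 (E.symm (g * h)).2.1,
        Multiplicative.ofAdd (E.symm (g * h)).2.2) :
          DihedralGroup m × Multiplicative (ZMod 2)) =
      (dF m N dv (E.symm g).1 (E.symm g).2.1, Multiplicative.ofAdd (E.symm g).2.2) *
      (dF m N dv (E.symm h).1 (E.symm h).2.1, Multiplicative.ofAdd (E.symm h).2.2) := by
    intro g h
    have hkey : E.symm (g * h) =
        ((E.symm g).1 + (-1) ^ (E.symm g).2.1.val * μ ^ (E.symm g).2.2.val * (E.symm h).1,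
          (E.symm g).2.1 + (E.symm h).2.1, (E.symm g).2.2 + (E.symm h).2.2) := by
      apply hbij.injective
      show e _ = e _
      rw [show e (E.symm (g * h)) = g * h from E.apply_symm_apply (g * h), ← law,
        show e (E.symm g) = g from E.apply_symm_apply g,
        show e (E.symm h) = h from E.apply_symm_apply h]
    rw [hkey, Prod.mk_mul_mk, d_mul dv hμcast, ← ofAdd_add]
  let π : G →* DihedralGroup m × Multiplicative (ZMod 2) :=
    MonoidHom.mk' (fun g => (dF m N dv (E.symm g).1 (E.symm g).2.1,
      Multiplicative.ofAdd (E.symm g).2.2)) hπmul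
  have hπsurj : Function.Surjective ⇑π := by
    rintro ⟨t, w⟩
    obtain (s | s) := t
    · refine ⟨e (((s.val : ℕ) : ZMod N), 0, Multiplicative.toAdd w), ?_⟩
      show (dF m N dv (E.symm (e _)).1 (E.symm (e _)).2.1,
        Multiplicative.ofAdd (E.symm (e _)).2.2) = _
      have hEx : E.symm (e (((s.val : ℕ) : ZMod N), 0, Multiplicative.toAdd w)) =
          (((s.val : ℕ) : ZMod N), 0, Multiplicative.toAdd w) := E.symm_apply_apply _
      rw [hEx]
      simp [dF_zero, map_natCast, ZMod.natCast_val, ZMod.cast_id]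
    · refine ⟨e ((((-s).val : ℕ) : ZMod N), 1, Multiplicative.toAdd w), ?_⟩
      show (dF m N dv (E.symm (e _)).1 (E.symm (e _)).2.1,
        Multiplicative.ofAdd (E.symm (e _)).2.2) = _
      have hEx : E.symm (e ((((-s).val : ℕ) : ZMod N), 1, Multiplicative.toAdd w)) =
          ((((-s).val : ℕ) : ZMod N), 1, Multiplicative.toAdd w) := E.symm_apply_apply _
      rw [hEx]
      simp [dF_one, map_natCast, ZMod.natCast_val, ZMod.cast_id]
  have hπker : π.ker = Subgroup.zpowers z := by
    apply le_antisymm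
    · intro g hgk
      rw [MonoidHom.mem_ker] at hgk
      obtain ⟨⟨i, j, k⟩, rfl⟩ := hsurj g
      have hEx : E.symm (e (i, j, k)) = (i, j, k) := E.symm_apply_apply _
      have hgk' : (dF m N dv (E.symm (e (i, j, k))).1 (E.symm (e (i, j, k))).2.1,
          Multiplicative.ofAdd (E.symm (e (i, j, k))).2.2) = 1 := hgk
      rw [hEx] at hgk'
      have hd : dF m N dv i j = 1 := congrArg Prod.fst hgk'
      have hk : Multiplicative.ofAdd k = 1 := congrArg Prod.snd hgk'
      have hk0 : k = 0 := by simpa using hk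
      rcases z2cases j with hj | hj <;> subst hj
      · rw [dF_zero, DihedralGroup.one_def] at hd
        simp only [DihedralGroup.r.injEq] at hd
        have hiv0 : ((i.val : ℕ) : ZMod m) = 0 := by
          rw [ZMod.natCast_val, ← ZMod.castHom_apply (h := dv), hd]
        rw [ZMod.natCast_eq_zero_iff] at hiv0
        obtain ⟨t, ht⟩ := hiv0
        have hivlt : i.val < N := ZMod.val_lt i
        have ht2 : t < 2 := by
          by_contra hcon
          push_neg at hcon
          have : m * 2 ≤ m * t := Nat.mul_le_mul_left m hcon
          omega
        have hiv : i.val = 0 ∨ i.val = m := by interval_cases t <;> omega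
        subst hk0
        rcases hiv with hiv | hiv
        · have : i = 0 := (ZMod.val_eq_zero i).mp hiv
          subst this
          rw [he1]
          exact (Subgroup.zpowers z).one_mem
        · have : i = ((m : ℕ) : ZMod N) := by
            conv_lhs => rw [← ZMod.natCast_rightInverse i]
            rw [hiv]
          subst this
          rw [hez]
          exact Subgroup.mem_zpowers z
      · rw [dF_one, DihedralGroup.one_def] at hd
        exact absurd hd (by simp [-DihedralGroup.r_zero])
    · apply Subgroup.zpowers_le.mpr
      rw [MonoidHom.mem_ker]
      have hEz : E.symm z = (((m : ℕ) : ZMod N), 0, 0) := by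
        apply hbij.injective
        show e _ = e _
        rw [show e (E.symm z) = z from E.apply_symm_apply z, hez]
      show (dF m N dv (E.symm z).1 (E.symm z).2.1,
        Multiplicative.ofAdd (E.symm z).2.2) = 1
      rw [hEz]
      simp [dF_zero, map_natCast, DihedralGroup.one_def, Prod.ext_iff, -DihedralGroup.r_zero]
  refine ⟨hcenter, ?_, hcom, π, hπsurj, hπker.trans hcenter.symm⟩
  rw [hcenter, Nat.card_zpowers, hordz]
end

section
/- Let G be a group generated by three involutions x, y, z, where also G = Q_{2^{ℓ+1}} ∘ Z_4 = ⟨a,c⟩ ∘ ⟨d⟩ (ℓ ≥ 2). Then the three involutions x, y, z are pairwise non-commuting; in particular G admits no generating triple of involutions (x,y,z) with ⟨x,z⟩ ≅ Z_2 × Z_2. -/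
open QuaternionGroup

namespace Stmt19Aux

abbrev T := Multiplicative (ZMod 2 × ZMod 2 × ZMod 2)

lemma T_sq : ∀ a : T, a * a = 1 := by decide

lemma T_closed : ∀ u v a b : T, (a = 1 ∨ a = u ∨ a = v ∨ a = u*v) →
    (b = 1 ∨ b = u ∨ b = v ∨ b = u*v) →
    (a*b = 1 ∨ a*b = u ∨ a*b = v ∨ a*b = u*v) := by
  intro u v a b ha hb
  rcases ha with rfl|rfl|rfl|rfl <;> rcases hb with rfl|rfl|rfl|rfl <;>
    simp [mul_comm, mul_left_comm, mul_assoc, T_sq]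

lemma T_inv : ∀ a : T, a⁻¹ = a := by decide

lemma T_notall : ∀ u v : T, ∃ w : T, ¬(w = 1 ∨ w = u ∨ w = v ∨ w = u*v) := by decide

/-- the subgroup generated by two elements of `T`, given explicitly -/
def twoGen (u v : T) : Subgroup T where
  carrier := {w | w = 1 ∨ w = u ∨ w = v ∨ w = u*v}
  one_mem' := Or.inl rfl
  mul_mem' := fun {a b} ha hb => T_closed u v a b ha hb
  inv_mem' := fun {a} ha => by rwa [T_inv]

lemma closure_ne_top (u v : T) (s : Set T)
    (hs : ∀ w ∈ s, w = 1 ∨ w = u ∨ w = v ∨ w = u*v) :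
    Subgroup.closure s ≠ ⊤ := by
  intro htop
  have hle : Subgroup.closure s ≤ twoGen u v := (Subgroup.closure_le _).2 hs
  rw [htop, top_le_iff] at hle
  obtain ⟨w, hw⟩ := T_notall u v
  exact hw ((hle ▸ Subgroup.mem_top w : w ∈ twoGen u v))

def c24 : ZMod 4 →+* ZMod 2 := ZMod.castHom (show (2:ℕ) ∣ 4 by norm_num) (ZMod 2)

lemma z1 : ∀ y : ZMod 4, y + y = 0 → c24 y = 0 := by decide
lemma z2 : ∀ y : ZMod 4, y + y = 2 → c24 y = 1 := by decide

variable (n : ℕ)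

def c2 : ZMod (2*n) →+* ZMod 2 := ZMod.castHom ⟨n, rfl⟩ (ZMod 2)

def c4 (h : 2 ∣ n) : ZMod (2*n) →+* ZMod 4 :=
  ZMod.castHom (show (4:ℕ) ∣ 2*n by omega) (ZMod 4)

lemma c2_eq (h : 2 ∣ n) (x : ZMod (2*n)) : c2 n x = c24 (c4 n h x) := by
  have h1 := ZMod.castHom_comp (show (2:ℕ) ∣ 4 by norm_num) (show (4:ℕ) ∣ 2*n by omega)
  have h2 := DFunLike.congr_fun h1 x
  simp only [RingHom.coe_comp, Function.comp_apply, ZMod.castHom_apply] at h2 ⊢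
  simp [c2, c24, c4, ZMod.castHom_apply, h2]

lemma two_eq_zero_c2 (h2 : 2 ∣ n) {x : ZMod (2*n)} (hx : x + x = 0) : c2 n x = 0 := by
  rw [c2_eq n h2]
  apply z1
  rw [← map_add, hx, map_zero]

lemma two_eq_n_c2 (h2 : 2 ∣ n) {x y : ZMod (2*n)}
    (hx : x + x = (n : ZMod (2*n))) (hy : y + y = (n : ZMod (2*n))) : c2 n x = c2 n y := by
  have h0 : (x - y) + (x - y) = 0 := by linear_combination hx - hy
  have := two_eq_zero_c2 n h2 h0
  rw [map_sub, sub_eq_zero] at this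
  exact this

lemma n_ne_zero (h0 : n ≠ 0) : ((n : ℕ) : ZMod (2*n)) ≠ 0 := by
  intro h
  rw [ZMod.natCast_eq_zero_iff] at h
  have := Nat.le_of_dvd (by omega) h
  omega

/-- parity data of a quaternion group element -/
def qfun : QuaternionGroup n → ZMod 2 × ZMod 2
  | .a i => (c2 n i, 0)
  | .xa i => (c2 n i, 1)

def psi (hn : ((n : ℕ) : ZMod 2) = 0) :
    QuaternionGroup n × Multiplicative (ZMod 4) →* T where
  toFun p := Multiplicative.ofAdd
    ((qfun n p.1).1, (qfun n p.1).2, c24 p.2.toAdd)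
  map_one' := by
    have : (1 : QuaternionGroup n) = .a 0 := rfl
    simp [this, qfun, -a_zero]
  map_mul' := by
    rintro ⟨q1, e1⟩ ⟨q2, e2⟩
    have he : c24 (e1 * e2).toAdd = c24 e1.toAdd + c24 e2.toAdd := by
      simp [toAdd_mul]
    have hc2n : c2 n (n : ZMod (2*n)) = 0 := by
      simp [c2, ZMod.castHom_apply, ZMod.cast_natCast' (R := ZMod 2), hn]
    rcases q1 with i | i <;> rcases q2 with j | j <;>
      simp only [Prod.mk_mul_mk, a_mul_a, a_mul_xa, xa_mul_a, xa_mul_xa, qfun, he,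
        map_add, map_sub] <;>
      · refine congrArg Multiplicative.ofAdd ?_
        refine Prod.ext ?_ (Prod.ext ?_ rfl) <;>
          simp [hc2n, add_comm, sub_eq_add_neg, CharTwo.neg_eq,
            show (2:ZMod 2) = 0 from rfl] <;> first | ring1 | decide

def gg : QuaternionGroup n × Multiplicative (ZMod 4) :=
  (.a ((n : ℕ) : ZMod (2*n)), Multiplicative.ofAdd (2 : ZMod 4))

lemma nn_zero : ((n : ℕ) : ZMod (2*n)) + ((n : ℕ) : ZMod (2*n)) = 0 := by
  rw [← Nat.cast_add]
  have : n + n = 2 * n := by ring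
  rw [this, ZMod.natCast_self]

lemma gg_sq : gg n * gg n = 1 := by
  have h4 : Multiplicative.ofAdd (2 : ZMod 4) * Multiplicative.ofAdd 2 = 1 := by decide
  rw [gg, Prod.mk_mul_mk, a_mul_a, nn_zero, h4]
  rfl

lemma gg_central : ∀ p, gg n * p = p * gg n := by
  rintro ⟨q, e⟩
  rcases q with i | i <;>
    refine Prod.ext ?_ (mul_comm _ _) <;>
    simp only [gg, Prod.mk_mul_mk, Prod.fst, a_mul_a, a_mul_xa, xa_mul_a]
  · rw [add_comm]
  · congr 1
    have := nn_zero n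
    linear_combination -this

lemma mem_normalClosure_gg {w} (hw : w ∈ Subgroup.normalClosure {gg n}) :
    w = 1 ∨ w = gg n := by
  have hnormal : (Subgroup.zpowers (gg n)).Normal := by
    constructor
    rintro x ⟨k, rfl⟩ g'
    have hc : Commute g' (gg n) := (gg_central n g').symm
    have : g' * (gg n) ^ k * g'⁻¹ = (gg n) ^ k := by
      rw [(hc.zpow_right k).eq, mul_assoc, mul_inv_cancel, mul_one]
    rw [this]
    exact ⟨k, rfl⟩
  have hle : Subgroup.normalClosure {gg n} ≤ Subgroup.zpowers (gg n) :=
    Subgroup.normalClosure_le_normal (by simp [Subgroup.mem_zpowers])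
  obtain ⟨k, rfl⟩ := hle hw
  have h2 : gg n ^ (2:ℤ) = 1 := by
    rw [show (2:ℤ) = 1 + 1 from rfl, zpow_add, zpow_one, gg_sq]
  rcases Int.even_or_odd k with ⟨m, hm⟩ | ⟨m, hm⟩
  · left
    show gg n ^ k = 1
    rw [hm, show m + m = 2 * m by ring, zpow_mul, h2, one_zpow]
  · right
    show gg n ^ k = gg n
    rw [hm, zpow_add, zpow_mul, h2, one_zpow, one_mul, zpow_one]

/-- Key case analysis: commuting involutions in the central product have
related images under `psi`. -/
lemma key (h2 : 2 ∣ n) (h0 : n ≠ 0) (hn : ((n : ℕ) : ZMod 2) = 0)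
    (p r : QuaternionGroup n × Multiplicative (ZMod 4))
    (hp : p * p = 1 ∨ p * p = gg n) (hr : r * r = 1 ∨ r * r = gg n)
    (hc : p.1 * r.1 = r.1 * p.1) :
    psi n hn p = 1 ∨ psi n hn r = 1 ∨ psi n hn p = psi n hn r := by
  obtain ⟨q1, e1⟩ := p
  obtain ⟨q2, e2⟩ := r
  have toAddEq : ∀ (e : Multiplicative (ZMod 4)) (c : ZMod 4),
      e * e = Multiplicative.ofAdd c → e.toAdd + e.toAdd = c := by
    intro e c h
    have := congrArg Multiplicative.toAdd h
    simpa [toAdd_mul] using this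
  have toAddEq1 : ∀ (e : Multiplicative (ZMod 4)),
      e * e = 1 → e.toAdd + e.toAdd = 0 := fun e h => toAddEq e 0 h
  simp only at hc
  rcases q1 with i | i <;> rcases q2 with j | j <;>
    simp only [Prod.mk_mul_mk, a_mul_a, a_mul_xa, xa_mul_a, xa_mul_xa, gg,
      ← Prod.mk_one_one, Prod.mk.injEq, one_def, a.injEq, xa.injEq, reduceCtorEq,
      false_and, false_or, add_sub_cancel_right, true_and] at hp hr hc
  -- case (a i, a j)
  · rcases hp with ⟨hi, he1⟩ | ⟨hi, he1⟩
    · left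
      simp [psi, qfun, two_eq_zero_c2 n h2 hi, z1 _ (toAddEq1 e1 he1)]
    · rcases hr with ⟨hj, he2⟩ | ⟨hj, he2⟩
      · right; left
        simp [psi, qfun, two_eq_zero_c2 n h2 hj, z1 _ (toAddEq1 e2 he2)]
      · right; right
        simp only [psi, qfun, MonoidHom.coe_mk, OneHom.coe_mk]
        rw [two_eq_n_c2 n h2 hi hj, z2 _ (toAddEq e1 2 he1), z2 _ (toAddEq e2 2 he2)]
  -- case (a i, xa j)
  · rcases hp with ⟨hi, he1⟩ | ⟨hi, he1⟩
    · left
      simp [psi, qfun, two_eq_zero_c2 n h2 hi, z1 _ (toAddEq1 e1 he1)]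
    · exfalso
      have hii : i + i = 0 := by linear_combination -hc
      rw [hii] at hi
      exact n_ne_zero n h0 hi.symm
  -- case (xa i, a j)
  · rcases hr with ⟨hj, he2⟩ | ⟨hj, he2⟩
    · right; left
      simp [psi, qfun, two_eq_zero_c2 n h2 hj, z1 _ (toAddEq1 e2 he2)]
    · exfalso
      have hjj : j + j = 0 := by linear_combination hc
      rw [hjj] at hj
      exact n_ne_zero n h0 hj.symm
  -- case (xa i, xa j)
  · rcases hp with ⟨hi, -⟩ | he1
    · exact absurd (by linear_combination hi) (n_ne_zero n h0)
    rcases hr with ⟨hj, -⟩ | he2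
    · exact absurd (by linear_combination hj) (n_ne_zero n h0)
    right; right
    have hij : (i - j) + (i - j) = 0 := by linear_combination -hc
    have hc2 : c2 n i = c2 n j := by
      have := two_eq_zero_c2 n h2 hij
      rwa [map_sub, sub_eq_zero] at this
    simp only [psi, qfun, MonoidHom.coe_mk, OneHom.coe_mk]
    rw [hc2, z2 _ (toAddEq e1 2 he1), z2 _ (toAddEq e2 2 he2)]

lemma psi_surjective (hn : ((n : ℕ) : ZMod 2) = 0) :
    Function.Surjective (psi n hn) := by
  intro t
  obtain ⟨⟨b1, b2, b3⟩, rfl⟩ : ∃ b, t = Multiplicative.ofAdd b := ⟨t.toAdd, rfl⟩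
  fin_cases b1 <;> fin_cases b2 <;> fin_cases b3
  · exact ⟨(.a 0, 1), by simp [psi, qfun, -a_zero]; rfl⟩
  · exact ⟨(.a 0, Multiplicative.ofAdd 1), by simp [psi, qfun, -a_zero]; rfl⟩
  · exact ⟨(.xa 0, 1), by simp [psi, qfun]; rfl⟩
  · exact ⟨(.xa 0, Multiplicative.ofAdd 1), by simp [psi, qfun]; rfl⟩
  · exact ⟨(.a 1, 1), by simp [psi, qfun]; rfl⟩
  · exact ⟨(.a 1, Multiplicative.ofAdd 1), by simp [psi, qfun]; rfl⟩
  · exact ⟨(.xa 1, 1), by simp [psi, qfun]; rfl⟩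
  · exact ⟨(.xa 1, Multiplicative.ofAdd 1), by simp [psi, qfun]; rfl⟩

lemma psi_gg (hn : ((n : ℕ) : ZMod 2) = 0) : psi n hn (gg n) = 1 := by
  have hc2n : c2 n (n : ZMod (2*n)) = 0 := by
    simp [c2, ZMod.castHom_apply, ZMod.cast_natCast' (R := ZMod 2), hn]
  simp only [psi, gg, qfun, MonoidHom.coe_mk, OneHom.coe_mk, hc2n]
  have : c24 (Multiplicative.toAdd (Multiplicative.ofAdd (2 : ZMod 4))) = 0 := by decide
  rw [this]
  rfl

end Stmt19Aux

namespace Stmt19Aux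

lemma main_pair (ℓ : ℕ) (hℓ : 2 ≤ ℓ) (x y z : QZ4 ℓ)
    (hx : x * x = 1) (hz : z * z = 1) (hxz : x * z = z * x)
    (hgen : Subgroup.closure {x, y, z} = ⊤) : False := by
  set n : ℕ := 2 ^ (ℓ - 1) with hndef
  have h2 : 2 ∣ n := by
    have : (2:ℕ)^1 ∣ 2^(ℓ-1) := pow_dvd_pow 2 (by omega)
    rw [pow_one] at this
    exact this
  have h0 : n ≠ 0 := by positivity
  have hn : ((n : ℕ) : ZMod 2) = 0 := (ZMod.natCast_eq_zero_iff n 2).2 h2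
  -- the normal subgroup
  have hNg : ({(QuaternionGroup.a ((n : ℕ) : ZMod (2 * n)),
      Multiplicative.ofAdd (2 : ZMod 4))} : Set _) = {gg n} := rfl
  set N : Subgroup (QuaternionGroup n × Multiplicative (ZMod 4)) :=
    Subgroup.normalClosure {gg n} with hNdef
  have hker : N ≤ (psi n hn).ker := by
    intro w hw
    rcases mem_normalClosure_gg n hw with rfl | rfl
    · exact (psi n hn).map_one
    · exact psi_gg n hn
  let φ : QZ4 ℓ →* T := QuotientGroup.lift N (psi n hn) hker
  have hφmk : ∀ p, φ (QuotientGroup.mk p) = psi n hn p := fun p => rfl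
  have hφsurj : Function.Surjective φ := by
    intro t
    obtain ⟨p, hp⟩ := psi_surjective n hn t
    exact ⟨QuotientGroup.mk p, by rw [hφmk, hp]⟩
  obtain ⟨p, rfl⟩ := QuotientGroup.mk_surjective x
  obtain ⟨q, rfl⟩ := QuotientGroup.mk_surjective y
  obtain ⟨r, rfl⟩ := QuotientGroup.mk_surjective z
  -- translate the involution hypotheses
  have hmem : ∀ s : QuaternionGroup n × Multiplicative (ZMod 4),
      (QuotientGroup.mk s : QZ4 ℓ) * QuotientGroup.mk s = 1 → s * s = 1 ∨ s * s = gg n := by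
    intro s hs
    rw [← QuotientGroup.mk_mul, QuotientGroup.eq_one_iff] at hs
    exact mem_normalClosure_gg n hs
  have hp := hmem p hx
  have hr := hmem r hz
  -- translate the commuting hypothesis
  have hcfst : p.1 * r.1 = r.1 * p.1 := by
    rw [← QuotientGroup.mk_mul, ← QuotientGroup.mk_mul, QuotientGroup.eq] at hxz
    rcases mem_normalClosure_gg n hxz with h1 | h1
    · have : p * r = r * p := by
        have := inv_mul_eq_one.mp h1
        exact this
      exact congrArg Prod.fst this
    · exfalso
      have hsnd := congrArg Prod.snd h1
      simp only [Prod.snd_mul, Prod.snd_inv, gg] at hsnd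
      rw [mul_comm p.2 r.2, inv_mul_cancel] at hsnd
      exact absurd hsnd (by decide)
  have hkey := key n h2 h0 hn p r hp hr hcfst
  -- the closure image
  have himg : Subgroup.closure ({φ (QuotientGroup.mk p), φ (QuotientGroup.mk q),
      φ (QuotientGroup.mk r)} : Set T) = ⊤ := by
    have h1 : (Subgroup.closure ({QuotientGroup.mk p, QuotientGroup.mk q,
        QuotientGroup.mk r} : Set (QZ4 ℓ))).map φ = ⊤ := by
      rw [hgen, Subgroup.map_top_of_surjective φ hφsurj]
    rw [MonoidHom.map_closure] at h1
    rw [← h1]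
    congr 1
    rw [Set.image_insert_eq, Set.image_insert_eq, Set.image_singleton]
  set u := φ (QuotientGroup.mk p)
  set v := φ (QuotientGroup.mk q)
  set w := φ (QuotientGroup.mk r)
  have hu : u = psi n hn p := rfl
  have hw : w = psi n hn r := rfl
  rcases hkey with h1 | h1 | h1
  · refine closure_ne_top v w _ ?_ himg
    intro s hs
    rcases hs with rfl | rfl | rfl
    · left; rw [hu, h1]
    · right; left; rfl
    · right; right; left; rfl
  · refine closure_ne_top u v _ ?_ himg
    intro s hs
    rcases hs with rfl | rfl | rfl
    · right; left; rfl
    · right; right; left; rfl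
    · left; rw [hw, h1]
  · refine closure_ne_top u v _ ?_ himg
    intro s hs
    rcases hs with rfl | rfl | rfl
    · right; left; rfl
    · right; right; left; rfl
    · right; left; rw [hw, ← h1, hu]

end Stmt19Aux

/-- If `G = Q_{2^(ℓ+1)} ∘ Z_4` (`ℓ ≥ 2`) is generated by three
involutions `x, y, z`, then these involutions are pairwise non-commuting; in
particular `G` admits no generating triple of involutions `(x, y, z)` with
`⟨x, z⟩ ≅ Z_2 × Z_2` (i.e. with `x` and `z` commuting). -/
theorem stmt_19 (ℓ : ℕ) (hℓ : 2 ≤ ℓ) :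
    (∀ x y z : QZ4 ℓ, x * x = 1 → y * y = 1 → z * z = 1 →
      Subgroup.closure {x, y, z} = ⊤ →
      x * y ≠ y * x ∧ y * z ≠ z * y ∧ x * z ≠ z * x) ∧
    ¬∃ x y z : QZ4 ℓ, x * x = 1 ∧ y * y = 1 ∧ z * z = 1 ∧
      Subgroup.closure {x, y, z} = ⊤ ∧ x * z = z * x := by
  constructor
  · intro x y z hx hy hz hgen
    refine ⟨fun h => ?_, fun h => ?_, fun h => ?_⟩
    · refine Stmt19Aux.main_pair ℓ hℓ x z y hx hy h ?_
      have hset : ({x, z, y} : Set (QZ4 ℓ)) = {x, y, z} := by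
        congr 1
        exact Set.pair_comm z y
      rw [hset, hgen]
    · refine Stmt19Aux.main_pair ℓ hℓ y x z hy hz h ?_
      have hset : ({y, x, z} : Set (QZ4 ℓ)) = {x, y, z} := Set.insert_comm y x {z}
      rw [hset, hgen]
    · exact Stmt19Aux.main_pair ℓ hℓ x y z hx hz h hgen
  · rintro ⟨x, y, z, hx, hy, hz, hgen, hcomm⟩
    exact Stmt19Aux.main_pair ℓ hℓ x y z hx hz hcomm hgen
end
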